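/- arXiv:math/0702896 — 3 statements merged into one kernel-verified Lean document; each statement's English description precedes it below -/
import Mathlib

section
/- There exists an ℝ-algebra isomorphism Ψ : Cl(4,1) → M₄(ℂ) such that Ψ(ι(v_0)) = B₁, Ψ(ι(v_1)) = B₂, Ψ(ι(v_2)) = B₃, Ψ(ι(v_3)) = A₁, Ψ(ι(v_4)) = B₄, where A₁ = diag(1,1,−1,−1), B₁ = [[0,0,0,1],[0,0,1,0],[0,1,0,0],[1,0,0,0]], B₂ = [[0,0,0,−i],[0,0,i,0],[0,−i,0,0],[i,0,0,0]], B₃ = [[0,0,1,0],[0,0,0,−1],[1,0,0,0],[0,−1,0,0]], B₄ = [[0,0,1,0],[0,0,0,1],[−1,0,0,0],[0,−1,0,0]], and moreover A₁ = i B₁ B₂ B₃ B₄. -/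
set_option maxHeartbeats 1000000

open Matrix CliffordAlgebra

/-- The quadratic form of signature `(p,q)` on `ℝⁿ`, `n = p + q`. -/
noncomputable def Qpq (p q : ℕ) : QuadraticForm ℝ (Fin (p + q) → ℝ) :=
  QuadraticMap.weightedSumSquares ℝ (fun i : Fin (p + q) => if (i : ℕ) < p then (1 : ℝ) else -1)

namespace Cl41

theorem Qpq_apply (m : Fin (4+1) → ℝ) :
    Qpq 4 1 m = m 0 ^ 2 + m 1 ^ 2 + m 2 ^ 2 + m 3 ^ 2 - m 4 ^ 2 := by
  have h3 : ((3 : Fin 5) : ℕ) = 3 := rfl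
  have h4 : ((4 : Fin 5) : ℕ) = 4 := rfl
  simp [Qpq, QuadraticMap.weightedSumSquares_apply, Fin.sum_univ_five, h3, h4]
  ring

noncomputable abbrev Cl := CliffordAlgebra (Qpq 4 1)

def B : Fin 5 → Matrix (Fin 4) (Fin 4) ℂ :=
  ![!![0, 0, 0, 1; 0, 0, 1, 0; 0, 1, 0, 0; 1, 0, 0, 0],
    !![0, 0, 0, -Complex.I; 0, 0, Complex.I, 0; 0, -Complex.I, 0, 0; Complex.I, 0, 0, 0],
    !![0, 0, 1, 0; 0, 0, 0, -1; 1, 0, 0, 0; 0, -1, 0, 0],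
    !![1, 0, 0, 0; 0, 1, 0, 0; 0, 0, -1, 0; 0, 0, 0, -1],
    !![0, 0, 1, 0; 0, 0, 0, 1; -1, 0, 0, 0; 0, -1, 0, 0]]

noncomputable def fmat (m : Fin 5 → ℝ) : Matrix (Fin 4) (Fin 4) ℂ :=
    !![(m 3 : ℂ), 0, (m 2 : ℂ) + (m 4 : ℂ), (m 0 : ℂ) - (m 1 : ℂ) * Complex.I;
       0, (m 3 : ℂ), (m 0 : ℂ) + (m 1 : ℂ) * Complex.I, -(m 2 : ℂ) + (m 4 : ℂ);
       (m 2 : ℂ) - (m 4 : ℂ), (m 0 : ℂ) - (m 1 : ℂ) * Complex.I, -(m 3 : ℂ), 0;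
       (m 0 : ℂ) + (m 1 : ℂ) * Complex.I, -(m 2 : ℂ) - (m 4 : ℂ), 0, -(m 3 : ℂ)]

noncomputable def f : (Fin (4 + 1) → ℝ) →ₗ[ℝ] Matrix (Fin 4) (Fin 4) ℂ where
  toFun := fmat
  map_add' a b := by
    ext i j
    fin_cases i <;> fin_cases j <;> (try simp [fmat, Matrix.vecHead, Matrix.vecTail]) <;>
      (try push_cast) <;> (try ring)
  map_smul' c a := by
    ext i j
    fin_cases i <;> fin_cases j <;>
      (try simp [fmat, Matrix.vecHead, Matrix.vecTail, Complex.real_smul]) <;>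
      (try push_cast) <;> (try ring)

theorem f_single (j : Fin 5) : f (Pi.single j 1) = B j := by
  have hf : ∀ m, f m = fmat m := fun _ => rfl
  fin_cases j <;>
    · rw [hf]
      ext i k
      fin_cases i <;> fin_cases k <;>
        simp +decide [fmat, B, Pi.single_apply, Matrix.vecHead, Matrix.vecTail]

theorem hf (m : Fin (4+1) → ℝ) :
    f m * f m = algebraMap ℝ (Matrix (Fin 4) (Fin 4) ℂ) (Qpq 4 1 m) := by
  have hfm : f m = fmat m := rfl
  rw [Qpq_apply, Algebra.algebraMap_eq_smul_one, hfm]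
  ext i j
  fin_cases i <;> fin_cases j <;>
    (try simp [fmat, Matrix.mul_apply, Fin.sum_univ_four, Matrix.vecHead, Matrix.vecTail,
        Matrix.one_apply, Complex.real_smul, Complex.ext_iff]) <;>
    (try push_cast) <;> (try ring_nf) <;>
    (try simp [Complex.I_sq, ← Complex.ofReal_pow]) <;> (try ring) <;>
    (try constructor) <;> (try ring)

noncomputable def e (i : Fin 5) : Cl := ι (Qpq 4 1) (Pi.single i 1)

theorem he_sq (i : Fin 5) :
    e i * e i = algebraMap ℝ Cl (if (i : ℕ) < 4 then 1 else -1) := by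
  rw [e, ι_sq_scalar]
  congr 1
  fin_cases i <;> simp +decide [Qpq_apply, Pi.single_apply]

theorem he_swap {i j : Fin 5} (h : i ≠ j) : e i * e j = -(e j * e i) := by
  have ho : (Qpq 4 1).IsOrtho (Pi.single i 1) (Pi.single j 1) := by
    show Qpq 4 1 _ = _
    fin_cases i <;> fin_cases j <;>
      first
        | exact absurd rfl h
        | simp +decide [Qpq_apply, Pi.single_apply, Pi.add_apply]
        | (simp +decide [Qpq_apply, Pi.single_apply, Pi.add_apply]; ring)
  have hs := ι_mul_ι_add_swap_of_isOrtho (Q := Qpq 4 1) ho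
  rw [e, e]
  linear_combination (norm := noncomm_ring) hs

noncomputable def P (l : List (Fin 5)) : Cl := (l.map e).prod

@[simp] theorem P_nil : P [] = 1 := rfl
theorem P_cons (j : Fin 5) (t : List (Fin 5)) : P (j :: t) = e j * P t := by
  simp [P]

def insL (i : Fin 5) : List (Fin 5) → List (Fin 5)
  | [] => [i]
  | j :: t => if i = j then t else if i < j then i :: j :: t else j :: insL i t

noncomputable def insR (i : Fin 5) : List (Fin 5) → ℝ
  | [] => 1
  | j :: t => if i = j then (if (i : ℕ) < 4 then 1 else -1) else if i < j then 1 else -insR i t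

theorem key (l : List (Fin 5)) : ∀ i, e i * P l = insR i l • P (insL i l) := by
  induction l with
  | nil => intro i; simp [P, insL, insR]
  | cons j t ih =>
    intro i
    rcases eq_or_ne i j with rfl | hne
    · rw [P_cons, ← mul_assoc, he_sq, ← Algebra.smul_def]
      simp [insL, insR]
    · rcases lt_or_gt_of_ne hne with hlt | hgt
      · rw [insL, insR, if_neg hne, if_pos hlt, if_neg hne, if_pos hlt, one_smul,
          P_cons, P_cons, P_cons]
      · have hnlt : ¬ i < j := not_lt.2 hgt.le
        rw [insL, insR, if_neg hne, if_neg hnlt, if_neg hne, if_neg hnlt,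
          P_cons, ← mul_assoc, he_swap hne, neg_mul, mul_assoc, ih i, P_cons]
        rw [mul_smul_comm, neg_smul]

def L32 : List (List (Fin 5)) := [[], [0], [1], [2], [3], [4], [0, 1], [0, 2], [0, 3], [0, 4], [1, 2], [1, 3], [1, 4], [2, 3], [2, 4], [3, 4], [0, 1, 2], [0, 1, 3], [0, 1, 4], [0, 2, 3], [0, 2, 4], [0, 3, 4], [1, 2, 3], [1, 2, 4], [1, 3, 4], [2, 3, 4], [0, 1, 2, 3], [0, 1, 2, 4], [0, 1, 3, 4], [0, 2, 3, 4], [1, 2, 3, 4], [0, 1, 2, 3, 4]]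

noncomputable def M32 : Submodule ℝ Cl := Submodule.span ℝ {x | ∃ l ∈ L32, P l = x}

theorem hins : ∀ (i : Fin 5), ∀ l ∈ L32, insL i l ∈ L32 := by decide

theorem mul_e_mem (i : Fin 5) : ∀ x ∈ M32, e i * x ∈ M32 := by
  intro x hx
  refine Submodule.span_induction ?_ ?_ ?_ ?_ hx
  · rintro x ⟨l, hl, rfl⟩
    rw [key]
    exact Submodule.smul_mem _ _ (Submodule.subset_span ⟨insL i l, hins i l hl, rfl⟩)
  · simp
  · intro a b _ _ ha hb; rw [mul_add]; exact Submodule.add_mem _ ha hb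
  · intro r a _ ha; rw [mul_smul_comm]; exact Submodule.smul_mem _ _ ha

theorem one_mem_M32 : (1 : Cl) ∈ M32 :=
  Submodule.subset_span ⟨[], by simp [L32], rfl⟩

theorem ι_expand (m : Fin (4+1) → ℝ) : ι (Qpq 4 1) m = ∑ i, m i • e i := by
  conv_lhs => rw [← Finset.univ_sum_single m]
  rw [map_sum]
  refine Finset.sum_congr rfl fun i _ => ?_
  have h : (Pi.single i (m i) : Fin (4+1) → ℝ) = m i • (Pi.single i 1 : Fin (4+1) → ℝ) := by
    funext k
    rcases eq_or_ne k i with rfl | hk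
    · simp
    · simp [Pi.single_eq_of_ne hk]
  rw [h, _root_.map_smul, e]

theorem mem_M32 (x : Cl) : x ∈ M32 := by
  have main : ∀ x : Cl, ∀ y ∈ M32, x * y ∈ M32 := by
    intro x
    induction x using CliffordAlgebra.induction with
    | algebraMap r =>
      intro y hy
      rw [← Algebra.smul_def]
      exact Submodule.smul_mem _ _ hy
    | ι m =>
      intro y hy
      rw [ι_expand, Finset.sum_mul]
      exact Submodule.sum_mem _ fun i _ => by
        rw [smul_mul_assoc]; exact Submodule.smul_mem _ _ (mul_e_mem i y hy)
    | mul a b ha hb => intro y hy; rw [mul_assoc]; exact ha _ (hb _ hy)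
    | add a b ha hb => intro y hy; rw [add_mul]; exact Submodule.add_mem _ (ha _ hy) (hb _ hy)
  simpa using main x 1 one_mem_M32

theorem M32_top : M32 = ⊤ := eq_top_iff.2 fun x _ => mem_M32 x

open Classical in
theorem span_finset_top :
    Submodule.span ℝ (((L32.map P).toFinset : Finset Cl) : Set Cl) = ⊤ := by
  have hset : {x : Cl | ∃ l ∈ L32, P l = x} = (((L32.map P).toFinset : Finset Cl) : Set Cl) := by
    ext x
    simp [List.mem_map]
  rw [← hset]
  exact M32_top

open Classical in
theorem cl_finite : Module.Finite ℝ Cl := ⟨⟨(L32.map P).toFinset, span_finset_top⟩⟩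

open Classical in
theorem finrank_cl_le : Module.finrank ℝ Cl ≤ 32 := by
  have h1 : Set.finrank ℝ (((L32.map P).toFinset : Finset Cl) : Set Cl) ≤
      ((L32.map P).toFinset).card := finrank_span_finset_le_card _
  have h2 : ((L32.map P).toFinset).card ≤ 32 := by
    refine le_trans (List.toFinset_card_le _) ?_
    simp [L32]
  have h3 : Set.finrank ℝ (((L32.map P).toFinset : Finset Cl) : Set Cl) =
      Module.finrank ℝ Cl := by
    rw [Set.finrank, span_finset_top, finrank_top]
  omega

noncomputable def φ : Cl →ₐ[ℝ] Matrix (Fin 4) (Fin 4) ℂ := lift (Qpq 4 1) ⟨f, hf⟩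

theorem φ_e (j : Fin 5) : φ (e j) = B j := by
  rw [e, φ, lift_ι_apply]
  exact f_single j

theorem hB (j : Fin 5) : B j ∈ φ.range := ⟨e j, φ_e j⟩

theorem hJ : (Complex.I • 1 : Matrix (Fin 4) (Fin 4) ℂ) ∈ φ.range := by
  have hkey : (Complex.I • 1 : Matrix (Fin 4) (Fin 4) ℂ) =
      -(B 3 * (B 0 * (B 1 * (B 2 * B 4)))) := by
    ext i j
    fin_cases i <;> fin_cases j <;>
      simp [B, Matrix.mul_apply, Fin.sum_univ_four, Matrix.vecHead, Matrix.vecTail,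
        Matrix.one_apply]
  rw [hkey]
  exact neg_mem (mul_mem (hB 3) (mul_mem (hB 0) (mul_mem (hB 1) (mul_mem (hB 2) (hB 4)))))

theorem hC (c : ℂ) (X : Matrix (Fin 4) (Fin 4) ℂ) (hX : X ∈ φ.range) : c • X ∈ φ.range := by
  have h : c • X = c.re • X + c.im • ((Complex.I • (1 : Matrix (Fin 4) (Fin 4) ℂ)) * X) := by
    rw [smul_mul_assoc, one_mul]
    calc c • X = ((c.re : ℂ) + (c.im : ℂ) * Complex.I) • X := by rw [Complex.re_add_im]
    _ = (c.re : ℂ) • X + (c.im : ℂ) • Complex.I • X := by rw [add_smul, mul_smul]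
    _ = c.re • X + c.im • Complex.I • X := by
        rw [← Complex.coe_algebraMap, algebraMap_smul, algebraMap_smul]
  rw [h]
  exact add_mem (Subalgebra.smul_mem _ hX _)
    (Subalgebra.smul_mem _ (mul_mem hJ hX) _)

theorem hE00 : Matrix.single (0 : Fin 4) (0 : Fin 4) (1 : ℂ) ∈ φ.range := by
  have h : Matrix.single (0 : Fin 4) (0 : Fin 4) (1 : ℂ) = ((1:ℂ)/4) • (1 : Matrix (Fin 4) (Fin 4) ℂ) + ((1:ℂ)/4) • B 3 + (-Complex.I/4) • (B 0 * B 1) + (-(1:ℂ)/4) • (B 2 * B 4) := by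
    ext i j
    fin_cases i <;> fin_cases j <;>
      (try simp [B, Matrix.single, Matrix.mul_apply, Fin.sum_univ_four,
        Matrix.vecHead, Matrix.vecTail, Matrix.one_apply]) <;>
      (try norm_num) <;> (try ring_nf) <;> (try simp [Complex.I_sq]) <;> (try ring)
  rw [h]
  exact add_mem (add_mem (add_mem (hC ((1:ℂ)/4) _ (one_mem _)) (hC ((1:ℂ)/4) _ (hB 3))) (hC (-Complex.I/4) _ (mul_mem (hB 0) (hB 1)))) (hC (-(1:ℂ)/4) _ (mul_mem (hB 2) (hB 4)))

theorem hE01 : Matrix.single (0 : Fin 4) (1 : Fin 4) (1 : ℂ) ∈ φ.range := by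
  have h : Matrix.single (0 : Fin 4) (1 : Fin 4) (1 : ℂ) = (-(1:ℂ)/4) • (B 0 * B 2) + (-(1:ℂ)/4) • (B 0 * B 4) + (-Complex.I/4) • (B 1 * B 2) + (-Complex.I/4) • (B 1 * B 4) := by
    ext i j
    fin_cases i <;> fin_cases j <;>
      (try simp [B, Matrix.single, Matrix.mul_apply, Fin.sum_univ_four,
        Matrix.vecHead, Matrix.vecTail, Matrix.one_apply]) <;>
      (try norm_num) <;> (try ring_nf) <;> (try simp [Complex.I_sq]) <;> (try ring)
  rw [h]
  exact add_mem (add_mem (add_mem (hC (-(1:ℂ)/4) _ (mul_mem (hB 0) (hB 2))) (hC (-(1:ℂ)/4) _ (mul_mem (hB 0) (hB 4)))) (hC (-Complex.I/4) _ (mul_mem (hB 1) (hB 2)))) (hC (-Complex.I/4) _ (mul_mem (hB 1) (hB 4)))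

theorem hE02 : Matrix.single (0 : Fin 4) (2 : Fin 4) (1 : ℂ) ∈ φ.range := by
  have h : Matrix.single (0 : Fin 4) (2 : Fin 4) (1 : ℂ) = ((1:ℂ)/4) • B 2 + ((1:ℂ)/4) • B 4 + (-(1:ℂ)/4) • (B 2 * B 3) + ((1:ℂ)/4) • (B 3 * B 4) := by
    ext i j
    fin_cases i <;> fin_cases j <;>
      (try simp [B, Matrix.single, Matrix.mul_apply, Fin.sum_univ_four,
        Matrix.vecHead, Matrix.vecTail, Matrix.one_apply]) <;>
      (try norm_num) <;> (try ring_nf) <;> (try simp [Complex.I_sq]) <;> (try ring)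
  rw [h]
  exact add_mem (add_mem (add_mem (hC ((1:ℂ)/4) _ (hB 2)) (hC ((1:ℂ)/4) _ (hB 4))) (hC (-(1:ℂ)/4) _ (mul_mem (hB 2) (hB 3)))) (hC ((1:ℂ)/4) _ (mul_mem (hB 3) (hB 4)))

theorem hE03 : Matrix.single (0 : Fin 4) (3 : Fin 4) (1 : ℂ) ∈ φ.range := by
  have h : Matrix.single (0 : Fin 4) (3 : Fin 4) (1 : ℂ) = ((1:ℂ)/4) • B 0 + (Complex.I/4) • B 1 + (-(1:ℂ)/4) • (B 0 * B 3) + (-Complex.I/4) • (B 1 * B 3) := by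
    ext i j
    fin_cases i <;> fin_cases j <;>
      (try simp [B, Matrix.single, Matrix.mul_apply, Fin.sum_univ_four,
        Matrix.vecHead, Matrix.vecTail, Matrix.one_apply]) <;>
      (try norm_num) <;> (try ring_nf) <;> (try simp [Complex.I_sq]) <;> (try ring)
  rw [h]
  exact add_mem (add_mem (add_mem (hC ((1:ℂ)/4) _ (hB 0)) (hC (Complex.I/4) _ (hB 1))) (hC (-(1:ℂ)/4) _ (mul_mem (hB 0) (hB 3)))) (hC (-Complex.I/4) _ (mul_mem (hB 1) (hB 3)))

theorem hE10 : Matrix.single (1 : Fin 4) (0 : Fin 4) (1 : ℂ) ∈ φ.range := by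
  have h : Matrix.single (1 : Fin 4) (0 : Fin 4) (1 : ℂ) = ((1:ℂ)/4) • (B 0 * B 2) + (-(1:ℂ)/4) • (B 0 * B 4) + (-Complex.I/4) • (B 1 * B 2) + (Complex.I/4) • (B 1 * B 4) := by
    ext i j
    fin_cases i <;> fin_cases j <;>
      (try simp [B, Matrix.single, Matrix.mul_apply, Fin.sum_univ_four,
        Matrix.vecHead, Matrix.vecTail, Matrix.one_apply]) <;>
      (try norm_num) <;> (try ring_nf) <;> (try simp [Complex.I_sq]) <;> (try ring)
  rw [h]
  exact add_mem (add_mem (add_mem (hC ((1:ℂ)/4) _ (mul_mem (hB 0) (hB 2))) (hC (-(1:ℂ)/4) _ (mul_mem (hB 0) (hB 4)))) (hC (-Complex.I/4) _ (mul_mem (hB 1) (hB 2)))) (hC (Complex.I/4) _ (mul_mem (hB 1) (hB 4)))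

theorem hE11 : Matrix.single (1 : Fin 4) (1 : Fin 4) (1 : ℂ) ∈ φ.range := by
  have h : Matrix.single (1 : Fin 4) (1 : Fin 4) (1 : ℂ) = ((1:ℂ)/4) • (1 : Matrix (Fin 4) (Fin 4) ℂ) + ((1:ℂ)/4) • B 3 + (Complex.I/4) • (B 0 * B 1) + ((1:ℂ)/4) • (B 2 * B 4) := by
    ext i j
    fin_cases i <;> fin_cases j <;>
      (try simp [B, Matrix.single, Matrix.mul_apply, Fin.sum_univ_four,
        Matrix.vecHead, Matrix.vecTail, Matrix.one_apply]) <;>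
      (try norm_num) <;> (try ring_nf) <;> (try simp [Complex.I_sq]) <;> (try ring)
  rw [h]
  exact add_mem (add_mem (add_mem (hC ((1:ℂ)/4) _ (one_mem _)) (hC ((1:ℂ)/4) _ (hB 3))) (hC (Complex.I/4) _ (mul_mem (hB 0) (hB 1)))) (hC ((1:ℂ)/4) _ (mul_mem (hB 2) (hB 4)))

theorem hE12 : Matrix.single (1 : Fin 4) (2 : Fin 4) (1 : ℂ) ∈ φ.range := by
  have h : Matrix.single (1 : Fin 4) (2 : Fin 4) (1 : ℂ) = ((1:ℂ)/4) • B 0 + (-Complex.I/4) • B 1 + (-(1:ℂ)/4) • (B 0 * B 3) + (Complex.I/4) • (B 1 * B 3) := by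
    ext i j
    fin_cases i <;> fin_cases j <;>
      (try simp [B, Matrix.single, Matrix.mul_apply, Fin.sum_univ_four,
        Matrix.vecHead, Matrix.vecTail, Matrix.one_apply]) <;>
      (try norm_num) <;> (try ring_nf) <;> (try simp [Complex.I_sq]) <;> (try ring)
  rw [h]
  exact add_mem (add_mem (add_mem (hC ((1:ℂ)/4) _ (hB 0)) (hC (-Complex.I/4) _ (hB 1))) (hC (-(1:ℂ)/4) _ (mul_mem (hB 0) (hB 3)))) (hC (Complex.I/4) _ (mul_mem (hB 1) (hB 3)))

theorem hE13 : Matrix.single (1 : Fin 4) (3 : Fin 4) (1 : ℂ) ∈ φ.range := by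
  have h : Matrix.single (1 : Fin 4) (3 : Fin 4) (1 : ℂ) = (-(1:ℂ)/4) • B 2 + ((1:ℂ)/4) • B 4 + ((1:ℂ)/4) • (B 2 * B 3) + ((1:ℂ)/4) • (B 3 * B 4) := by
    ext i j
    fin_cases i <;> fin_cases j <;>
      (try simp [B, Matrix.single, Matrix.mul_apply, Fin.sum_univ_four,
        Matrix.vecHead, Matrix.vecTail, Matrix.one_apply]) <;>
      (try norm_num) <;> (try ring_nf) <;> (try simp [Complex.I_sq]) <;> (try ring)
  rw [h]
  exact add_mem (add_mem (add_mem (hC (-(1:ℂ)/4) _ (hB 2)) (hC ((1:ℂ)/4) _ (hB 4))) (hC ((1:ℂ)/4) _ (mul_mem (hB 2) (hB 3)))) (hC ((1:ℂ)/4) _ (mul_mem (hB 3) (hB 4)))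

theorem hE20 : Matrix.single (2 : Fin 4) (0 : Fin 4) (1 : ℂ) ∈ φ.range := by
  have h : Matrix.single (2 : Fin 4) (0 : Fin 4) (1 : ℂ) = ((1:ℂ)/4) • B 2 + (-(1:ℂ)/4) • B 4 + ((1:ℂ)/4) • (B 2 * B 3) + ((1:ℂ)/4) • (B 3 * B 4) := by
    ext i j
    fin_cases i <;> fin_cases j <;>
      (try simp [B, Matrix.single, Matrix.mul_apply, Fin.sum_univ_four,
        Matrix.vecHead, Matrix.vecTail, Matrix.one_apply]) <;>
      (try norm_num) <;> (try ring_nf) <;> (try simp [Complex.I_sq]) <;> (try ring)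
  rw [h]
  exact add_mem (add_mem (add_mem (hC ((1:ℂ)/4) _ (hB 2)) (hC (-(1:ℂ)/4) _ (hB 4))) (hC ((1:ℂ)/4) _ (mul_mem (hB 2) (hB 3)))) (hC ((1:ℂ)/4) _ (mul_mem (hB 3) (hB 4)))

theorem hE21 : Matrix.single (2 : Fin 4) (1 : Fin 4) (1 : ℂ) ∈ φ.range := by
  have h : Matrix.single (2 : Fin 4) (1 : Fin 4) (1 : ℂ) = ((1:ℂ)/4) • B 0 + (Complex.I/4) • B 1 + ((1:ℂ)/4) • (B 0 * B 3) + (Complex.I/4) • (B 1 * B 3) := by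
    ext i j
    fin_cases i <;> fin_cases j <;>
      (try simp [B, Matrix.single, Matrix.mul_apply, Fin.sum_univ_four,
        Matrix.vecHead, Matrix.vecTail, Matrix.one_apply]) <;>
      (try norm_num) <;> (try ring_nf) <;> (try simp [Complex.I_sq]) <;> (try ring)
  rw [h]
  exact add_mem (add_mem (add_mem (hC ((1:ℂ)/4) _ (hB 0)) (hC (Complex.I/4) _ (hB 1))) (hC ((1:ℂ)/4) _ (mul_mem (hB 0) (hB 3)))) (hC (Complex.I/4) _ (mul_mem (hB 1) (hB 3)))

theorem hE22 : Matrix.single (2 : Fin 4) (2 : Fin 4) (1 : ℂ) ∈ φ.range := by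
  have h : Matrix.single (2 : Fin 4) (2 : Fin 4) (1 : ℂ) = ((1:ℂ)/4) • (1 : Matrix (Fin 4) (Fin 4) ℂ) + (-(1:ℂ)/4) • B 3 + (-Complex.I/4) • (B 0 * B 1) + ((1:ℂ)/4) • (B 2 * B 4) := by
    ext i j
    fin_cases i <;> fin_cases j <;>
      (try simp [B, Matrix.single, Matrix.mul_apply, Fin.sum_univ_four,
        Matrix.vecHead, Matrix.vecTail, Matrix.one_apply]) <;>
      (try norm_num) <;> (try ring_nf) <;> (try simp [Complex.I_sq]) <;> (try ring)
  rw [h]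
  exact add_mem (add_mem (add_mem (hC ((1:ℂ)/4) _ (one_mem _)) (hC (-(1:ℂ)/4) _ (hB 3))) (hC (-Complex.I/4) _ (mul_mem (hB 0) (hB 1)))) (hC ((1:ℂ)/4) _ (mul_mem (hB 2) (hB 4)))

theorem hE23 : Matrix.single (2 : Fin 4) (3 : Fin 4) (1 : ℂ) ∈ φ.range := by
  have h : Matrix.single (2 : Fin 4) (3 : Fin 4) (1 : ℂ) = (-(1:ℂ)/4) • (B 0 * B 2) + ((1:ℂ)/4) • (B 0 * B 4) + (-Complex.I/4) • (B 1 * B 2) + (Complex.I/4) • (B 1 * B 4) := by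
    ext i j
    fin_cases i <;> fin_cases j <;>
      (try simp [B, Matrix.single, Matrix.mul_apply, Fin.sum_univ_four,
        Matrix.vecHead, Matrix.vecTail, Matrix.one_apply]) <;>
      (try norm_num) <;> (try ring_nf) <;> (try simp [Complex.I_sq]) <;> (try ring)
  rw [h]
  exact add_mem (add_mem (add_mem (hC (-(1:ℂ)/4) _ (mul_mem (hB 0) (hB 2))) (hC ((1:ℂ)/4) _ (mul_mem (hB 0) (hB 4)))) (hC (-Complex.I/4) _ (mul_mem (hB 1) (hB 2)))) (hC (Complex.I/4) _ (mul_mem (hB 1) (hB 4)))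

theorem hE30 : Matrix.single (3 : Fin 4) (0 : Fin 4) (1 : ℂ) ∈ φ.range := by
  have h : Matrix.single (3 : Fin 4) (0 : Fin 4) (1 : ℂ) = ((1:ℂ)/4) • B 0 + (-Complex.I/4) • B 1 + ((1:ℂ)/4) • (B 0 * B 3) + (-Complex.I/4) • (B 1 * B 3) := by
    ext i j
    fin_cases i <;> fin_cases j <;>
      (try simp [B, Matrix.single, Matrix.mul_apply, Fin.sum_univ_four,
        Matrix.vecHead, Matrix.vecTail, Matrix.one_apply]) <;>
      (try norm_num) <;> (try ring_nf) <;> (try simp [Complex.I_sq]) <;> (try ring)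
  rw [h]
  exact add_mem (add_mem (add_mem (hC ((1:ℂ)/4) _ (hB 0)) (hC (-Complex.I/4) _ (hB 1))) (hC ((1:ℂ)/4) _ (mul_mem (hB 0) (hB 3)))) (hC (-Complex.I/4) _ (mul_mem (hB 1) (hB 3)))

theorem hE31 : Matrix.single (3 : Fin 4) (1 : Fin 4) (1 : ℂ) ∈ φ.range := by
  have h : Matrix.single (3 : Fin 4) (1 : Fin 4) (1 : ℂ) = (-(1:ℂ)/4) • B 2 + (-(1:ℂ)/4) • B 4 + (-(1:ℂ)/4) • (B 2 * B 3) + ((1:ℂ)/4) • (B 3 * B 4) := by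
    ext i j
    fin_cases i <;> fin_cases j <;>
      (try simp [B, Matrix.single, Matrix.mul_apply, Fin.sum_univ_four,
        Matrix.vecHead, Matrix.vecTail, Matrix.one_apply]) <;>
      (try norm_num) <;> (try ring_nf) <;> (try simp [Complex.I_sq]) <;> (try ring)
  rw [h]
  exact add_mem (add_mem (add_mem (hC (-(1:ℂ)/4) _ (hB 2)) (hC (-(1:ℂ)/4) _ (hB 4))) (hC (-(1:ℂ)/4) _ (mul_mem (hB 2) (hB 3)))) (hC ((1:ℂ)/4) _ (mul_mem (hB 3) (hB 4)))

theorem hE32 : Matrix.single (3 : Fin 4) (2 : Fin 4) (1 : ℂ) ∈ φ.range := by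
  have h : Matrix.single (3 : Fin 4) (2 : Fin 4) (1 : ℂ) = ((1:ℂ)/4) • (B 0 * B 2) + ((1:ℂ)/4) • (B 0 * B 4) + (-Complex.I/4) • (B 1 * B 2) + (-Complex.I/4) • (B 1 * B 4) := by
    ext i j
    fin_cases i <;> fin_cases j <;>
      (try simp [B, Matrix.single, Matrix.mul_apply, Fin.sum_univ_four,
        Matrix.vecHead, Matrix.vecTail, Matrix.one_apply]) <;>
      (try norm_num) <;> (try ring_nf) <;> (try simp [Complex.I_sq]) <;> (try ring)
  rw [h]
  exact add_mem (add_mem (add_mem (hC ((1:ℂ)/4) _ (mul_mem (hB 0) (hB 2))) (hC ((1:ℂ)/4) _ (mul_mem (hB 0) (hB 4)))) (hC (-Complex.I/4) _ (mul_mem (hB 1) (hB 2)))) (hC (-Complex.I/4) _ (mul_mem (hB 1) (hB 4)))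

theorem hE33 : Matrix.single (3 : Fin 4) (3 : Fin 4) (1 : ℂ) ∈ φ.range := by
  have h : Matrix.single (3 : Fin 4) (3 : Fin 4) (1 : ℂ) = ((1:ℂ)/4) • (1 : Matrix (Fin 4) (Fin 4) ℂ) + (-(1:ℂ)/4) • B 3 + (Complex.I/4) • (B 0 * B 1) + (-(1:ℂ)/4) • (B 2 * B 4) := by
    ext i j
    fin_cases i <;> fin_cases j <;>
      (try simp [B, Matrix.single, Matrix.mul_apply, Fin.sum_univ_four,
        Matrix.vecHead, Matrix.vecTail, Matrix.one_apply]) <;>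
      (try norm_num) <;> (try ring_nf) <;> (try simp [Complex.I_sq]) <;> (try ring)
  rw [h]
  exact add_mem (add_mem (add_mem (hC ((1:ℂ)/4) _ (one_mem _)) (hC (-(1:ℂ)/4) _ (hB 3))) (hC (Complex.I/4) _ (mul_mem (hB 0) (hB 1)))) (hC (-(1:ℂ)/4) _ (mul_mem (hB 2) (hB 4)))

theorem hE (k l : Fin 4) : Matrix.single k l (1 : ℂ) ∈ φ.range := by
  fin_cases k <;> fin_cases l <;>
    first
      | exact hE00 | exact hE01 | exact hE02 | exact hE03
      | exact hE10 | exact hE11 | exact hE12 | exact hE13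
      | exact hE20 | exact hE21 | exact hE22 | exact hE23
      | exact hE30 | exact hE31 | exact hE32 | exact hE33

theorem φ_surj : Function.Surjective φ := by
  intro M
  have hM : M ∈ φ.range := by
    rw [Matrix.matrix_eq_sum_single M]
    refine sum_mem fun k _ => sum_mem fun l _ => ?_
    have h : Matrix.single k l (M k l) = M k l • Matrix.single k l (1 : ℂ) := by
      rw [Matrix.smul_single, smul_eq_mul, mul_one]
    rw [h]
    exact hC _ _ (hE k l)
  exact hM

theorem φ_inj : Function.Injective φ := by
  haveI : Module.Finite ℝ Cl := cl_finite
  have hr : LinearMap.range φ.toLinearMap = ⊤ := LinearMap.range_eq_top.2 φ_surj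
  have hadd := LinearMap.finrank_range_add_finrank_ker φ.toLinearMap
  rw [hr, finrank_top] at hadd
  have hM : Module.finrank ℝ (Matrix (Fin 4) (Fin 4) ℂ) = 32 := by
    rw [Module.finrank_matrix]
    simp [Complex.finrank_real_complex]
  have hle := finrank_cl_le
  have hker0 : Module.finrank ℝ (LinearMap.ker φ.toLinearMap) = 0 := by omega
  have hker : LinearMap.ker φ.toLinearMap = ⊥ := Submodule.finrank_eq_zero.mp hker0
  exact LinearMap.ker_eq_bot.mp hker

noncomputable def Ψ : Cl ≃ₐ[ℝ] Matrix (Fin 4) (Fin 4) ℂ :=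
  AlgEquiv.ofBijective φ ⟨φ_inj, φ_surj⟩

theorem Ψ_e (j : Fin 5) : Ψ (e j) = B j := φ_e j

end Cl41

/-- There is an ℝ-algebra isomorphism `Ψ : Cl(4,1) ≃ M₄(ℂ)` sending the generators to
`B₁, B₂, B₃, A₁, B₄`; moreover `A₁ = i B₁ B₂ B₃ B₄`. -/
theorem cl41_iso_M4C :
    ∃ Ψ : CliffordAlgebra (Qpq 4 1) ≃ₐ[ℝ] Matrix (Fin 4) (Fin 4) ℂ,
      Ψ (CliffordAlgebra.ι (Qpq 4 1) (Pi.single 0 1)) =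
        !![0, 0, 0, 1; 0, 0, 1, 0; 0, 1, 0, 0; 1, 0, 0, 0] ∧
      Ψ (CliffordAlgebra.ι (Qpq 4 1) (Pi.single 1 1)) =
        !![0, 0, 0, -Complex.I; 0, 0, Complex.I, 0;
           0, -Complex.I, 0, 0; Complex.I, 0, 0, 0] ∧
      Ψ (CliffordAlgebra.ι (Qpq 4 1) (Pi.single 2 1)) =
        !![0, 0, 1, 0; 0, 0, 0, -1; 1, 0, 0, 0; 0, -1, 0, 0] ∧
      Ψ (CliffordAlgebra.ι (Qpq 4 1) (Pi.single 3 1)) =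
        !![1, 0, 0, 0; 0, 1, 0, 0; 0, 0, -1, 0; 0, 0, 0, -1] ∧
      Ψ (CliffordAlgebra.ι (Qpq 4 1) (Pi.single 4 1)) =
        !![0, 0, 1, 0; 0, 0, 0, 1; -1, 0, 0, 0; 0, -1, 0, 0] ∧
      (!![1, 0, 0, 0; 0, 1, 0, 0; 0, 0, -1, 0; 0, 0, 0, -1] : Matrix (Fin 4) (Fin 4) ℂ) =
        Complex.I •
          (!![0, 0, 0, 1; 0, 0, 1, 0; 0, 1, 0, 0; 1, 0, 0, 0] *
           !![0, 0, 0, -Complex.I; 0, 0, Complex.I, 0;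
              0, -Complex.I, 0, 0; Complex.I, 0, 0, 0] *
           !![0, 0, 1, 0; 0, 0, 0, -1; 1, 0, 0, 0; 0, -1, 0, 0] *
           !![0, 0, 1, 0; 0, 0, 0, 1; -1, 0, 0, 0; 0, -1, 0, 0]) := by
  refine ⟨Cl41.Ψ, ?_, ?_, ?_, ?_, ?_, ?_⟩
  · exact Cl41.Ψ_e 0
  · exact Cl41.Ψ_e 1
  · exact Cl41.Ψ_e 2
  · exact Cl41.Ψ_e 3
  · exact Cl41.Ψ_e 4
  · ext i j
    fin_cases i <;> fin_cases j <;>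
      simp [Matrix.mul_apply, Fin.sum_univ_four, Matrix.vecHead, Matrix.vecTail]
end

section
/- There exists an injective ℝ-algebra homomorphism Ω : Cl(1,3) → M₄(ℂ) such that Ω(ι(v_0)) = D₀ and Ω(ι(v_j)) = D_j for j = 1, 2, 3, where, in 2×2 block form, D₀ = [[0, σ₀],[σ₀, 0]] and D_j = [[0, −σ_j],[σ_j, 0]] with σ₀ the 2×2 identity and σ₁, σ₂, σ₃ the Pauli matrices. -/
open Matrix CliffordAlgebra Complex

noncomputable abbrev Q13 := Qpq 1 3

/-! ### The matrix side -/

noncomputable def fmat (x : Fin 4 → ℝ) : Matrix (Fin 4) (Fin 4) ℂ :=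
  !![0, 0, (x 0 : ℂ) - x 3, -(x 1 : ℂ) + x 2 * I;
     0, 0, -(x 1 : ℂ) - x 2 * I, (x 0 : ℂ) + x 3;
     (x 0 : ℂ) + x 3, (x 1 : ℂ) - x 2 * I, 0, 0;
     (x 1 : ℂ) + x 2 * I, (x 0 : ℂ) - x 3, 0, 0]

noncomputable def flin : (Fin 4 → ℝ) →ₗ[ℝ] Matrix (Fin 4) (Fin 4) ℂ where
  toFun := fmat
  map_add' x y := by
    ext i j
    fin_cases i <;> fin_cases j <;>
      simp [fmat, Matrix.vecHead, Matrix.vecTail] <;> push_cast <;> ring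
  map_smul' c x := by
    ext i j
    fin_cases i <;> fin_cases j <;>
      simp [fmat, Matrix.vecHead, Matrix.vecTail] <;> push_cast <;> ring

theorem hflin (x : Fin 4 → ℝ) : flin x * flin x = algebraMap ℝ _ (Qpq 1 3 x) := by
  have hq : Qpq 1 3 x = x 0 * x 0 - x 1 * x 1 - x 2 * x 2 - x 3 * x 3 := by
    simp [Qpq, QuadraticMap.weightedSumSquares_apply, Fin.sum_univ_four,
      show ((0:Fin 4):ℕ) = 0 from rfl, show ((1:Fin 4):ℕ) = 1 from rfl,
      show ((2:Fin 4):ℕ) = 2 from rfl, show ((3:Fin 4):ℕ) = 3 from rfl]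
    ring
  rw [hq]
  ext i j
  fin_cases i <;> fin_cases j <;>
    simp [flin, fmat, Matrix.mul_apply, Fin.sum_univ_four, Matrix.algebraMap_matrix_apply,
      Matrix.vecHead, Matrix.vecTail, Complex.ext_iff] <;>
    constructor <;> first | trivial | (push_cast; ring1) | simp

noncomputable def Ωd : CliffordAlgebra Q13 →ₐ[ℝ] Matrix (Fin 4) (Fin 4) ℂ :=
  CliffordAlgebra.lift Q13 ⟨flin, hflin⟩

/-! ### The Clifford algebra side: generators and monomials -/

noncomputable def ee (i : Fin 4) : CliffordAlgebra Q13 := ι Q13 (Pi.single i 1)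

lemma Q13_single (i : Fin 4) : Q13 (Pi.single i 1) = if (i:ℕ) < 1 then 1 else -1 := by
  fin_cases i <;>
    simp [Qpq, QuadraticMap.weightedSumSquares_apply, Fin.sum_univ_four, Pi.single_apply] <;>
    first | rfl | decide

lemma polar_single (i j : Fin 4) (h : i ≠ j) :
    QuadraticMap.polar Q13 (Pi.single i 1) (Pi.single j 1) = 0 := by
  fin_cases i <;> fin_cases j <;> first
    | exact absurd rfl h
    | simp [QuadraticMap.polar, Qpq, QuadraticMap.weightedSumSquares_apply, Fin.sum_univ_four,
        Pi.single_apply]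

lemma ee_swap (i j : Fin 4) (h : i ≠ j) : ee j * ee i = -(ee i * ee j) := by
  have := ι_mul_ι_add_swap (Q := Q13) (Pi.single i 1) (Pi.single j 1)
  rw [polar_single i j h, map_zero] at this
  rw [ee, ee]
  linear_combination (norm := noncomm_ring) this

lemma ee_swap' (i j : Fin 4) (h : i ≠ j) (x : CliffordAlgebra Q13) :
    ee j * (ee i * x) = -(ee i * (ee j * x)) := by
  rw [← mul_assoc, ee_swap i j h, ← mul_assoc, neg_mul]

lemma ee_sq0 : ee 0 * ee 0 = 1 := by
  rw [ee, ι_sq_scalar, Q13_single]; norm_num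

lemma ee_sq0' (x : CliffordAlgebra Q13) : ee 0 * (ee 0 * x) = x := by
  rw [← mul_assoc, ee_sq0, one_mul]

lemma ee_sq (i : Fin 4) (h : i ≠ 0) : ee i * ee i = -1 := by
  rw [ee, ι_sq_scalar, Q13_single]
  fin_cases i <;> simp_all <;> norm_num [map_neg] <;> decide

lemma ee_sq' (i : Fin 4) (h : i ≠ 0) (x : CliffordAlgebra Q13) : ee i * (ee i * x) = -x := by
  rw [← mul_assoc, ee_sq i h, neg_one_mul]

noncomputable def mm : Fin 16 → CliffordAlgebra Q13 :=
  ![1, ee 0, ee 1, ee 2, ee 3,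
    ee 0 * ee 1, ee 0 * ee 2, ee 0 * ee 3, ee 1 * ee 2, ee 1 * ee 3, ee 2 * ee 3,
    ee 0 * (ee 1 * ee 2), ee 0 * (ee 1 * ee 3), ee 0 * (ee 2 * ee 3), ee 1 * (ee 2 * ee 3),
    ee 0 * (ee 1 * (ee 2 * ee 3))]

noncomputable def P13 : Submodule ℝ (CliffordAlgebra Q13) := Submodule.span ℝ (Set.range mm)

lemma mm_mem (k : Fin 16) : mm k ∈ P13 := Submodule.subset_span ⟨k, rfl⟩

lemma sq1 : ee 1 * ee 1 = -1 := ee_sq 1 (by decide)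
lemma sq2 : ee 2 * ee 2 = -1 := ee_sq 2 (by decide)
lemma sq3 : ee 3 * ee 3 = -1 := ee_sq 3 (by decide)
lemma sq1' (x) : ee 1 * (ee 1 * x) = -x := ee_sq' 1 (by decide) x
lemma sq2' (x) : ee 2 * (ee 2 * x) = -x := ee_sq' 2 (by decide) x
lemma sq3' (x) : ee 3 * (ee 3 * x) = -x := ee_sq' 3 (by decide) x

lemma sw10 : ee 1 * ee 0 = -(ee 0 * ee 1) := ee_swap 0 1 (by decide)
lemma sw10' (x) : ee 1 * (ee 0 * x) = -(ee 0 * (ee 1 * x)) := ee_swap' 0 1 (by decide) x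
lemma sw20 : ee 2 * ee 0 = -(ee 0 * ee 2) := ee_swap 0 2 (by decide)
lemma sw20' (x) : ee 2 * (ee 0 * x) = -(ee 0 * (ee 2 * x)) := ee_swap' 0 2 (by decide) x
lemma sw21 : ee 2 * ee 1 = -(ee 1 * ee 2) := ee_swap 1 2 (by decide)
lemma sw21' (x) : ee 2 * (ee 1 * x) = -(ee 1 * (ee 2 * x)) := ee_swap' 1 2 (by decide) x
lemma sw30 : ee 3 * ee 0 = -(ee 0 * ee 3) := ee_swap 0 3 (by decide)
lemma sw30' (x) : ee 3 * (ee 0 * x) = -(ee 0 * (ee 3 * x)) := ee_swap' 0 3 (by decide) x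
lemma sw31 : ee 3 * ee 1 = -(ee 1 * ee 3) := ee_swap 1 3 (by decide)
lemma sw31' (x) : ee 3 * (ee 1 * x) = -(ee 1 * (ee 3 * x)) := ee_swap' 1 3 (by decide) x
lemma sw32 : ee 3 * ee 2 = -(ee 2 * ee 3) := ee_swap 2 3 (by decide)
lemma sw32' (x) : ee 3 * (ee 2 * x) = -(ee 2 * (ee 3 * x)) := ee_swap' 2 3 (by decide) x

set_option maxHeartbeats 1000000 in
lemma eeClosure0 : ∀ p ∈ P13, ee 0 * p ∈ P13 := by
  intro p hp
  induction hp using Submodule.span_induction with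
  | mem x hx =>
    obtain ⟨k, rfl⟩ := hx
    fin_cases k <;>
      norm_num [mm, ee_sq0, ee_sq0', sq1, sq2, sq3, sq1', sq2', sq3',
        sw10, sw20, sw30, sw21, sw31, sw32, sw10', sw20', sw30', sw21', sw31', sw32',
        mul_one, mul_neg, neg_neg, neg_mul] <;>
      first
        | exact mm_mem 0 | exact neg_mem (mm_mem 0)
        | exact mm_mem 1 | exact neg_mem (mm_mem 1)
        | exact mm_mem 2 | exact neg_mem (mm_mem 2)
        | exact mm_mem 3 | exact neg_mem (mm_mem 3)
        | exact mm_mem 4 | exact neg_mem (mm_mem 4)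
        | exact mm_mem 5 | exact neg_mem (mm_mem 5)
        | exact mm_mem 6 | exact neg_mem (mm_mem 6)
        | exact mm_mem 7 | exact neg_mem (mm_mem 7)
        | exact mm_mem 8 | exact neg_mem (mm_mem 8)
        | exact mm_mem 9 | exact neg_mem (mm_mem 9)
        | exact mm_mem 10 | exact neg_mem (mm_mem 10)
        | exact mm_mem 11 | exact neg_mem (mm_mem 11)
        | exact mm_mem 12 | exact neg_mem (mm_mem 12)
        | exact mm_mem 13 | exact neg_mem (mm_mem 13)
        | exact mm_mem 14 | exact neg_mem (mm_mem 14)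
        | exact mm_mem 15 | exact neg_mem (mm_mem 15)
  | zero => simpa using P13.zero_mem
  | add x y _ _ hx hy => rw [mul_add]; exact P13.add_mem hx hy
  | smul c x _ hx => rw [mul_smul_comm]; exact P13.smul_mem c hx


set_option maxHeartbeats 1000000 in
lemma eeClosure1 : ∀ p ∈ P13, ee 1 * p ∈ P13 := by
  intro p hp
  induction hp using Submodule.span_induction with
  | mem x hx =>
    obtain ⟨k, rfl⟩ := hx
    fin_cases k <;>
      norm_num [mm, ee_sq0, ee_sq0', sq1, sq2, sq3, sq1', sq2', sq3',
        sw10, sw20, sw30, sw21, sw31, sw32, sw10', sw20', sw30', sw21', sw31', sw32',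
        mul_one, mul_neg, neg_neg, neg_mul] <;>
      first
        | exact mm_mem 0 | exact neg_mem (mm_mem 0)
        | exact mm_mem 1 | exact neg_mem (mm_mem 1)
        | exact mm_mem 2 | exact neg_mem (mm_mem 2)
        | exact mm_mem 3 | exact neg_mem (mm_mem 3)
        | exact mm_mem 4 | exact neg_mem (mm_mem 4)
        | exact mm_mem 5 | exact neg_mem (mm_mem 5)
        | exact mm_mem 6 | exact neg_mem (mm_mem 6)
        | exact mm_mem 7 | exact neg_mem (mm_mem 7)
        | exact mm_mem 8 | exact neg_mem (mm_mem 8)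
        | exact mm_mem 9 | exact neg_mem (mm_mem 9)
        | exact mm_mem 10 | exact neg_mem (mm_mem 10)
        | exact mm_mem 11 | exact neg_mem (mm_mem 11)
        | exact mm_mem 12 | exact neg_mem (mm_mem 12)
        | exact mm_mem 13 | exact neg_mem (mm_mem 13)
        | exact mm_mem 14 | exact neg_mem (mm_mem 14)
        | exact mm_mem 15 | exact neg_mem (mm_mem 15)
  | zero => simpa using P13.zero_mem
  | add x y _ _ hx hy => rw [mul_add]; exact P13.add_mem hx hy
  | smul c x _ hx => rw [mul_smul_comm]; exact P13.smul_mem c hx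


set_option maxHeartbeats 1000000 in
lemma eeClosure2 : ∀ p ∈ P13, ee 2 * p ∈ P13 := by
  intro p hp
  induction hp using Submodule.span_induction with
  | mem x hx =>
    obtain ⟨k, rfl⟩ := hx
    fin_cases k <;>
      norm_num [mm, ee_sq0, ee_sq0', sq1, sq2, sq3, sq1', sq2', sq3',
        sw10, sw20, sw30, sw21, sw31, sw32, sw10', sw20', sw30', sw21', sw31', sw32',
        mul_one, mul_neg, neg_neg, neg_mul] <;>
      first
        | exact mm_mem 0 | exact neg_mem (mm_mem 0)
        | exact mm_mem 1 | exact neg_mem (mm_mem 1)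
        | exact mm_mem 2 | exact neg_mem (mm_mem 2)
        | exact mm_mem 3 | exact neg_mem (mm_mem 3)
        | exact mm_mem 4 | exact neg_mem (mm_mem 4)
        | exact mm_mem 5 | exact neg_mem (mm_mem 5)
        | exact mm_mem 6 | exact neg_mem (mm_mem 6)
        | exact mm_mem 7 | exact neg_mem (mm_mem 7)
        | exact mm_mem 8 | exact neg_mem (mm_mem 8)
        | exact mm_mem 9 | exact neg_mem (mm_mem 9)
        | exact mm_mem 10 | exact neg_mem (mm_mem 10)
        | exact mm_mem 11 | exact neg_mem (mm_mem 11)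
        | exact mm_mem 12 | exact neg_mem (mm_mem 12)
        | exact mm_mem 13 | exact neg_mem (mm_mem 13)
        | exact mm_mem 14 | exact neg_mem (mm_mem 14)
        | exact mm_mem 15 | exact neg_mem (mm_mem 15)
  | zero => simpa using P13.zero_mem
  | add x y _ _ hx hy => rw [mul_add]; exact P13.add_mem hx hy
  | smul c x _ hx => rw [mul_smul_comm]; exact P13.smul_mem c hx


set_option maxHeartbeats 1000000 in
lemma eeClosure3 : ∀ p ∈ P13, ee 3 * p ∈ P13 := by
  intro p hp
  induction hp using Submodule.span_induction with
  | mem x hx =>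
    obtain ⟨k, rfl⟩ := hx
    fin_cases k <;>
      norm_num [mm, ee_sq0, ee_sq0', sq1, sq2, sq3, sq1', sq2', sq3',
        sw10, sw20, sw30, sw21, sw31, sw32, sw10', sw20', sw30', sw21', sw31', sw32',
        mul_one, mul_neg, neg_neg, neg_mul] <;>
      first
        | exact mm_mem 0 | exact neg_mem (mm_mem 0)
        | exact mm_mem 1 | exact neg_mem (mm_mem 1)
        | exact mm_mem 2 | exact neg_mem (mm_mem 2)
        | exact mm_mem 3 | exact neg_mem (mm_mem 3)
        | exact mm_mem 4 | exact neg_mem (mm_mem 4)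
        | exact mm_mem 5 | exact neg_mem (mm_mem 5)
        | exact mm_mem 6 | exact neg_mem (mm_mem 6)
        | exact mm_mem 7 | exact neg_mem (mm_mem 7)
        | exact mm_mem 8 | exact neg_mem (mm_mem 8)
        | exact mm_mem 9 | exact neg_mem (mm_mem 9)
        | exact mm_mem 10 | exact neg_mem (mm_mem 10)
        | exact mm_mem 11 | exact neg_mem (mm_mem 11)
        | exact mm_mem 12 | exact neg_mem (mm_mem 12)
        | exact mm_mem 13 | exact neg_mem (mm_mem 13)
        | exact mm_mem 14 | exact neg_mem (mm_mem 14)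
        | exact mm_mem 15 | exact neg_mem (mm_mem 15)
  | zero => simpa using P13.zero_mem
  | add x y _ _ hx hy => rw [mul_add]; exact P13.add_mem hx hy
  | smul c x _ hx => rw [mul_smul_comm]; exact P13.smul_mem c hx


lemma eeClosure (i : Fin 4) : ∀ p ∈ P13, ee i * p ∈ P13 := by
  fin_cases i
  · exact eeClosure0
  · exact eeClosure1
  · exact eeClosure2
  · exact eeClosure3

lemma mulClosure : ∀ (x : CliffordAlgebra Q13), ∀ p ∈ P13, x * p ∈ P13 := by
  intro x
  induction x using CliffordAlgebra.induction with
  | algebraMap r =>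
    intro p hp
    rw [← Algebra.smul_def]
    exact P13.smul_mem r hp
  | ι v =>
    intro p hp
    have hιv : ι Q13 v = v 0 • ee 0 + v 1 • ee 1 + v 2 • ee 2 + v 3 • ee 3 := by
      rw [ee, ee, ee, ee, ← _root_.map_smul, ← _root_.map_smul, ← _root_.map_smul,
        ← _root_.map_smul, ← map_add, ← map_add, ← map_add]
      congr 1
      funext j
      fin_cases j <;> simp [Pi.single_apply]
    rw [hιv, add_mul, add_mul, add_mul, smul_mul_assoc, smul_mul_assoc, smul_mul_assoc,
      smul_mul_assoc]
    exact add_mem (add_mem (add_mem (P13.smul_mem _ (eeClosure 0 p hp))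
      (P13.smul_mem _ (eeClosure 1 p hp))) (P13.smul_mem _ (eeClosure 2 p hp)))
      (P13.smul_mem _ (eeClosure 3 p hp))
  | mul a b ha hb => intro p hp; rw [mul_assoc]; exact ha _ (hb p hp)
  | add a b ha hb => intro p hp; rw [add_mul]; exact add_mem (ha p hp) (hb p hp)

lemma P13_top : P13 = ⊤ := by
  rw [eq_top_iff]
  intro x _
  have h1 : (1 : CliffordAlgebra Q13) ∈ P13 := mm_mem 0
  simpa using mulClosure x 1 h1

noncomputable instance : Module.Finite ℝ (CliffordAlgebra Q13) := by
  classical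
  rw [Module.finite_def]
  refine ⟨Finset.univ.image mm, ?_⟩
  rw [Finset.coe_image, Finset.coe_univ, Set.image_univ]
  exact P13_top

lemma finrank_cl_le : Module.finrank ℝ (CliffordAlgebra Q13) ≤ 16 := by
  classical
  have h1 : Module.finrank ℝ (CliffordAlgebra Q13)
      = Module.finrank ℝ (⊤ : Submodule ℝ (CliffordAlgebra Q13)) := (finrank_top ℝ _).symm
  rw [h1, ← P13_top, P13]
  refine le_trans (finrank_span_le_card _) ?_
  rw [Set.toFinset_range]
  exact le_trans (Finset.card_image_le) (by simp)

/-! ### The sixteen gamma matrices -/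

noncomputable def G0 : Matrix (Fin 4) (Fin 4) ℂ :=
  !![1, 0, 0, 0;
    0, 1, 0, 0;
    0, 0, 1, 0;
    0, 0, 0, 1]

noncomputable def G1 : Matrix (Fin 4) (Fin 4) ℂ :=
  !![0, 0, 1, 0;
    0, 0, 0, 1;
    1, 0, 0, 0;
    0, 1, 0, 0]

noncomputable def G2 : Matrix (Fin 4) (Fin 4) ℂ :=
  !![0, 0, 0, (-1);
    0, 0, (-1), 0;
    0, 1, 0, 0;
    1, 0, 0, 0]

noncomputable def G3 : Matrix (Fin 4) (Fin 4) ℂ :=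
  !![0, 0, 0, Complex.I;
    0, 0, (-Complex.I), 0;
    0, (-Complex.I), 0, 0;
    Complex.I, 0, 0, 0]

noncomputable def G4 : Matrix (Fin 4) (Fin 4) ℂ :=
  !![0, 0, (-1), 0;
    0, 0, 0, 1;
    1, 0, 0, 0;
    0, (-1), 0, 0]

noncomputable def G5 : Matrix (Fin 4) (Fin 4) ℂ :=
  !![0, 1, 0, 0;
    1, 0, 0, 0;
    0, 0, 0, (-1);
    0, 0, (-1), 0]

noncomputable def G6 : Matrix (Fin 4) (Fin 4) ℂ :=
  !![0, (-Complex.I), 0, 0;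
    Complex.I, 0, 0, 0;
    0, 0, 0, Complex.I;
    0, 0, (-Complex.I), 0]

noncomputable def G7 : Matrix (Fin 4) (Fin 4) ℂ :=
  !![1, 0, 0, 0;
    0, (-1), 0, 0;
    0, 0, (-1), 0;
    0, 0, 0, 1]

noncomputable def G8 : Matrix (Fin 4) (Fin 4) ℂ :=
  !![(-Complex.I), 0, 0, 0;
    0, Complex.I, 0, 0;
    0, 0, (-Complex.I), 0;
    0, 0, 0, Complex.I]

noncomputable def G9 : Matrix (Fin 4) (Fin 4) ℂ :=
  !![0, 1, 0, 0;
    (-1), 0, 0, 0;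
    0, 0, 0, 1;
    0, 0, (-1), 0]

noncomputable def G10 : Matrix (Fin 4) (Fin 4) ℂ :=
  !![0, (-Complex.I), 0, 0;
    (-Complex.I), 0, 0, 0;
    0, 0, 0, (-Complex.I);
    0, 0, (-Complex.I), 0]

noncomputable def G11 : Matrix (Fin 4) (Fin 4) ℂ :=
  !![0, 0, (-Complex.I), 0;
    0, 0, 0, Complex.I;
    (-Complex.I), 0, 0, 0;
    0, Complex.I, 0, 0]

noncomputable def G12 : Matrix (Fin 4) (Fin 4) ℂ :=
  !![0, 0, 0, 1;
    0, 0, (-1), 0;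
    0, 1, 0, 0;
    (-1), 0, 0, 0]

noncomputable def G13 : Matrix (Fin 4) (Fin 4) ℂ :=
  !![0, 0, 0, (-Complex.I);
    0, 0, (-Complex.I), 0;
    0, (-Complex.I), 0, 0;
    (-Complex.I), 0, 0, 0]

noncomputable def G14 : Matrix (Fin 4) (Fin 4) ℂ :=
  !![0, 0, Complex.I, 0;
    0, 0, 0, Complex.I;
    (-Complex.I), 0, 0, 0;
    0, (-Complex.I), 0, 0]

noncomputable def G15 : Matrix (Fin 4) (Fin 4) ℂ :=
  !![(-Complex.I), 0, 0, 0;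
    0, (-Complex.I), 0, 0;
    0, 0, Complex.I, 0;
    0, 0, 0, Complex.I]

set_option maxHeartbeats 1000000 in
lemma Gmul_1_2 : G1 * G2 = G5 := by
  ext i j
  fin_cases i <;> fin_cases j <;>
    simp [G1, G2, G5, Matrix.mul_apply, Fin.sum_univ_four, Matrix.vecHead,
      Matrix.vecTail] <;>
    norm_num [Complex.ext_iff, Fin.ext_iff,
      show ((0:Fin 4):ℕ) = 0 from rfl, show ((1:Fin 4):ℕ) = 1 from rfl,
      show ((2:Fin 4):ℕ) = 2 from rfl, show ((3:Fin 4):ℕ) = 3 from rfl]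

set_option maxHeartbeats 1000000 in
lemma Gmul_1_3 : G1 * G3 = G6 := by
  ext i j
  fin_cases i <;> fin_cases j <;>
    simp [G1, G3, G6, Matrix.mul_apply, Fin.sum_univ_four, Matrix.vecHead,
      Matrix.vecTail] <;>
    norm_num [Complex.ext_iff, Fin.ext_iff,
      show ((0:Fin 4):ℕ) = 0 from rfl, show ((1:Fin 4):ℕ) = 1 from rfl,
      show ((2:Fin 4):ℕ) = 2 from rfl, show ((3:Fin 4):ℕ) = 3 from rfl]

set_option maxHeartbeats 1000000 in
lemma Gmul_1_4 : G1 * G4 = G7 := by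
  ext i j
  fin_cases i <;> fin_cases j <;>
    simp [G1, G4, G7, Matrix.mul_apply, Fin.sum_univ_four, Matrix.vecHead,
      Matrix.vecTail] <;>
    norm_num [Complex.ext_iff, Fin.ext_iff,
      show ((0:Fin 4):ℕ) = 0 from rfl, show ((1:Fin 4):ℕ) = 1 from rfl,
      show ((2:Fin 4):ℕ) = 2 from rfl, show ((3:Fin 4):ℕ) = 3 from rfl]

set_option maxHeartbeats 1000000 in
lemma Gmul_2_3 : G2 * G3 = G8 := by
  ext i j
  fin_cases i <;> fin_cases j <;>
    simp [G2, G3, G8, Matrix.mul_apply, Fin.sum_univ_four, Matrix.vecHead,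
      Matrix.vecTail] <;>
    norm_num [Complex.ext_iff, Fin.ext_iff,
      show ((0:Fin 4):ℕ) = 0 from rfl, show ((1:Fin 4):ℕ) = 1 from rfl,
      show ((2:Fin 4):ℕ) = 2 from rfl, show ((3:Fin 4):ℕ) = 3 from rfl]

set_option maxHeartbeats 1000000 in
lemma Gmul_2_4 : G2 * G4 = G9 := by
  ext i j
  fin_cases i <;> fin_cases j <;>
    simp [G2, G4, G9, Matrix.mul_apply, Fin.sum_univ_four, Matrix.vecHead,
      Matrix.vecTail] <;>
    norm_num [Complex.ext_iff, Fin.ext_iff,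
      show ((0:Fin 4):ℕ) = 0 from rfl, show ((1:Fin 4):ℕ) = 1 from rfl,
      show ((2:Fin 4):ℕ) = 2 from rfl, show ((3:Fin 4):ℕ) = 3 from rfl]

set_option maxHeartbeats 1000000 in
lemma Gmul_3_4 : G3 * G4 = G10 := by
  ext i j
  fin_cases i <;> fin_cases j <;>
    simp [G3, G4, G10, Matrix.mul_apply, Fin.sum_univ_four, Matrix.vecHead,
      Matrix.vecTail] <;>
    norm_num [Complex.ext_iff, Fin.ext_iff,
      show ((0:Fin 4):ℕ) = 0 from rfl, show ((1:Fin 4):ℕ) = 1 from rfl,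
      show ((2:Fin 4):ℕ) = 2 from rfl, show ((3:Fin 4):ℕ) = 3 from rfl]

set_option maxHeartbeats 1000000 in
lemma Gmul_1_8 : G1 * G8 = G11 := by
  ext i j
  fin_cases i <;> fin_cases j <;>
    simp [G1, G8, G11, Matrix.mul_apply, Fin.sum_univ_four, Matrix.vecHead,
      Matrix.vecTail] <;>
    norm_num [Complex.ext_iff, Fin.ext_iff,
      show ((0:Fin 4):ℕ) = 0 from rfl, show ((1:Fin 4):ℕ) = 1 from rfl,
      show ((2:Fin 4):ℕ) = 2 from rfl, show ((3:Fin 4):ℕ) = 3 from rfl]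

set_option maxHeartbeats 1000000 in
lemma Gmul_1_9 : G1 * G9 = G12 := by
  ext i j
  fin_cases i <;> fin_cases j <;>
    simp [G1, G9, G12, Matrix.mul_apply, Fin.sum_univ_four, Matrix.vecHead,
      Matrix.vecTail] <;>
    norm_num [Complex.ext_iff, Fin.ext_iff,
      show ((0:Fin 4):ℕ) = 0 from rfl, show ((1:Fin 4):ℕ) = 1 from rfl,
      show ((2:Fin 4):ℕ) = 2 from rfl, show ((3:Fin 4):ℕ) = 3 from rfl]

set_option maxHeartbeats 1000000 in
lemma Gmul_1_10 : G1 * G10 = G13 := by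
  ext i j
  fin_cases i <;> fin_cases j <;>
    simp [G1, G10, G13, Matrix.mul_apply, Fin.sum_univ_four, Matrix.vecHead,
      Matrix.vecTail] <;>
    norm_num [Complex.ext_iff, Fin.ext_iff,
      show ((0:Fin 4):ℕ) = 0 from rfl, show ((1:Fin 4):ℕ) = 1 from rfl,
      show ((2:Fin 4):ℕ) = 2 from rfl, show ((3:Fin 4):ℕ) = 3 from rfl]

set_option maxHeartbeats 1000000 in
lemma Gmul_2_10 : G2 * G10 = G14 := by
  ext i j
  fin_cases i <;> fin_cases j <;>
    simp [G2, G10, G14, Matrix.mul_apply, Fin.sum_univ_four, Matrix.vecHead,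
      Matrix.vecTail] <;>
    norm_num [Complex.ext_iff, Fin.ext_iff,
      show ((0:Fin 4):ℕ) = 0 from rfl, show ((1:Fin 4):ℕ) = 1 from rfl,
      show ((2:Fin 4):ℕ) = 2 from rfl, show ((3:Fin 4):ℕ) = 3 from rfl]

set_option maxHeartbeats 1000000 in
lemma Gmul_1_14 : G1 * G14 = G15 := by
  ext i j
  fin_cases i <;> fin_cases j <;>
    simp [G1, G14, G15, Matrix.mul_apply, Fin.sum_univ_four, Matrix.vecHead,
      Matrix.vecTail] <;>
    norm_num [Complex.ext_iff, Fin.ext_iff,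
      show ((0:Fin 4):ℕ) = 0 from rfl, show ((1:Fin 4):ℕ) = 1 from rfl,
      show ((2:Fin 4):ℕ) = 2 from rfl, show ((3:Fin 4):ℕ) = 3 from rfl]

set_option maxHeartbeats 1000000 in
lemma hGe0 : Ωd (ee 0) = G1 := by
  rw [Ωd, ee, CliffordAlgebra.lift_ι_apply]
  ext a b
  fin_cases a <;> fin_cases b <;>
    simp [flin, fmat, G1, Pi.single_apply, Matrix.vecHead, Matrix.vecTail,
      show ((0:Fin 4):ℕ) = 0 from rfl, show ((1:Fin 4):ℕ) = 1 from rfl,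
      show ((2:Fin 4):ℕ) = 2 from rfl, show ((3:Fin 4):ℕ) = 3 from rfl, Fin.ext_iff] <;>
    norm_num [Complex.ext_iff, Fin.ext_iff,
      show ((0:Fin 4):ℕ) = 0 from rfl, show ((1:Fin 4):ℕ) = 1 from rfl,
      show ((2:Fin 4):ℕ) = 2 from rfl, show ((3:Fin 4):ℕ) = 3 from rfl]

set_option maxHeartbeats 1000000 in
lemma hGe1 : Ωd (ee 1) = G2 := by
  rw [Ωd, ee, CliffordAlgebra.lift_ι_apply]
  ext a b
  fin_cases a <;> fin_cases b <;>
    simp [flin, fmat, G2, Pi.single_apply, Matrix.vecHead, Matrix.vecTail,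
      show ((0:Fin 4):ℕ) = 0 from rfl, show ((1:Fin 4):ℕ) = 1 from rfl,
      show ((2:Fin 4):ℕ) = 2 from rfl, show ((3:Fin 4):ℕ) = 3 from rfl, Fin.ext_iff] <;>
    norm_num [Complex.ext_iff, Fin.ext_iff,
      show ((0:Fin 4):ℕ) = 0 from rfl, show ((1:Fin 4):ℕ) = 1 from rfl,
      show ((2:Fin 4):ℕ) = 2 from rfl, show ((3:Fin 4):ℕ) = 3 from rfl]

set_option maxHeartbeats 1000000 in
lemma hGe2 : Ωd (ee 2) = G3 := by
  rw [Ωd, ee, CliffordAlgebra.lift_ι_apply]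
  ext a b
  fin_cases a <;> fin_cases b <;>
    simp [flin, fmat, G3, Pi.single_apply, Matrix.vecHead, Matrix.vecTail,
      show ((0:Fin 4):ℕ) = 0 from rfl, show ((1:Fin 4):ℕ) = 1 from rfl,
      show ((2:Fin 4):ℕ) = 2 from rfl, show ((3:Fin 4):ℕ) = 3 from rfl, Fin.ext_iff] <;>
    norm_num [Complex.ext_iff, Fin.ext_iff,
      show ((0:Fin 4):ℕ) = 0 from rfl, show ((1:Fin 4):ℕ) = 1 from rfl,
      show ((2:Fin 4):ℕ) = 2 from rfl, show ((3:Fin 4):ℕ) = 3 from rfl]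

set_option maxHeartbeats 1000000 in
lemma hGe3 : Ωd (ee 3) = G4 := by
  rw [Ωd, ee, CliffordAlgebra.lift_ι_apply]
  ext a b
  fin_cases a <;> fin_cases b <;>
    simp [flin, fmat, G4, Pi.single_apply, Matrix.vecHead, Matrix.vecTail,
      show ((0:Fin 4):ℕ) = 0 from rfl, show ((1:Fin 4):ℕ) = 1 from rfl,
      show ((2:Fin 4):ℕ) = 2 from rfl, show ((3:Fin 4):ℕ) = 3 from rfl, Fin.ext_iff] <;>
    norm_num [Complex.ext_iff, Fin.ext_iff,
      show ((0:Fin 4):ℕ) = 0 from rfl, show ((1:Fin 4):ℕ) = 1 from rfl,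
      show ((2:Fin 4):ℕ) = 2 from rfl, show ((3:Fin 4):ℕ) = 3 from rfl]

lemma hG0 : Ωd 1 = G0 := by
  rw [_root_.map_one]
  ext a b
  fin_cases a <;> fin_cases b <;> simp [G0, Matrix.one_apply, Matrix.vecHead, Matrix.vecTail]

lemma hOm0 : Ωd (1 : CliffordAlgebra Q13) = G0 := hG0
lemma hOm1 : Ωd (ee 0) = G1 := hGe0
lemma hOm2 : Ωd (ee 1) = G2 := hGe1
lemma hOm3 : Ωd (ee 2) = G3 := hGe2
lemma hOm4 : Ωd (ee 3) = G4 := hGe3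
lemma hOm5 : Ωd (ee 0 * ee 1) = G5 := by rw [_root_.map_mul, hGe0, hGe1, Gmul_1_2]
lemma hOm6 : Ωd (ee 0 * ee 2) = G6 := by rw [_root_.map_mul, hGe0, hGe2, Gmul_1_3]
lemma hOm7 : Ωd (ee 0 * ee 3) = G7 := by rw [_root_.map_mul, hGe0, hGe3, Gmul_1_4]
lemma hOm8 : Ωd (ee 1 * ee 2) = G8 := by rw [_root_.map_mul, hGe1, hGe2, Gmul_2_3]
lemma hOm9 : Ωd (ee 1 * ee 3) = G9 := by rw [_root_.map_mul, hGe1, hGe3, Gmul_2_4]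
lemma hOm10 : Ωd (ee 2 * ee 3) = G10 := by rw [_root_.map_mul, hGe2, hGe3, Gmul_3_4]
lemma hOm11 : Ωd (ee 0 * (ee 1 * ee 2)) = G11 := by rw [_root_.map_mul, hGe0, hOm8, Gmul_1_8]
lemma hOm12 : Ωd (ee 0 * (ee 1 * ee 3)) = G12 := by rw [_root_.map_mul, hGe0, hOm9, Gmul_1_9]
lemma hOm13 : Ωd (ee 0 * (ee 2 * ee 3)) = G13 := by rw [_root_.map_mul, hGe0, hOm10, Gmul_1_10]
lemma hOm14 : Ωd (ee 1 * (ee 2 * ee 3)) = G14 := by rw [_root_.map_mul, hGe1, hOm10, Gmul_2_10]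
lemma hOm15 : Ωd (ee 0 * (ee 1 * (ee 2 * ee 3))) = G15 := by rw [_root_.map_mul, hGe0, hOm14, Gmul_1_14]

noncomputable def Tmap : (CliffordAlgebra Q13 × CliffordAlgebra Q13) →ₗ[ℝ]
    Matrix (Fin 4) (Fin 4) ℂ where
  toFun xy := Ωd xy.1 + Complex.I • Ωd xy.2
  map_add' a b := by
    simp only [Prod.fst_add, Prod.snd_add, map_add, smul_add]
    abel
  map_smul' r a := by
    simp only [Prod.smul_fst, Prod.smul_snd, _root_.map_smul, RingHom.id_apply, smul_add]
    rw [smul_comm]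

lemma memT (x : CliffordAlgebra Q13) : Ωd x ∈ LinearMap.range Tmap :=
  ⟨(x, 0), by simp [Tmap]⟩

lemma smulT (c : ℂ) {A : Matrix (Fin 4) (Fin 4) ℂ} (hA : A ∈ LinearMap.range Tmap) :
    c • A ∈ LinearMap.range Tmap := by
  obtain ⟨⟨x, y⟩, rfl⟩ := hA
  refine ⟨(c.re • x - c.im • y, c.im • x + c.re • y), ?_⟩
  simp only [Tmap, LinearMap.coe_mk, AddHom.coe_mk, map_sub, map_add, _root_.map_smul]
  ext i j
  simp only [Matrix.add_apply, Matrix.sub_apply, Matrix.smul_apply, Complex.real_smul,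
    smul_eq_mul]
  rw [Complex.ext_iff]
  constructor <;>
    simp [Complex.mul_re, Complex.mul_im, Complex.add_re, Complex.add_im, Complex.sub_re,
      Complex.sub_im, Complex.I_re, Complex.I_im, Complex.ofReal_re, Complex.ofReal_im] <;>
    ring

lemma memG (k : Fin 16) : (![G0, G1, G2, G3, G4, G5, G6, G7, G8, G9, G10, G11, G12, G13,
    G14, G15]) k ∈ LinearMap.range Tmap := by
  fin_cases k

  · exact show G0 ∈ LinearMap.range Tmap by rw [← hOm0]; exact memT _
  · exact show G1 ∈ LinearMap.range Tmap by rw [← hOm1]; exact memT _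
  · exact show G2 ∈ LinearMap.range Tmap by rw [← hOm2]; exact memT _
  · exact show G3 ∈ LinearMap.range Tmap by rw [← hOm3]; exact memT _
  · exact show G4 ∈ LinearMap.range Tmap by rw [← hOm4]; exact memT _
  · exact show G5 ∈ LinearMap.range Tmap by rw [← hOm5]; exact memT _
  · exact show G6 ∈ LinearMap.range Tmap by rw [← hOm6]; exact memT _
  · exact show G7 ∈ LinearMap.range Tmap by rw [← hOm7]; exact memT _
  · exact show G8 ∈ LinearMap.range Tmap by rw [← hOm8]; exact memT _
  · exact show G9 ∈ LinearMap.range Tmap by rw [← hOm9]; exact memT _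
  · exact show G10 ∈ LinearMap.range Tmap by rw [← hOm10]; exact memT _
  · exact show G11 ∈ LinearMap.range Tmap by rw [← hOm11]; exact memT _
  · exact show G12 ∈ LinearMap.range Tmap by rw [← hOm12]; exact memT _
  · exact show G13 ∈ LinearMap.range Tmap by rw [← hOm13]; exact memT _
  · exact show G14 ∈ LinearMap.range Tmap by rw [← hOm14]; exact memT _
  · exact show G15 ∈ LinearMap.range Tmap by rw [← hOm15]; exact memT _

set_option maxHeartbeats 1000000 in
lemma comb_0_0 : Matrix.single (0 : Fin 4) (0 : Fin 4) (1 : ℂ) = ((1 : ℂ)/4) • G0 + ((1 : ℂ)/4) • G7 + ((1 : ℂ)/4 * Complex.I) • G8 + ((1 : ℂ)/4 * Complex.I) • G15 := by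
  ext i j
  fin_cases i <;> fin_cases j <;>
    simp only [G0, G7, G8, G15, Matrix.single, Matrix.add_apply, Matrix.smul_apply,
      Matrix.of_apply, Matrix.cons_val', Matrix.cons_val_zero, Matrix.cons_val_one,
      Matrix.head_cons, Matrix.head_fin_const, Matrix.empty_val', Matrix.cons_val_fin_one,
      smul_eq_mul] <;>
    norm_num [Complex.ext_iff, Fin.ext_iff,
      show ((0:Fin 4):ℕ) = 0 from rfl, show ((1:Fin 4):ℕ) = 1 from rfl,
      show ((2:Fin 4):ℕ) = 2 from rfl, show ((3:Fin 4):ℕ) = 3 from rfl]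

set_option maxHeartbeats 1000000 in
lemma comb_0_1 : Matrix.single (0 : Fin 4) (1 : Fin 4) (1 : ℂ) = ((1 : ℂ)/4) • G5 + ((1 : ℂ)/4 * Complex.I) • G6 + ((1 : ℂ)/4) • G9 + ((1 : ℂ)/4 * Complex.I) • G10 := by
  ext i j
  fin_cases i <;> fin_cases j <;>
    simp only [G5, G6, G9, G10, Matrix.single, Matrix.add_apply, Matrix.smul_apply,
      Matrix.of_apply, Matrix.cons_val', Matrix.cons_val_zero, Matrix.cons_val_one,
      Matrix.head_cons, Matrix.head_fin_const, Matrix.empty_val', Matrix.cons_val_fin_one,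
      smul_eq_mul] <;>
    norm_num [Complex.ext_iff, Fin.ext_iff,
      show ((0:Fin 4):ℕ) = 0 from rfl, show ((1:Fin 4):ℕ) = 1 from rfl,
      show ((2:Fin 4):ℕ) = 2 from rfl, show ((3:Fin 4):ℕ) = 3 from rfl]

set_option maxHeartbeats 1000000 in
lemma comb_0_2 : Matrix.single (0 : Fin 4) (2 : Fin 4) (1 : ℂ) = ((1 : ℂ)/4) • G1 + ((-1 : ℂ)/4) • G4 + ((1 : ℂ)/4 * Complex.I) • G11 + ((-1 : ℂ)/4 * Complex.I) • G14 := by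
  ext i j
  fin_cases i <;> fin_cases j <;>
    simp only [G1, G4, G11, G14, Matrix.single, Matrix.add_apply, Matrix.smul_apply,
      Matrix.of_apply, Matrix.cons_val', Matrix.cons_val_zero, Matrix.cons_val_one,
      Matrix.head_cons, Matrix.head_fin_const, Matrix.empty_val', Matrix.cons_val_fin_one,
      smul_eq_mul] <;>
    norm_num [Complex.ext_iff, Fin.ext_iff,
      show ((0:Fin 4):ℕ) = 0 from rfl, show ((1:Fin 4):ℕ) = 1 from rfl,
      show ((2:Fin 4):ℕ) = 2 from rfl, show ((3:Fin 4):ℕ) = 3 from rfl]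

set_option maxHeartbeats 1000000 in
lemma comb_0_3 : Matrix.single (0 : Fin 4) (3 : Fin 4) (1 : ℂ) = ((-1 : ℂ)/4) • G2 + ((-1 : ℂ)/4 * Complex.I) • G3 + ((1 : ℂ)/4) • G12 + ((1 : ℂ)/4 * Complex.I) • G13 := by
  ext i j
  fin_cases i <;> fin_cases j <;>
    simp only [G2, G3, G12, G13, Matrix.single, Matrix.add_apply, Matrix.smul_apply,
      Matrix.of_apply, Matrix.cons_val', Matrix.cons_val_zero, Matrix.cons_val_one,
      Matrix.head_cons, Matrix.head_fin_const, Matrix.empty_val', Matrix.cons_val_fin_one,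
      smul_eq_mul] <;>
    norm_num [Complex.ext_iff, Fin.ext_iff,
      show ((0:Fin 4):ℕ) = 0 from rfl, show ((1:Fin 4):ℕ) = 1 from rfl,
      show ((2:Fin 4):ℕ) = 2 from rfl, show ((3:Fin 4):ℕ) = 3 from rfl]

set_option maxHeartbeats 1000000 in
lemma comb_1_0 : Matrix.single (1 : Fin 4) (0 : Fin 4) (1 : ℂ) = ((1 : ℂ)/4) • G5 + ((-1 : ℂ)/4 * Complex.I) • G6 + ((-1 : ℂ)/4) • G9 + ((1 : ℂ)/4 * Complex.I) • G10 := by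
  ext i j
  fin_cases i <;> fin_cases j <;>
    simp only [G5, G6, G9, G10, Matrix.single, Matrix.add_apply, Matrix.smul_apply,
      Matrix.of_apply, Matrix.cons_val', Matrix.cons_val_zero, Matrix.cons_val_one,
      Matrix.head_cons, Matrix.head_fin_const, Matrix.empty_val', Matrix.cons_val_fin_one,
      smul_eq_mul] <;>
    norm_num [Complex.ext_iff, Fin.ext_iff,
      show ((0:Fin 4):ℕ) = 0 from rfl, show ((1:Fin 4):ℕ) = 1 from rfl,
      show ((2:Fin 4):ℕ) = 2 from rfl, show ((3:Fin 4):ℕ) = 3 from rfl]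

set_option maxHeartbeats 1000000 in
lemma comb_1_1 : Matrix.single (1 : Fin 4) (1 : Fin 4) (1 : ℂ) = ((1 : ℂ)/4) • G0 + ((-1 : ℂ)/4) • G7 + ((-1 : ℂ)/4 * Complex.I) • G8 + ((1 : ℂ)/4 * Complex.I) • G15 := by
  ext i j
  fin_cases i <;> fin_cases j <;>
    simp only [G0, G7, G8, G15, Matrix.single, Matrix.add_apply, Matrix.smul_apply,
      Matrix.of_apply, Matrix.cons_val', Matrix.cons_val_zero, Matrix.cons_val_one,
      Matrix.head_cons, Matrix.head_fin_const, Matrix.empty_val', Matrix.cons_val_fin_one,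
      smul_eq_mul] <;>
    norm_num [Complex.ext_iff, Fin.ext_iff,
      show ((0:Fin 4):ℕ) = 0 from rfl, show ((1:Fin 4):ℕ) = 1 from rfl,
      show ((2:Fin 4):ℕ) = 2 from rfl, show ((3:Fin 4):ℕ) = 3 from rfl]

set_option maxHeartbeats 1000000 in
lemma comb_1_2 : Matrix.single (1 : Fin 4) (2 : Fin 4) (1 : ℂ) = ((-1 : ℂ)/4) • G2 + ((1 : ℂ)/4 * Complex.I) • G3 + ((-1 : ℂ)/4) • G12 + ((1 : ℂ)/4 * Complex.I) • G13 := by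
  ext i j
  fin_cases i <;> fin_cases j <;>
    simp only [G2, G3, G12, G13, Matrix.single, Matrix.add_apply, Matrix.smul_apply,
      Matrix.of_apply, Matrix.cons_val', Matrix.cons_val_zero, Matrix.cons_val_one,
      Matrix.head_cons, Matrix.head_fin_const, Matrix.empty_val', Matrix.cons_val_fin_one,
      smul_eq_mul] <;>
    norm_num [Complex.ext_iff, Fin.ext_iff,
      show ((0:Fin 4):ℕ) = 0 from rfl, show ((1:Fin 4):ℕ) = 1 from rfl,
      show ((2:Fin 4):ℕ) = 2 from rfl, show ((3:Fin 4):ℕ) = 3 from rfl]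

set_option maxHeartbeats 1000000 in
lemma comb_1_3 : Matrix.single (1 : Fin 4) (3 : Fin 4) (1 : ℂ) = ((1 : ℂ)/4) • G1 + ((1 : ℂ)/4) • G4 + ((-1 : ℂ)/4 * Complex.I) • G11 + ((-1 : ℂ)/4 * Complex.I) • G14 := by
  ext i j
  fin_cases i <;> fin_cases j <;>
    simp only [G1, G4, G11, G14, Matrix.single, Matrix.add_apply, Matrix.smul_apply,
      Matrix.of_apply, Matrix.cons_val', Matrix.cons_val_zero, Matrix.cons_val_one,
      Matrix.head_cons, Matrix.head_fin_const, Matrix.empty_val', Matrix.cons_val_fin_one,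
      smul_eq_mul] <;>
    norm_num [Complex.ext_iff, Fin.ext_iff,
      show ((0:Fin 4):ℕ) = 0 from rfl, show ((1:Fin 4):ℕ) = 1 from rfl,
      show ((2:Fin 4):ℕ) = 2 from rfl, show ((3:Fin 4):ℕ) = 3 from rfl]

set_option maxHeartbeats 1000000 in
lemma comb_2_0 : Matrix.single (2 : Fin 4) (0 : Fin 4) (1 : ℂ) = ((1 : ℂ)/4) • G1 + ((1 : ℂ)/4) • G4 + ((1 : ℂ)/4 * Complex.I) • G11 + ((1 : ℂ)/4 * Complex.I) • G14 := by
  ext i j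
  fin_cases i <;> fin_cases j <;>
    simp only [G1, G4, G11, G14, Matrix.single, Matrix.add_apply, Matrix.smul_apply,
      Matrix.of_apply, Matrix.cons_val', Matrix.cons_val_zero, Matrix.cons_val_one,
      Matrix.head_cons, Matrix.head_fin_const, Matrix.empty_val', Matrix.cons_val_fin_one,
      smul_eq_mul] <;>
    norm_num [Complex.ext_iff, Fin.ext_iff,
      show ((0:Fin 4):ℕ) = 0 from rfl, show ((1:Fin 4):ℕ) = 1 from rfl,
      show ((2:Fin 4):ℕ) = 2 from rfl, show ((3:Fin 4):ℕ) = 3 from rfl]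

set_option maxHeartbeats 1000000 in
lemma comb_2_1 : Matrix.single (2 : Fin 4) (1 : Fin 4) (1 : ℂ) = ((1 : ℂ)/4) • G2 + ((1 : ℂ)/4 * Complex.I) • G3 + ((1 : ℂ)/4) • G12 + ((1 : ℂ)/4 * Complex.I) • G13 := by
  ext i j
  fin_cases i <;> fin_cases j <;>
    simp only [G2, G3, G12, G13, Matrix.single, Matrix.add_apply, Matrix.smul_apply,
      Matrix.of_apply, Matrix.cons_val', Matrix.cons_val_zero, Matrix.cons_val_one,
      Matrix.head_cons, Matrix.head_fin_const, Matrix.empty_val', Matrix.cons_val_fin_one,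
      smul_eq_mul] <;>
    norm_num [Complex.ext_iff, Fin.ext_iff,
      show ((0:Fin 4):ℕ) = 0 from rfl, show ((1:Fin 4):ℕ) = 1 from rfl,
      show ((2:Fin 4):ℕ) = 2 from rfl, show ((3:Fin 4):ℕ) = 3 from rfl]

set_option maxHeartbeats 1000000 in
lemma comb_2_2 : Matrix.single (2 : Fin 4) (2 : Fin 4) (1 : ℂ) = ((1 : ℂ)/4) • G0 + ((-1 : ℂ)/4) • G7 + ((1 : ℂ)/4 * Complex.I) • G8 + ((-1 : ℂ)/4 * Complex.I) • G15 := by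
  ext i j
  fin_cases i <;> fin_cases j <;>
    simp only [G0, G7, G8, G15, Matrix.single, Matrix.add_apply, Matrix.smul_apply,
      Matrix.of_apply, Matrix.cons_val', Matrix.cons_val_zero, Matrix.cons_val_one,
      Matrix.head_cons, Matrix.head_fin_const, Matrix.empty_val', Matrix.cons_val_fin_one,
      smul_eq_mul] <;>
    norm_num [Complex.ext_iff, Fin.ext_iff,
      show ((0:Fin 4):ℕ) = 0 from rfl, show ((1:Fin 4):ℕ) = 1 from rfl,
      show ((2:Fin 4):ℕ) = 2 from rfl, show ((3:Fin 4):ℕ) = 3 from rfl]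

set_option maxHeartbeats 1000000 in
lemma comb_2_3 : Matrix.single (2 : Fin 4) (3 : Fin 4) (1 : ℂ) = ((-1 : ℂ)/4) • G5 + ((-1 : ℂ)/4 * Complex.I) • G6 + ((1 : ℂ)/4) • G9 + ((1 : ℂ)/4 * Complex.I) • G10 := by
  ext i j
  fin_cases i <;> fin_cases j <;>
    simp only [G5, G6, G9, G10, Matrix.single, Matrix.add_apply, Matrix.smul_apply,
      Matrix.of_apply, Matrix.cons_val', Matrix.cons_val_zero, Matrix.cons_val_one,
      Matrix.head_cons, Matrix.head_fin_const, Matrix.empty_val', Matrix.cons_val_fin_one,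
      smul_eq_mul] <;>
    norm_num [Complex.ext_iff, Fin.ext_iff,
      show ((0:Fin 4):ℕ) = 0 from rfl, show ((1:Fin 4):ℕ) = 1 from rfl,
      show ((2:Fin 4):ℕ) = 2 from rfl, show ((3:Fin 4):ℕ) = 3 from rfl]

set_option maxHeartbeats 1000000 in
lemma comb_3_0 : Matrix.single (3 : Fin 4) (0 : Fin 4) (1 : ℂ) = ((1 : ℂ)/4) • G2 + ((-1 : ℂ)/4 * Complex.I) • G3 + ((-1 : ℂ)/4) • G12 + ((1 : ℂ)/4 * Complex.I) • G13 := by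
  ext i j
  fin_cases i <;> fin_cases j <;>
    simp only [G2, G3, G12, G13, Matrix.single, Matrix.add_apply, Matrix.smul_apply,
      Matrix.of_apply, Matrix.cons_val', Matrix.cons_val_zero, Matrix.cons_val_one,
      Matrix.head_cons, Matrix.head_fin_const, Matrix.empty_val', Matrix.cons_val_fin_one,
      smul_eq_mul] <;>
    norm_num [Complex.ext_iff, Fin.ext_iff,
      show ((0:Fin 4):ℕ) = 0 from rfl, show ((1:Fin 4):ℕ) = 1 from rfl,
      show ((2:Fin 4):ℕ) = 2 from rfl, show ((3:Fin 4):ℕ) = 3 from rfl]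

set_option maxHeartbeats 1000000 in
lemma comb_3_1 : Matrix.single (3 : Fin 4) (1 : Fin 4) (1 : ℂ) = ((1 : ℂ)/4) • G1 + ((-1 : ℂ)/4) • G4 + ((-1 : ℂ)/4 * Complex.I) • G11 + ((1 : ℂ)/4 * Complex.I) • G14 := by
  ext i j
  fin_cases i <;> fin_cases j <;>
    simp only [G1, G4, G11, G14, Matrix.single, Matrix.add_apply, Matrix.smul_apply,
      Matrix.of_apply, Matrix.cons_val', Matrix.cons_val_zero, Matrix.cons_val_one,
      Matrix.head_cons, Matrix.head_fin_const, Matrix.empty_val', Matrix.cons_val_fin_one,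
      smul_eq_mul] <;>
    norm_num [Complex.ext_iff, Fin.ext_iff,
      show ((0:Fin 4):ℕ) = 0 from rfl, show ((1:Fin 4):ℕ) = 1 from rfl,
      show ((2:Fin 4):ℕ) = 2 from rfl, show ((3:Fin 4):ℕ) = 3 from rfl]

set_option maxHeartbeats 1000000 in
lemma comb_3_2 : Matrix.single (3 : Fin 4) (2 : Fin 4) (1 : ℂ) = ((-1 : ℂ)/4) • G5 + ((1 : ℂ)/4 * Complex.I) • G6 + ((-1 : ℂ)/4) • G9 + ((1 : ℂ)/4 * Complex.I) • G10 := by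
  ext i j
  fin_cases i <;> fin_cases j <;>
    simp only [G5, G6, G9, G10, Matrix.single, Matrix.add_apply, Matrix.smul_apply,
      Matrix.of_apply, Matrix.cons_val', Matrix.cons_val_zero, Matrix.cons_val_one,
      Matrix.head_cons, Matrix.head_fin_const, Matrix.empty_val', Matrix.cons_val_fin_one,
      smul_eq_mul] <;>
    norm_num [Complex.ext_iff, Fin.ext_iff,
      show ((0:Fin 4):ℕ) = 0 from rfl, show ((1:Fin 4):ℕ) = 1 from rfl,
      show ((2:Fin 4):ℕ) = 2 from rfl, show ((3:Fin 4):ℕ) = 3 from rfl]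

set_option maxHeartbeats 1000000 in
lemma comb_3_3 : Matrix.single (3 : Fin 4) (3 : Fin 4) (1 : ℂ) = ((1 : ℂ)/4) • G0 + ((1 : ℂ)/4) • G7 + ((-1 : ℂ)/4 * Complex.I) • G8 + ((-1 : ℂ)/4 * Complex.I) • G15 := by
  ext i j
  fin_cases i <;> fin_cases j <;>
    simp only [G0, G7, G8, G15, Matrix.single, Matrix.add_apply, Matrix.smul_apply,
      Matrix.of_apply, Matrix.cons_val', Matrix.cons_val_zero, Matrix.cons_val_one,
      Matrix.head_cons, Matrix.head_fin_const, Matrix.empty_val', Matrix.cons_val_fin_one,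
      smul_eq_mul] <;>
    norm_num [Complex.ext_iff, Fin.ext_iff,
      show ((0:Fin 4):ℕ) = 0 from rfl, show ((1:Fin 4):ℕ) = 1 from rfl,
      show ((2:Fin 4):ℕ) = 2 from rfl, show ((3:Fin 4):ℕ) = 3 from rfl]

lemma memStd (k l : Fin 4) : Matrix.single k l (1 : ℂ) ∈ LinearMap.range Tmap := by
  fin_cases k <;> fin_cases l
  · refine show Matrix.single (0 : Fin 4) (0 : Fin 4) (1:ℂ) ∈ LinearMap.range Tmap from ?_
    rw [comb_0_0]
    exact add_mem (add_mem (add_mem (smulT _ (memG 0)) (smulT _ (memG 7)))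
      (smulT _ (memG 8))) (smulT _ (memG 15))
  · refine show Matrix.single (0 : Fin 4) (1 : Fin 4) (1:ℂ) ∈ LinearMap.range Tmap from ?_
    rw [comb_0_1]
    exact add_mem (add_mem (add_mem (smulT _ (memG 5)) (smulT _ (memG 6)))
      (smulT _ (memG 9))) (smulT _ (memG 10))
  · refine show Matrix.single (0 : Fin 4) (2 : Fin 4) (1:ℂ) ∈ LinearMap.range Tmap from ?_
    rw [comb_0_2]
    exact add_mem (add_mem (add_mem (smulT _ (memG 1)) (smulT _ (memG 4)))
      (smulT _ (memG 11))) (smulT _ (memG 14))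
  · refine show Matrix.single (0 : Fin 4) (3 : Fin 4) (1:ℂ) ∈ LinearMap.range Tmap from ?_
    rw [comb_0_3]
    exact add_mem (add_mem (add_mem (smulT _ (memG 2)) (smulT _ (memG 3)))
      (smulT _ (memG 12))) (smulT _ (memG 13))
  · refine show Matrix.single (1 : Fin 4) (0 : Fin 4) (1:ℂ) ∈ LinearMap.range Tmap from ?_
    rw [comb_1_0]
    exact add_mem (add_mem (add_mem (smulT _ (memG 5)) (smulT _ (memG 6)))
      (smulT _ (memG 9))) (smulT _ (memG 10))
  · refine show Matrix.single (1 : Fin 4) (1 : Fin 4) (1:ℂ) ∈ LinearMap.range Tmap from ?_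
    rw [comb_1_1]
    exact add_mem (add_mem (add_mem (smulT _ (memG 0)) (smulT _ (memG 7)))
      (smulT _ (memG 8))) (smulT _ (memG 15))
  · refine show Matrix.single (1 : Fin 4) (2 : Fin 4) (1:ℂ) ∈ LinearMap.range Tmap from ?_
    rw [comb_1_2]
    exact add_mem (add_mem (add_mem (smulT _ (memG 2)) (smulT _ (memG 3)))
      (smulT _ (memG 12))) (smulT _ (memG 13))
  · refine show Matrix.single (1 : Fin 4) (3 : Fin 4) (1:ℂ) ∈ LinearMap.range Tmap from ?_
    rw [comb_1_3]
    exact add_mem (add_mem (add_mem (smulT _ (memG 1)) (smulT _ (memG 4)))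
      (smulT _ (memG 11))) (smulT _ (memG 14))
  · refine show Matrix.single (2 : Fin 4) (0 : Fin 4) (1:ℂ) ∈ LinearMap.range Tmap from ?_
    rw [comb_2_0]
    exact add_mem (add_mem (add_mem (smulT _ (memG 1)) (smulT _ (memG 4)))
      (smulT _ (memG 11))) (smulT _ (memG 14))
  · refine show Matrix.single (2 : Fin 4) (1 : Fin 4) (1:ℂ) ∈ LinearMap.range Tmap from ?_
    rw [comb_2_1]
    exact add_mem (add_mem (add_mem (smulT _ (memG 2)) (smulT _ (memG 3)))
      (smulT _ (memG 12))) (smulT _ (memG 13))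
  · refine show Matrix.single (2 : Fin 4) (2 : Fin 4) (1:ℂ) ∈ LinearMap.range Tmap from ?_
    rw [comb_2_2]
    exact add_mem (add_mem (add_mem (smulT _ (memG 0)) (smulT _ (memG 7)))
      (smulT _ (memG 8))) (smulT _ (memG 15))
  · refine show Matrix.single (2 : Fin 4) (3 : Fin 4) (1:ℂ) ∈ LinearMap.range Tmap from ?_
    rw [comb_2_3]
    exact add_mem (add_mem (add_mem (smulT _ (memG 5)) (smulT _ (memG 6)))
      (smulT _ (memG 9))) (smulT _ (memG 10))
  · refine show Matrix.single (3 : Fin 4) (0 : Fin 4) (1:ℂ) ∈ LinearMap.range Tmap from ?_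
    rw [comb_3_0]
    exact add_mem (add_mem (add_mem (smulT _ (memG 2)) (smulT _ (memG 3)))
      (smulT _ (memG 12))) (smulT _ (memG 13))
  · refine show Matrix.single (3 : Fin 4) (1 : Fin 4) (1:ℂ) ∈ LinearMap.range Tmap from ?_
    rw [comb_3_1]
    exact add_mem (add_mem (add_mem (smulT _ (memG 1)) (smulT _ (memG 4)))
      (smulT _ (memG 11))) (smulT _ (memG 14))
  · refine show Matrix.single (3 : Fin 4) (2 : Fin 4) (1:ℂ) ∈ LinearMap.range Tmap from ?_
    rw [comb_3_2]
    exact add_mem (add_mem (add_mem (smulT _ (memG 5)) (smulT _ (memG 6)))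
      (smulT _ (memG 9))) (smulT _ (memG 10))
  · refine show Matrix.single (3 : Fin 4) (3 : Fin 4) (1:ℂ) ∈ LinearMap.range Tmap from ?_
    rw [comb_3_3]
    exact add_mem (add_mem (add_mem (smulT _ (memG 0)) (smulT _ (memG 7)))
      (smulT _ (memG 8))) (smulT _ (memG 15))

lemma Tsurj : Function.Surjective Tmap := by
  rw [← LinearMap.range_eq_top, eq_top_iff]
  intro A _
  rw [matrix_eq_sum_single A]
  refine Submodule.sum_mem _ fun i _ => Submodule.sum_mem _ fun j _ => ?_
  have h1 : Matrix.single i j (A i j) = A i j • Matrix.single i j 1 := by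
    ext a b
    simp [Matrix.single, Matrix.smul_apply, mul_ite]
  rw [h1]
  exact smulT _ (memStd i j)

lemma frM4 : Module.finrank ℝ (Matrix (Fin 4) (Fin 4) ℂ) = 32 := by
  rw [Module.finrank_matrix]
  simp [Complex.finrank_real_complex]

lemma Tker : LinearMap.ker Tmap = ⊥ := by
  have h1 := Tmap.finrank_range_add_finrank_ker
  rw [LinearMap.range_eq_top.mpr Tsurj, finrank_top, frM4] at h1
  have h2 : Module.finrank ℝ (CliffordAlgebra Q13 × CliffordAlgebra Q13) ≤ 32 := by
    rw [Module.finrank_prod]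
    have := finrank_cl_le
    omega
  have h3 : Module.finrank ℝ (LinearMap.ker Tmap) = 0 := by omega
  exact Submodule.finrank_eq_zero.mp h3

lemma Ωinj : Function.Injective Ωd := by
  intro x y hxy
  have hT : Tmap (x - y, 0) = 0 := by
    simp [Tmap, map_sub, hxy]
  have h0 : (x - y, (0 : CliffordAlgebra Q13)) ∈ LinearMap.ker Tmap := hT
  rw [Tker, Submodule.mem_bot] at h0
  have hx : x - y = 0 := by simpa using congrArg Prod.fst h0
  exact sub_eq_zero.mp hx

/-- There is an injective ℝ-algebra homomorphism `Ω : Cl(1,3) → M₄(ℂ)` sending the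
generators to the Dirac matrices `D₀ = [[0,σ₀],[σ₀,0]]` and `D_j = [[0,−σ_j],[σ_j,0]]`,
`j = 1,2,3` (block form, written out as explicit 4×4 matrices). -/
theorem cl13_embeds_in_M4C :
    ∃ Ω : CliffordAlgebra (Qpq 1 3) →ₐ[ℝ] Matrix (Fin 4) (Fin 4) ℂ,
      Function.Injective Ω ∧
      -- D₀ = [[0, σ₀], [σ₀, 0]]
      Ω (CliffordAlgebra.ι (Qpq 1 3) (Pi.single 0 1)) =
        !![0, 0, 1, 0; 0, 0, 0, 1; 1, 0, 0, 0; 0, 1, 0, 0] ∧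
      -- D₁ = [[0, −σ₁], [σ₁, 0]]
      Ω (CliffordAlgebra.ι (Qpq 1 3) (Pi.single 1 1)) =
        !![0, 0, 0, -1; 0, 0, -1, 0; 0, 1, 0, 0; 1, 0, 0, 0] ∧
      -- D₂ = [[0, −σ₂], [σ₂, 0]]
      Ω (CliffordAlgebra.ι (Qpq 1 3) (Pi.single 2 1)) =
        !![0, 0, 0, Complex.I; 0, 0, -Complex.I, 0;
           0, -Complex.I, 0, 0; Complex.I, 0, 0, 0] ∧
      -- D₃ = [[0, −σ₃], [σ₃, 0]]
      Ω (CliffordAlgebra.ι (Qpq 1 3) (Pi.single 3 1)) =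
        !![0, 0, -1, 0; 0, 0, 0, 1; 1, 0, 0, 0; 0, -1, 0, 0] := by
  exact ⟨Ωd, Ωinj, hGe0, hGe1, hGe2, hGe3⟩
end

section
/- Let p, q be natural numbers with n = p + q even. If p − q ≡ 0 (mod 8) or p − q ≡ 2 (mod 8), then the Clifford algebra Cl(p,q) is isomorphic as an ℝ-algebra to the matrix algebra M_{2^{n/2}}(ℝ) of real square matrices of size 2^{n/2}. -/
open Quaternion Matrix CliffordAlgebra

namespace ClAux

variable {p q : ℕ} {A : Type*} [Ring A] [Algebra ℝ A]

noncomputable def gen (p q : ℕ) (i : Fin (p + q)) : CliffordAlgebra (Qpq p q) :=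
  ι (Qpq p q) (Pi.single i 1)

lemma Qpq_single (i : Fin (p + q)) :
    Qpq p q (Pi.single i 1) = if (i : ℕ) < p then 1 else -1 := by
  rw [Qpq, QuadraticMap.weightedSumSquares_apply]
  rw [Fintype.sum_eq_single i]
  · simp
  · intro j hj
    simp [Pi.single_eq_of_ne hj]

lemma Qpq_single_add_single {i j : Fin (p + q)} (hij : i ≠ j) :
    Qpq p q (Pi.single i 1 + Pi.single j 1) =
      (if (i : ℕ) < p then 1 else -1) + (if (j : ℕ) < p then 1 else -1) := by
  rw [Qpq, QuadraticMap.weightedSumSquares_apply]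
  rw [Fintype.sum_eq_add i j hij]
  · simp [Pi.single_eq_of_ne hij, Pi.single_eq_of_ne hij.symm]
  · intro k hk
    simp [Pi.single_eq_of_ne hk.1, Pi.single_eq_of_ne hk.2]

lemma gen_mul_self (i : Fin (p + q)) :
    gen p q i * gen p q i =
      algebraMap ℝ _ (if (i : ℕ) < p then 1 else -1) := by
  rw [gen, ι_sq_scalar, Qpq_single]

lemma gen_anticomm {i j : Fin (p + q)} (h : i ≠ j) :
    gen p q i * gen p q j = -(gen p q j * gen p q i) := by
  have := ι_mul_ι_add_swap (Q := Qpq p q) (Pi.single i 1) (Pi.single j 1)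
  rw [QuadraticMap.polar] at this
  rw [Qpq_single_add_single h, Qpq_single, Qpq_single] at this
  simp only [add_sub_cancel_left, sub_self, map_zero] at this
  rw [gen, gen]
  exact eq_neg_of_add_eq_zero_left this
section LiftGen
variable {p q : ℕ} {A : Type*} [Ring A] [Algebra ℝ A]

/-- Sign pattern of `Qpq p q`. -/
def sgn (p : ℕ) (i : ℕ) : ℝ := if i < p then 1 else -1

noncomputable def genMap (a : Fin (p + q) → A) : (Fin (p + q) → ℝ) →ₗ[ℝ] A where
  toFun x := ∑ i, x i • a i
  map_add' x y := by simp [add_smul, Finset.sum_add_distrib]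
  map_smul' r x := by simp [Finset.smul_sum, smul_smul]

lemma pair_rel (a : Fin (p + q) → A)
    (hsq : ∀ i, a i * a i = algebraMap ℝ A (sgn p i))
    (hanti : ∀ i j, i ≠ j → a i * a j = -(a j * a i)) (i j : Fin (p + q)) :
    a i * a j + a j * a i = if i = j then (2 : ℝ) • algebraMap ℝ A (sgn p i) else 0 := by
  rcases eq_or_ne i j with rfl | h
  · rw [hsq, if_pos rfl, two_smul]
  · rw [if_neg h, hanti i j h, neg_add_cancel]

lemma genMap_sq (a : Fin (p + q) → A)
    (hsq : ∀ i, a i * a i = algebraMap ℝ A (sgn p i))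
    (hanti : ∀ i j, i ≠ j → a i * a j = -(a j * a i)) (x : Fin (p + q) → ℝ) :
    genMap a x * genMap a x = algebraMap ℝ A (Qpq p q x) := by
  have expand : genMap a x * genMap a x
      = ∑ i, ∑ j, (x i * x j) • (a i * a j) := by
    show (∑ i, x i • a i) * (∑ j, x j • a j) = _
    rw [Finset.sum_mul_sum]
    refine Finset.sum_congr rfl fun i _ => Finset.sum_congr rfl fun j _ => ?_
    rw [smul_mul_assoc, mul_smul_comm, smul_smul]
  have swap : (∑ i, ∑ j, (x i * x j) • (a i * a j))
      = ∑ i, ∑ j, (x j * x i) • (a j * a i) := Finset.sum_comm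
  have key : genMap a x * genMap a x + genMap a x * genMap a x
      = (2 : ℝ) • algebraMap ℝ A (Qpq p q x) := by
    rw [expand]
    nth_rewrite 2 [swap]
    rw [← Finset.sum_add_distrib]
    have : ∀ i ∈ Finset.univ, ((∑ j, (x i * x j) • (a i * a j)) + (∑ j, (x j * x i) • (a j * a i)))
        = (x i * x i) • ((2:ℝ) • algebraMap ℝ A (sgn p i)) := by
      intro i _
      rw [← Finset.sum_add_distrib]
      have : ∀ j ∈ Finset.univ, (x i * x j) • (a i * a j) + (x j * x i) • (a j * a i)
          = (x i * x j) • (if i = j then (2 : ℝ) • algebraMap ℝ A (sgn p i) else 0) := by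
        intro j _
        rw [mul_comm (x j) (x i), ← smul_add, pair_rel a hsq hanti i j]
      rw [Finset.sum_congr rfl this]
      simp
    rw [Finset.sum_congr rfl this]
    rw [Qpq, QuadraticMap.weightedSumSquares_apply, map_sum, Finset.smul_sum]
    refine Finset.sum_congr rfl fun i _ => ?_
    simp only [Algebra.algebraMap_eq_smul_one, smul_smul, sgn, smul_eq_mul]
    ring_nf
  have h2 : (2:ℝ) • (genMap a x * genMap a x) = (2:ℝ) • algebraMap ℝ A (Qpq p q x) := by
    rw [two_smul]; exact key
  have := congrArg (fun y => ((2:ℝ)⁻¹) • y) h2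
  simpa [smul_smul] using this

end LiftGen
section LiftGen2
variable {p q : ℕ} {A : Type*} [Ring A] [Algebra ℝ A]

noncomputable def liftGen (a : Fin (p + q) → A)
    (hsq : ∀ i, a i * a i = algebraMap ℝ A (sgn p i))
    (hanti : ∀ i j, i ≠ j → a i * a j = -(a j * a i)) :
    CliffordAlgebra (Qpq p q) →ₐ[ℝ] A :=
  CliffordAlgebra.lift _ ⟨genMap a, genMap_sq a hsq hanti⟩

@[simp] lemma liftGen_gen (a : Fin (p + q) → A) (hsq) (hanti) (i : Fin (p + q)) :
    liftGen a hsq hanti (gen p q i) = a i := by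
  rw [liftGen, gen, CliffordAlgebra.lift_ι_apply]
  simp only [genMap, LinearMap.coe_mk, AddHom.coe_mk]
  rw [Fintype.sum_eq_single i]
  · simp
  · intro j hj; simp [Pi.single_eq_of_ne hj]

lemma algHom_ext {f g : CliffordAlgebra (Qpq p q) →ₐ[ℝ] A}
    (h : ∀ i, f (gen p q i) = g (gen p q i)) : f = g := by
  apply CliffordAlgebra.hom_ext
  apply Module.Basis.ext (Pi.basisFun ℝ (Fin (p + q)))
  intro i
  simpa [Pi.basisFun_apply, gen] using h i

lemma sgn_eq_one {i : ℕ} (h : i < p) : sgn p i = 1 := if_pos h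
lemma sgn_eq_neg_one {i : ℕ} (h : ¬ i < p) : sgn p i = -1 := if_neg h

lemma gen_sq (i : Fin (p + q)) :
    gen p q i * gen p q i = algebraMap ℝ _ (sgn p i) := gen_mul_self i

end LiftGen2
section MatrixUnits
variable {A B : Type*} [Ring A] [Algebra ℝ A] [Ring B] [Algebra ℝ B]
variable {m : Type*} [Fintype m] [DecidableEq m]

/-- Algebra hom out of a matrix algebra, given matrix units and a commuting embedding. -/
noncomputable def matrixUnitsHom (φ : B →ₐ[ℝ] A) (E : m → m → A)
    (hE : ∀ i j k l, E i j * E k l = if j = k then E i l else 0)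
    (hone : ∑ i, E i i = 1)
    (hcomm : ∀ b i j, φ b * E i j = E i j * φ b) :
    Matrix m m B →ₐ[ℝ] A := by
  refine AlgHom.ofLinearMap
    { toFun := fun M => ∑ i, ∑ j, φ (M i j) * E i j,
      map_add' := fun M N => by
        simp [Matrix.add_apply, map_add, add_mul, Finset.sum_add_distrib],
      map_smul' := fun r M => by
        simp only [Matrix.smul_apply, _root_.map_smul, Finset.smul_sum, smul_mul_assoc,
          RingHom.id_apply] }
    ?_ ?_
  · -- map_one
    show ∑ i, ∑ j, φ ((1 : Matrix m m B) i j) * E i j = 1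
    simp only [Matrix.one_apply, apply_ite φ, _root_.map_one, _root_.map_zero, ite_mul,
      one_mul, zero_mul]
    rw [← hone]
    refine Finset.sum_congr rfl fun i _ => ?_
    rw [Finset.sum_ite_eq (Finset.univ) i (fun j => E i j)]
    simp
  · -- map_mul
    intro M N
    show ∑ i, ∑ j, φ ((M * N) i j) * E i j
        = (∑ i, ∑ j, φ (M i j) * E i j) * (∑ k, ∑ l, φ (N k l) * E k l)
    have point : ∀ (i j k l : m), φ (M i j) * E i j * (φ (N k l) * E k l)
        = φ (M i j) * (φ (N k l) * (E i j * E k l)) := by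
      intro i j k l
      rw [mul_assoc (φ (M i j)), ← mul_assoc (E i j), ← hcomm, mul_assoc (φ (N k l))]
    have rhs : (∑ i, ∑ j, φ (M i j) * E i j) * (∑ k, ∑ l, φ (N k l) * E k l)
        = ∑ i, ∑ j, ∑ k, ∑ l, φ (M i j) * (φ (N k l) * (E i j * E k l)) := by
      simp only [Finset.sum_mul, Finset.mul_sum]
      simp only [point]
      have h1 : ∀ (g : m → m → A), (∑ a, ∑ b, g a b) = ∑ b, ∑ a, g a b :=
        fun g => Finset.sum_comm
      calc ∑ a, ∑ b, ∑ c, ∑ d, φ (M c d) * (φ (N a b) * (E c d * E a b))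
          = ∑ a, ∑ c, ∑ b, ∑ d, φ (M c d) * (φ (N a b) * (E c d * E a b)) :=
            Finset.sum_congr rfl fun a _ => h1 _
        _ = ∑ c, ∑ a, ∑ b, ∑ d, φ (M c d) * (φ (N a b) * (E c d * E a b)) := h1 _
        _ = ∑ c, ∑ a, ∑ d, ∑ b, φ (M c d) * (φ (N a b) * (E c d * E a b)) :=
            Finset.sum_congr rfl fun c _ => Finset.sum_congr rfl fun a _ => h1 _
        _ = ∑ c, ∑ d, ∑ a, ∑ b, φ (M c d) * (φ (N a b) * (E c d * E a b)) :=
            Finset.sum_congr rfl fun c _ => h1 _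
    rw [rhs]
    have collapse : ∀ i, (∑ j, ∑ k, ∑ l, φ (M i j) * (φ (N k l) * (E i j * E k l)))
        = ∑ j, ∑ l, φ (M i j) * (φ (N j l) * E i l) := by
      intro i
      refine Finset.sum_congr rfl fun j _ => ?_
      rw [Finset.sum_comm]
      refine Finset.sum_congr rfl fun l _ => ?_
      rw [Finset.sum_eq_single j]
      · rw [hE]; simp
      · intro k _ hk
        rw [hE, if_neg (Ne.symm hk)]
        simp
      · simp
    simp only [collapse]
    refine Finset.sum_congr rfl fun i _ => ?_
    rw [Finset.sum_comm]
    refine Finset.sum_congr rfl fun j _ => ?_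
    rw [Matrix.mul_apply, map_sum, Finset.sum_mul]
    refine Finset.sum_congr rfl fun k _ => ?_
    rw [_root_.map_mul, mul_assoc]

@[simp] lemma matrixUnitsHom_apply (φ : B →ₐ[ℝ] A) (E : m → m → A) (hE) (hone) (hcomm)
    (M : Matrix m m B) :
    matrixUnitsHom φ E hE hone hcomm M = ∑ i, ∑ j, φ (M i j) * E i j := rfl

lemma matrixUnitsHom_stdBasisMatrix (φ : B →ₐ[ℝ] A) (E : m → m → A) (hE) (hone) (hcomm)
    (i j : m) (b : B) :
    matrixUnitsHom φ E hE hone hcomm (Matrix.single i j b) = φ b * E i j := by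
  rw [matrixUnitsHom_apply]
  rw [Finset.sum_eq_single i]
  · rw [Finset.sum_eq_single j]
    · simp [Matrix.single]
    · intro l _ hl; simp [Matrix.single, hl.symm]
    · simp
  · intro k _ hk
    apply Finset.sum_eq_zero
    intro l _
    simp [Matrix.single, hk.symm]
  · simp

end MatrixUnits
section MU2
variable {A : Type*} [Ring A] [Algebra ℝ A]

/-- 2×2 matrix units built from `u, c` with `u² = c² = 1`, `uc = -cu`. -/
noncomputable def mu2 (u c : A) : Fin 2 → Fin 2 → A := fun i j =>
  if i = 0 then (if j = 0 then ((1:ℝ)/2) • (1 + u) else ((1:ℝ)/2) • ((1 + u) * c))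
  else (if j = 0 then ((1:ℝ)/2) • (c * (1 + u)) else ((1:ℝ)/2) • (1 - u))

variable (u c : A) (hu : u * u = 1) (hc : c * c = 1) (hcu : c * u = -(u * c))

section
include hu hc hcu

lemma mu2_rel : ∀ i j k l, mu2 u c i j * mu2 u c k l = if j = k then mu2 u c i l else 0 := by
  have hu' : ∀ x : A, u * (u * x) = x := fun x => by rw [← mul_assoc, hu, one_mul]
  have hc' : ∀ x : A, c * (c * x) = x := fun x => by rw [← mul_assoc, hc, one_mul]
  have hcu' : ∀ x : A, c * (u * x) = -(u * (c * x)) := fun x => by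
    rw [← mul_assoc, hcu, ← mul_assoc, neg_mul]
  intro i j k l
  fin_cases i <;> fin_cases j <;> fin_cases k <;> fin_cases l <;>
    simp only [mu2, Fin.zero_eta, Fin.mk_one, if_true, if_false, one_ne_zero, zero_ne_one,
      ite_true, ite_false, reduceIte] <;>
    · simp only [smul_mul_assoc, mul_smul_comm, smul_smul, mul_add, add_mul, mul_sub, sub_mul,
        mul_one, one_mul, mul_assoc, hu, hc, hcu, hu', hc', hcu', mul_neg, neg_mul, smul_neg,
        neg_neg, neg_add, neg_sub, sub_eq_add_neg]
      module

lemma mu2_sum : mu2 u c 0 0 + mu2 u c 1 1 = 1 := by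
  simp only [mu2, if_true, if_false, one_ne_zero, reduceIte]
  module

lemma mu2_diff : mu2 u c 0 0 - mu2 u c 1 1 = u := by
  simp only [mu2, if_true, if_false, one_ne_zero, reduceIte]
  module

lemma mu2_off_sum : mu2 u c 0 1 + mu2 u c 1 0 = c := by
  simp only [mu2, if_true, if_false, one_ne_zero, zero_ne_one, reduceIte]
  simp only [add_mul, mul_add, one_mul, mul_one, hcu]
  module

lemma mu2_off_diff : mu2 u c 0 1 - mu2 u c 1 0 = u * c := by
  simp only [mu2, if_true, if_false, one_ne_zero, zero_ne_one, reduceIte]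
  simp only [add_mul, mul_add, one_mul, mul_one, hcu]
  module

end

lemma mu2_comm (b : A) (hbu : b * u = u * b) (hbc : b * c = c * b) (i j : Fin 2) :
    b * mu2 u c i j = mu2 u c i j * b := by
  have h1 : b * ((1:A) + u) = (1 + u) * b := by rw [mul_add, add_mul, mul_one, one_mul, hbu]
  have h2 : b * ((1:A) - u) = (1 - u) * b := by
    rw [mul_sub, sub_mul, mul_one, one_mul, hbu]
  fin_cases i <;> fin_cases j <;>
    simp only [mu2, if_true, if_false, one_ne_zero, zero_ne_one, reduceIte, Fin.zero_eta,
      Fin.mk_one, mul_smul_comm, smul_mul_assoc]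
  · rw [h1]
  · rw [← mul_assoc, h1, mul_assoc, hbc, ← mul_assoc]
  · rw [← mul_assoc, hbc, mul_assoc, h1, ← mul_assoc]
  · rw [h2]

end MU2
section Strip
variable (p q : ℕ)

/-- `!![1,0;0,-1]`. -/
noncomputable def Am : Matrix (Fin 2) (Fin 2) (CliffordAlgebra (Qpq p q)) := !![1,0;0,-1]
/-- `!![0,1;-1,0]`. -/
noncomputable def Bm : Matrix (Fin 2) (Fin 2) (CliffordAlgebra (Qpq p q)) := !![0,1;-1,0]
/-- `!![0,g;g,0]`. -/
noncomputable def Xm (g : CliffordAlgebra (Qpq p q)) :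
    Matrix (Fin 2) (Fin 2) (CliffordAlgebra (Qpq p q)) := !![0,g;g,0]

lemma algebraMap_mat (r : ℝ) :
    algebraMap ℝ (Matrix (Fin 2) (Fin 2) (CliffordAlgebra (Qpq p q))) r
      = !![algebraMap ℝ _ r,0;0,algebraMap ℝ _ r] := by
  rw [Matrix.algebraMap_eq_diagonal]
  ext i j
  fin_cases i <;> fin_cases j <;> simp [Matrix.diagonal]

lemma Am_sq : Am p q * Am p q = 1 := by
  rw [Am, Matrix.mul_fin_two, Matrix.one_fin_two]; norm_num
lemma Bm_sq : Bm p q * Bm p q = -1 := by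
  rw [Bm, Matrix.mul_fin_two, Matrix.one_fin_two]; norm_num
lemma Xm_mul (g h : CliffordAlgebra (Qpq p q)) :
    Xm p q g * Xm p q h = !![g*h,0;0,g*h] := by
  rw [Xm, Xm, Matrix.mul_fin_two]; norm_num
lemma Am_Bm_anti : Am p q * Bm p q = -(Bm p q * Am p q) := by
  rw [Am, Bm, Matrix.mul_fin_two, Matrix.mul_fin_two]
  norm_num
lemma Am_Xm_anti (g) : Am p q * Xm p q g = -(Xm p q g * Am p q) := by
  rw [Am, Xm, Matrix.mul_fin_two, Matrix.mul_fin_two]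
  norm_num
lemma Bm_Xm_anti (g) : Bm p q * Xm p q g = -(Xm p q g * Bm p q) := by
  rw [Bm, Xm, Matrix.mul_fin_two, Matrix.mul_fin_two]
  norm_num
lemma Xm_anti {g h} (hgh : g * h = -(h * g)) :
    Xm p q g * Xm p q h = -(Xm p q h * Xm p q g) := by
  rw [Xm_mul, Xm_mul, hgh]
  ext i j; fin_cases i <;> fin_cases j <;> simp

/-- embedding of old indices into new. -/
def emb (i : Fin (p + q)) : Fin (p + 1 + (q + 1)) :=
  ⟨if (i : ℕ) < p then (i : ℕ) + 1 else (i : ℕ) + 2, by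
    have := i.isLt; split_ifs <;> omega⟩

def i0 : Fin (p + 1 + (q + 1)) := ⟨0, by omega⟩
def i1 : Fin (p + 1 + (q + 1)) := ⟨p + 1, by omega⟩

lemma emb_val (i : Fin (p + q)) :
    ((emb p q i : Fin _) : ℕ) = if (i : ℕ) < p then (i : ℕ) + 1 else (i : ℕ) + 2 := by
  simp [emb]

lemma emb_ne_i0 (i : Fin (p + q)) : emb p q i ≠ i0 p q := by
  intro h
  have := congrArg (fun x : Fin (p+1+(q+1)) => (x : ℕ)) h
  simp only [emb_val, i0] at this
  split_ifs at this <;> omega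

lemma emb_ne_i1 (i : Fin (p + q)) : emb p q i ≠ i1 p q := by
  intro h
  have := congrArg (fun x : Fin (p+1+(q+1)) => (x : ℕ)) h
  have hi := i.isLt
  simp only [emb_val, i1] at this
  split_ifs at this <;> omega

lemma i0_ne_i1 : i0 p q ≠ i1 p q := by
  intro h
  have := congrArg (fun x : Fin (p+1+(q+1)) => (x : ℕ)) h
  simp only [i0, i1] at this
  omega

lemma emb_inj {i j : Fin (p + q)} (h : emb p q i = emb p q j) : i = j := by
  have := congrArg (fun x : Fin (p+1+(q+1)) => (x : ℕ)) h
  have hi := i.isLt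
  have hj := j.isLt
  simp only [emb_val] at this
  apply Fin.ext
  split_ifs at this <;> omega

lemma sgn_emb (i : Fin (p + q)) : sgn (p + 1) ((emb p q i : Fin _) : ℕ) = sgn p i := by
  have hi := i.isLt
  rw [emb_val, sgn, sgn]
  split_ifs <;> first | rfl | omega

/-- every new index is `i0`, `i1`, or an embedded old index. -/
lemma index_classify (i : Fin (p + 1 + (q + 1))) :
    i = i0 p q ∨ i = i1 p q ∨ ∃ j, i = emb p q j := by
  by_cases h0 : (i : ℕ) = 0
  · exact Or.inl (Fin.ext h0)
  by_cases h1 : (i : ℕ) = p + 1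
  · exact Or.inr (Or.inl (Fin.ext h1))
  refine Or.inr (Or.inr ⟨⟨if (i : ℕ) < p + 1 then (i : ℕ) - 1 else (i : ℕ) - 2, by
    have := i.isLt; split_ifs <;> omega⟩, ?_⟩)
  apply Fin.ext
  rw [emb_val]
  have := i.isLt
  simp only
  split_ifs <;> omega

/-- the generators for the map `Cl(p+1,q+1) → M₂(Cl(p,q))`. -/
noncomputable def aStrip : Fin (p + 1 + (q + 1)) →
    Matrix (Fin 2) (Fin 2) (CliffordAlgebra (Qpq p q)) := fun i =>
  if h0 : (i : ℕ) = 0 then Am p q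
  else if h1 : (i : ℕ) = p + 1 then Bm p q
  else Xm p q (gen p q ⟨if (i : ℕ) < p + 1 then (i : ℕ) - 1 else (i : ℕ) - 2, by
    have := i.isLt; split_ifs <;> omega⟩)

lemma aStrip_i0 : aStrip p q (i0 p q) = Am p q := by simp [aStrip, i0]
lemma aStrip_i1 : aStrip p q (i1 p q) = Bm p q := by
  rw [aStrip]; rw [dif_neg (by simp [i1]), dif_pos (by simp [i1])]
lemma aStrip_emb (i : Fin (p + q)) : aStrip p q (emb p q i) = Xm p q (gen p q i) := by
  rw [aStrip]
  rw [dif_neg (fun h : ((emb p q i : Fin (p+1+(q+1))) : ℕ) = 0 =>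
    emb_ne_i0 p q i (Fin.ext h))]
  rw [dif_neg (fun h : ((emb p q i : Fin (p+1+(q+1))) : ℕ) = p + 1 =>
    emb_ne_i1 p q i (Fin.ext h))]
  have : (⟨if ((emb p q i : Fin _) : ℕ) < p + 1 then ((emb p q i : Fin _) : ℕ) - 1
      else ((emb p q i : Fin _) : ℕ) - 2, by
        have hi := i.isLt; simp only [emb_val]; split_ifs <;> omega⟩ : Fin (p + q)) = i := by
    apply Fin.ext
    have hi := i.isLt
    simp only [emb_val]
    split_ifs <;> omega
  rw [this]

lemma aStrip_sq (i : Fin (p + 1 + (q + 1))) :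
    aStrip p q i * aStrip p q i = algebraMap ℝ _ (sgn (p + 1) i) := by
  rcases index_classify p q i with rfl | rfl | ⟨j, rfl⟩
  · rw [aStrip_i0, sgn_eq_one (by simp [i0]), _root_.map_one, Am_sq]
  · rw [aStrip_i1, sgn_eq_neg_one (by simp [i1]), _root_.map_neg, _root_.map_one, Bm_sq]
  · rw [aStrip_emb, Xm_mul, gen_sq, sgn_emb, algebraMap_mat]

lemma aStrip_anti (i j : Fin (p + 1 + (q + 1))) (hij : i ≠ j) :
    aStrip p q i * aStrip p q j = -(aStrip p q j * aStrip p q i) := by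
  have symm : ∀ {X Y : Matrix (Fin 2) (Fin 2) (CliffordAlgebra (Qpq p q))},
      X * Y = -(Y * X) → Y * X = -(X * Y) := fun h => by rw [h, neg_neg]
  rcases index_classify p q i with rfl | rfl | ⟨a, rfl⟩ <;>
    rcases index_classify p q j with rfl | rfl | ⟨b, rfl⟩
  · exact absurd rfl hij
  · rw [aStrip_i0, aStrip_i1]; exact Am_Bm_anti p q
  · rw [aStrip_i0, aStrip_emb]; exact Am_Xm_anti p q _
  · rw [aStrip_i1, aStrip_i0]; exact symm (Am_Bm_anti p q)
  · exact absurd rfl hij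
  · rw [aStrip_i1, aStrip_emb]; exact Bm_Xm_anti p q _
  · rw [aStrip_emb, aStrip_i0]; exact symm (Am_Xm_anti p q _)
  · rw [aStrip_emb, aStrip_i1]; exact symm (Bm_Xm_anti p q _)
  · rw [aStrip_emb, aStrip_emb]
    exact Xm_anti p q (gen_anticomm (fun h => hij (congrArg (emb p q) h)))

/-- The forward map `Cl(p+1,q+1) → M₂(Cl(p,q))`. -/
noncomputable def θS : CliffordAlgebra (Qpq (p + 1) (q + 1)) →ₐ[ℝ]
    Matrix (Fin 2) (Fin 2) (CliffordAlgebra (Qpq p q)) :=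
  liftGen (aStrip p q) (aStrip_sq p q) (aStrip_anti p q)

@[simp] lemma θS_gen (i) : θS p q (gen (p+1) (q+1) i) = aStrip p q i :=
  liftGen_gen _ _ _ i

end Strip
section Strip2
variable (p q : ℕ)

noncomputable def Ee : CliffordAlgebra (Qpq (p+1) (q+1)) := gen (p+1) (q+1) (i0 p q)
noncomputable def Ff : CliffordAlgebra (Qpq (p+1) (q+1)) := gen (p+1) (q+1) (i1 p q)
noncomputable def cc : CliffordAlgebra (Qpq (p+1) (q+1)) := Ee p q * Ff p q
noncomputable def Gg (i : Fin (p + q)) : CliffordAlgebra (Qpq (p+1) (q+1)) :=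
  gen (p+1) (q+1) (emb p q i)

lemma Ee_sq : Ee p q * Ee p q = 1 := by
  rw [Ee, gen_sq, sgn_eq_one (by simp [i0]), _root_.map_one]
lemma Ff_sq : Ff p q * Ff p q = -1 := by
  rw [Ff, gen_sq, sgn_eq_neg_one (by simp [i1]), _root_.map_neg, _root_.map_one]
lemma Ff_Ee : Ff p q * Ee p q = -(Ee p q * Ff p q) := by
  rw [Ff, Ee]; exact gen_anticomm (Ne.symm (i0_ne_i1 p q))
lemma Gg_Ee (i) : Gg p q i * Ee p q = -(Ee p q * Gg p q i) := by
  rw [Gg, Ee]; exact gen_anticomm (emb_ne_i0 p q i)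
lemma Gg_Ff (i) : Gg p q i * Ff p q = -(Ff p q * Gg p q i) := by
  rw [Gg, Ff]; exact gen_anticomm (emb_ne_i1 p q i)
lemma Gg_sq (i) : Gg p q i * Gg p q i = algebraMap ℝ _ (sgn p i) := by
  rw [Gg, gen_sq, sgn_emb]
lemma Gg_anti {i j} (h : i ≠ j) : Gg p q i * Gg p q j = -(Gg p q j * Gg p q i) := by
  rw [Gg, Gg]; exact gen_anticomm (fun hc => h (emb_inj p q hc))

section norm
variable {p q}

lemma Ee' : ∀ z, Ee p q * (Ee p q * z) = z := fun z => by
  rw [← mul_assoc, Ee_sq, one_mul]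
lemma Ff' : ∀ z, Ff p q * (Ff p q * z) = -z := fun z => by
  rw [← mul_assoc, Ff_sq, neg_one_mul]
lemma FfEe' : ∀ z, Ff p q * (Ee p q * z) = -(Ee p q * (Ff p q * z)) := fun z => by
  rw [← mul_assoc, Ff_Ee, neg_mul, mul_assoc]
lemma GgEe' (i) : ∀ z, Gg p q i * (Ee p q * z) = -(Ee p q * (Gg p q i * z)) := fun z => by
  rw [← mul_assoc, Gg_Ee, neg_mul, mul_assoc]
lemma GgFf' (i) : ∀ z, Gg p q i * (Ff p q * z) = -(Ff p q * (Gg p q i * z)) := fun z => by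
  rw [← mul_assoc, Gg_Ff, neg_mul, mul_assoc]

end norm

lemma cc_sq : cc p q * cc p q = 1 := by
  rw [cc]
  simp only [mul_assoc, FfEe', mul_neg, neg_mul, neg_neg, Ff', Ff_sq, Ee', Ee_sq, mul_one,
    one_mul, Ff_Ee, Gg_Ee, Gg_Ff, GgEe', GgFf']
lemma cc_Ee : cc p q * Ee p q = -(Ee p q * cc p q) := by
  rw [cc]
  simp only [mul_assoc, FfEe', mul_neg, neg_mul, neg_neg, Ff', Ff_sq, Ee', Ee_sq, mul_one,
    one_mul, Ff_Ee, Gg_Ee, Gg_Ff, GgEe', GgFf']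
lemma Ee_cc : Ee p q * cc p q = Ff p q := by
  rw [cc, Ee']
lemma cc_comm_Gg (i) : cc p q * Gg p q i = Gg p q i * cc p q := by
  rw [cc]
  simp only [mul_assoc, FfEe', mul_neg, neg_mul, neg_neg, Ff', Ff_sq, Ee', Ee_sq, mul_one,
    one_mul, Ff_Ee, Gg_Ee, Gg_Ff, GgEe', GgFf']
lemma cg_sq (i) : (cc p q * Gg p q i) * (cc p q * Gg p q i) = algebraMap ℝ _ (sgn p i) := by
  rw [cc, ← Gg_sq p q i]
  simp only [mul_assoc, FfEe', mul_neg, neg_mul, neg_neg, Ff', Ff_sq, Ee', Ee_sq, mul_one,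
    one_mul, GgEe', GgFf']
lemma cg_anti {i j} (h : i ≠ j) :
    (cc p q * Gg p q i) * (cc p q * Gg p q j)
      = -((cc p q * Gg p q j) * (cc p q * Gg p q i)) := by
  rw [cc]
  simp only [mul_assoc, FfEe', mul_neg, neg_mul, neg_neg, Ff', Ff_sq, Ee', Ee_sq, mul_one,
    one_mul, GgEe', GgFf']
  rw [Gg_anti p q h]
lemma cg_mul_Ee (i) : (cc p q * Gg p q i) * Ee p q = Ee p q * (cc p q * Gg p q i) := by
  rw [cc]
  simp only [mul_assoc, FfEe', mul_neg, neg_mul, neg_neg, Ff', Ff_sq, Ee', Ee_sq, mul_one,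
    one_mul, Gg_Ee, GgEe', GgFf']
lemma cg_mul_cc (i) : (cc p q * Gg p q i) * cc p q = Gg p q i := by
  rw [cc]
  simp only [mul_assoc, FfEe', mul_neg, neg_mul, neg_neg, Ff', Ff_sq, Ee', Ee_sq, mul_one,
    one_mul, Gg_Ee, Gg_Ff, GgEe', GgFf']
lemma cg_mul_cc' (i) : (cc p q * Gg p q i) * cc p q = cc p q * (cc p q * Gg p q i) := by
  rw [cg_mul_cc, ← mul_assoc, cc_sq, one_mul]

/-- the embedding `Cl(p,q) → Cl(p+1,q+1)`. -/
noncomputable def φS : CliffordAlgebra (Qpq p q) →ₐ[ℝ] CliffordAlgebra (Qpq (p+1) (q+1)) :=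
  liftGen (fun i => cc p q * Gg p q i) (cg_sq p q) (fun i j h => cg_anti p q h)

lemma liftGen_ι {A : Type*} [Ring A] [Algebra ℝ A] {p' q' : ℕ} (a : Fin (p' + q') → A)
    (hsq) (hanti) (x : Fin (p' + q') → ℝ) :
    liftGen a hsq hanti (ι (Qpq p' q') x) = ∑ i, x i • a i := by
  rw [liftGen, CliffordAlgebra.lift_ι_apply]; rfl

lemma φS_comm (b : CliffordAlgebra (Qpq p q)) :
    φS p q b * Ee p q = Ee p q * φS p q b ∧ φS p q b * cc p q = cc p q * φS p q b := by
  induction b using CliffordAlgebra.induction with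
  | algebraMap r =>
    rw [AlgHom.commutes]
    exact ⟨Algebra.commutes r _, Algebra.commutes r _⟩
  | ι x =>
    rw [φS, liftGen_ι]
    constructor
    · rw [Finset.sum_mul, Finset.mul_sum]
      exact Finset.sum_congr rfl fun i _ => by
        rw [smul_mul_assoc, mul_smul_comm, cg_mul_Ee]
    · rw [Finset.sum_mul, Finset.mul_sum]
      exact Finset.sum_congr rfl fun i _ => by
        rw [smul_mul_assoc, mul_smul_comm, cg_mul_cc']
  | mul a b iha ihb =>
    rw [_root_.map_mul]
    constructor
    · rw [mul_assoc, ihb.1, ← mul_assoc, iha.1, mul_assoc]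
    · rw [mul_assoc, ihb.2, ← mul_assoc, iha.2, mul_assoc]
  | add a b iha ihb =>
    rw [_root_.map_add]
    constructor
    · rw [add_mul, mul_add, iha.1, ihb.1]
    · rw [add_mul, mul_add, iha.2, ihb.2]

/-- the inverse map `M₂(Cl(p,q)) → Cl(p+1,q+1)`. -/
noncomputable def ψS : Matrix (Fin 2) (Fin 2) (CliffordAlgebra (Qpq p q)) →ₐ[ℝ]
    CliffordAlgebra (Qpq (p+1) (q+1)) :=
  matrixUnitsHom (φS p q) (mu2 (Ee p q) (cc p q))
    (mu2_rel _ _ (Ee_sq p q) (cc_sq p q) (cc_Ee p q))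
    (by rw [Fin.sum_univ_two]; exact mu2_sum _ _ (Ee_sq p q) (cc_sq p q) (cc_Ee p q))
    (fun b i j => mu2_comm _ _ (φS p q b) (φS_comm p q b).1 (φS_comm p q b).2 i j)

end Strip2
section Strip3
variable (p q : ℕ)

lemma φS_gen (j : Fin (p + q)) : φS p q (gen p q j) = cc p q * Gg p q j :=
  liftGen_gen _ _ _ j

lemma comp1 : (ψS p q).comp (θS p q) = AlgHom.id ℝ _ := by
  apply algHom_ext
  intro i
  rw [AlgHom.comp_apply, AlgHom.id_apply, θS_gen]
  rcases index_classify p q i with rfl | rfl | ⟨j, rfl⟩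
  · rw [aStrip_i0, ψS, matrixUnitsHom_apply]
    simp only [Fin.sum_univ_two]
    simp [Am]
    rw [← sub_eq_add_neg, mu2_diff _ _ (Ee_sq p q) (cc_sq p q) (cc_Ee p q)]
    rfl
  · rw [aStrip_i1, ψS, matrixUnitsHom_apply]
    simp only [Fin.sum_univ_two]
    simp [Bm]
    rw [← sub_eq_add_neg, mu2_off_diff _ _ (Ee_sq p q) (cc_sq p q) (cc_Ee p q), Ee_cc]
    rfl
  · rw [aStrip_emb, ψS, matrixUnitsHom_apply]
    simp only [Fin.sum_univ_two]
    simp [Xm, φS_gen]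
    rw [← mul_add, mu2_off_sum _ _ (Ee_sq p q) (cc_sq p q) (cc_Ee p q), cg_mul_cc]
    rfl

/-- diagonal embedding as an `AlgHom`. -/
noncomputable def diagA : CliffordAlgebra (Qpq p q) →ₐ[ℝ]
    Matrix (Fin 2) (Fin 2) (CliffordAlgebra (Qpq p q)) where
  toFun b := Matrix.diagonal (fun _ => b)
  map_one' := Matrix.diagonal_one
  map_mul' a b := by rw [Matrix.diagonal_mul_diagonal]
  map_zero' := Matrix.diagonal_zero
  map_add' a b := by rw [Matrix.diagonal_add]
  commutes' r := by
    rw [Matrix.algebraMap_eq_diagonal]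
    rfl

lemma θS_Ee : θS p q (Ee p q) = Am p q := by rw [Ee, θS_gen, aStrip_i0]
lemma θS_Ff : θS p q (Ff p q) = Bm p q := by rw [Ff, θS_gen, aStrip_i1]
lemma θS_cc : θS p q (cc p q) = Am p q * Bm p q := by
  rw [cc, _root_.map_mul, θS_Ee, θS_Ff]
lemma θS_Gg (j) : θS p q (Gg p q j) = Xm p q (gen p q j) := by
  rw [Gg, θS_gen, aStrip_emb]

lemma θφ : ∀ b, θS p q (φS p q b) = diagA p q b := by
  have : (θS p q).comp (φS p q) = diagA p q := by
    apply algHom_ext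
    intro j
    rw [AlgHom.comp_apply, φS_gen, _root_.map_mul, θS_cc, θS_Gg]
    show Am p q * Bm p q * Xm p q (gen p q j) = Matrix.diagonal _
    rw [Am, Bm, Xm, Matrix.mul_fin_two, Matrix.mul_fin_two]
    ext k l
    fin_cases k <;> fin_cases l <;> simp [Matrix.diagonal]
  exact fun b => AlgHom.congr_fun this b

lemma θE (i j : Fin 2) : θS p q (mu2 (Ee p q) (cc p q) i j)
    = Matrix.single i j (1 : CliffordAlgebra (Qpq p q)) := by
  have hA := θS_Ee p q
  have hC := θS_cc p q
  fin_cases i <;> fin_cases j <;>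
    simp only [mu2, Fin.zero_eta, Fin.mk_one, if_true, if_false, one_ne_zero, zero_ne_one,
      reduceIte, _root_.map_smul, _root_.map_add, _root_.map_sub, _root_.map_one,
      _root_.map_mul, hA, hC] <;>
    · simp only [Am, Bm]
      ext k l
      fin_cases k <;> fin_cases l <;>
        simp [Matrix.single, Matrix.mul_fin_two, Matrix.one_fin_two] <;>
        module

lemma diag_mul_sbm (b : CliffordAlgebra (Qpq p q)) (i j : Fin 2) :
    diagA p q b * Matrix.single i j (1 : CliffordAlgebra (Qpq p q))
      = Matrix.single i j b := by
  show Matrix.diagonal _ * _ = _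
  ext k l
  rw [Matrix.diagonal_mul]
  simp [Matrix.single]

lemma comp2 : (θS p q).comp (ψS p q) = AlgHom.id ℝ _ := by
  apply AlgHom.ext
  intro M
  rw [AlgHom.comp_apply, AlgHom.id_apply, ψS, matrixUnitsHom_apply, map_sum]
  simp only [map_sum, _root_.map_mul, θφ, θE, diag_mul_sbm]
  exact (Matrix.matrix_eq_sum_single M).symm

/-- `Cl(p+1,q+1) ≅ M₂(Cl(p,q))`. -/
noncomputable def stripEquiv : CliffordAlgebra (Qpq (p+1) (q+1)) ≃ₐ[ℝ]
    Matrix (Fin 2) (Fin 2) (CliffordAlgebra (Qpq p q)) :=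
  AlgEquiv.ofAlgHom (θS p q) (ψS p q) (comp2 p q) (comp1 p q)

end Strip3
section Swap
variable (p q : ℕ)

-- T-side atoms
noncomputable def HT0 : CliffordAlgebra (Qpq p (q+4)) :=
  gen p (q+4) ⟨p+0, by omega⟩
noncomputable def HT1 : CliffordAlgebra (Qpq p (q+4)) :=
  gen p (q+4) ⟨p+1, by omega⟩
noncomputable def HT2 : CliffordAlgebra (Qpq p (q+4)) :=
  gen p (q+4) ⟨p+2, by omega⟩
noncomputable def HT3 : CliffordAlgebra (Qpq p (q+4)) :=
  gen p (q+4) ⟨p+3, by omega⟩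
noncomputable def wT : CliffordAlgebra (Qpq p (q+4)) :=
  HT0 p q * (HT1 p q * (HT2 p q * HT3 p q))
lemma hT0sq : HT0 p q * HT0 p q = -1 := by
  rw [HT0, gen_sq, sgn_eq_neg_one (by simp), _root_.map_neg, _root_.map_one]
lemma hT0sq' : ∀ z, HT0 p q * (HT0 p q * z) = -z := fun z => by
  rw [← mul_assoc, hT0sq, neg_one_mul]
lemma hT1sq : HT1 p q * HT1 p q = -1 := by
  rw [HT1, gen_sq, sgn_eq_neg_one (by simp), _root_.map_neg, _root_.map_one]
lemma hT1sq' : ∀ z, HT1 p q * (HT1 p q * z) = -z := fun z => by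
  rw [← mul_assoc, hT1sq, neg_one_mul]
lemma hT2sq : HT2 p q * HT2 p q = -1 := by
  rw [HT2, gen_sq, sgn_eq_neg_one (by simp), _root_.map_neg, _root_.map_one]
lemma hT2sq' : ∀ z, HT2 p q * (HT2 p q * z) = -z := fun z => by
  rw [← mul_assoc, hT2sq, neg_one_mul]
lemma hT3sq : HT3 p q * HT3 p q = -1 := by
  rw [HT3, gen_sq, sgn_eq_neg_one (by simp), _root_.map_neg, _root_.map_one]
lemma hT3sq' : ∀ z, HT3 p q * (HT3 p q * z) = -z := fun z => by
  rw [← mul_assoc, hT3sq, neg_one_mul]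
lemma hT10 : HT1 p q * HT0 p q = -(HT0 p q * HT1 p q) := by
  rw [HT1, HT0]
  exact gen_anticomm (by intro hc; have := congrArg Fin.val hc; simp at this)
lemma hT10' : ∀ z, HT1 p q * (HT0 p q * z) = -(HT0 p q * (HT1 p q * z)) := fun z => by
  rw [← mul_assoc, hT10, neg_mul, mul_assoc]
lemma hT20 : HT2 p q * HT0 p q = -(HT0 p q * HT2 p q) := by
  rw [HT2, HT0]
  exact gen_anticomm (by intro hc; have := congrArg Fin.val hc; simp at this)
lemma hT20' : ∀ z, HT2 p q * (HT0 p q * z) = -(HT0 p q * (HT2 p q * z)) := fun z => by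
  rw [← mul_assoc, hT20, neg_mul, mul_assoc]
lemma hT21 : HT2 p q * HT1 p q = -(HT1 p q * HT2 p q) := by
  rw [HT2, HT1]
  exact gen_anticomm (by intro hc; have := congrArg Fin.val hc; simp at this)
lemma hT21' : ∀ z, HT2 p q * (HT1 p q * z) = -(HT1 p q * (HT2 p q * z)) := fun z => by
  rw [← mul_assoc, hT21, neg_mul, mul_assoc]
lemma hT30 : HT3 p q * HT0 p q = -(HT0 p q * HT3 p q) := by
  rw [HT3, HT0]
  exact gen_anticomm (by intro hc; have := congrArg Fin.val hc; simp at this)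
lemma hT30' : ∀ z, HT3 p q * (HT0 p q * z) = -(HT0 p q * (HT3 p q * z)) := fun z => by
  rw [← mul_assoc, hT30, neg_mul, mul_assoc]
lemma hT31 : HT3 p q * HT1 p q = -(HT1 p q * HT3 p q) := by
  rw [HT3, HT1]
  exact gen_anticomm (by intro hc; have := congrArg Fin.val hc; simp at this)
lemma hT31' : ∀ z, HT3 p q * (HT1 p q * z) = -(HT1 p q * (HT3 p q * z)) := fun z => by
  rw [← mul_assoc, hT31, neg_mul, mul_assoc]
lemma hT32 : HT3 p q * HT2 p q = -(HT2 p q * HT3 p q) := by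
  rw [HT3, HT2]
  exact gen_anticomm (by intro hc; have := congrArg Fin.val hc; simp at this)
lemma hT32' : ∀ z, HT3 p q * (HT2 p q * z) = -(HT2 p q * (HT3 p q * z)) := fun z => by
  rw [← mul_assoc, hT32, neg_mul, mul_assoc]
lemma sqwT0 : (HT0 p q * wT p q) * (HT0 p q * wT p q) = 1 := by
  simp only [wT, mul_assoc, hT0sq, hT1sq, hT2sq, hT3sq, hT0sq', hT1sq', hT2sq', hT3sq', hT10, hT20, hT21, hT30, hT31, hT32, hT10', hT20', hT21', hT30', hT31', hT32', mul_neg, neg_mul, neg_neg, mul_one, one_mul]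
lemma sqwT1 : (HT1 p q * wT p q) * (HT1 p q * wT p q) = 1 := by
  simp only [wT, mul_assoc, hT0sq, hT1sq, hT2sq, hT3sq, hT0sq', hT1sq', hT2sq', hT3sq', hT10, hT20, hT21, hT30, hT31, hT32, hT10', hT20', hT21', hT30', hT31', hT32', mul_neg, neg_mul, neg_neg, mul_one, one_mul]
lemma sqwT2 : (HT2 p q * wT p q) * (HT2 p q * wT p q) = 1 := by
  simp only [wT, mul_assoc, hT0sq, hT1sq, hT2sq, hT3sq, hT0sq', hT1sq', hT2sq', hT3sq', hT10, hT20, hT21, hT30, hT31, hT32, hT10', hT20', hT21', hT30', hT31', hT32', mul_neg, neg_mul, neg_neg, mul_one, one_mul]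
lemma sqwT3 : (HT3 p q * wT p q) * (HT3 p q * wT p q) = 1 := by
  simp only [wT, mul_assoc, hT0sq, hT1sq, hT2sq, hT3sq, hT0sq', hT1sq', hT2sq', hT3sq', hT10, hT20, hT21, hT30, hT31, hT32, hT10', hT20', hT21', hT30', hT31', hT32', mul_neg, neg_mul, neg_neg, mul_one, one_mul]
lemma antiwT01 : (HT0 p q * wT p q) * (HT1 p q * wT p q) = -((HT1 p q * wT p q) * (HT0 p q * wT p q)) := by
  simp only [wT, mul_assoc, hT0sq, hT1sq, hT2sq, hT3sq, hT0sq', hT1sq', hT2sq', hT3sq', hT10, hT20, hT21, hT30, hT31, hT32, hT10', hT20', hT21', hT30', hT31', hT32', mul_neg, neg_mul, neg_neg, mul_one, one_mul]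
lemma antiwT02 : (HT0 p q * wT p q) * (HT2 p q * wT p q) = -((HT2 p q * wT p q) * (HT0 p q * wT p q)) := by
  simp only [wT, mul_assoc, hT0sq, hT1sq, hT2sq, hT3sq, hT0sq', hT1sq', hT2sq', hT3sq', hT10, hT20, hT21, hT30, hT31, hT32, hT10', hT20', hT21', hT30', hT31', hT32', mul_neg, neg_mul, neg_neg, mul_one, one_mul]
lemma antiwT03 : (HT0 p q * wT p q) * (HT3 p q * wT p q) = -((HT3 p q * wT p q) * (HT0 p q * wT p q)) := by
  simp only [wT, mul_assoc, hT0sq, hT1sq, hT2sq, hT3sq, hT0sq', hT1sq', hT2sq', hT3sq', hT10, hT20, hT21, hT30, hT31, hT32, hT10', hT20', hT21', hT30', hT31', hT32', mul_neg, neg_mul, neg_neg, mul_one, one_mul]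
lemma antiwT10 : (HT1 p q * wT p q) * (HT0 p q * wT p q) = -((HT0 p q * wT p q) * (HT1 p q * wT p q)) := by
  simp only [wT, mul_assoc, hT0sq, hT1sq, hT2sq, hT3sq, hT0sq', hT1sq', hT2sq', hT3sq', hT10, hT20, hT21, hT30, hT31, hT32, hT10', hT20', hT21', hT30', hT31', hT32', mul_neg, neg_mul, neg_neg, mul_one, one_mul]
lemma antiwT12 : (HT1 p q * wT p q) * (HT2 p q * wT p q) = -((HT2 p q * wT p q) * (HT1 p q * wT p q)) := by
  simp only [wT, mul_assoc, hT0sq, hT1sq, hT2sq, hT3sq, hT0sq', hT1sq', hT2sq', hT3sq', hT10, hT20, hT21, hT30, hT31, hT32, hT10', hT20', hT21', hT30', hT31', hT32', mul_neg, neg_mul, neg_neg, mul_one, one_mul]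
lemma antiwT13 : (HT1 p q * wT p q) * (HT3 p q * wT p q) = -((HT3 p q * wT p q) * (HT1 p q * wT p q)) := by
  simp only [wT, mul_assoc, hT0sq, hT1sq, hT2sq, hT3sq, hT0sq', hT1sq', hT2sq', hT3sq', hT10, hT20, hT21, hT30, hT31, hT32, hT10', hT20', hT21', hT30', hT31', hT32', mul_neg, neg_mul, neg_neg, mul_one, one_mul]
lemma antiwT20 : (HT2 p q * wT p q) * (HT0 p q * wT p q) = -((HT0 p q * wT p q) * (HT2 p q * wT p q)) := by
  simp only [wT, mul_assoc, hT0sq, hT1sq, hT2sq, hT3sq, hT0sq', hT1sq', hT2sq', hT3sq', hT10, hT20, hT21, hT30, hT31, hT32, hT10', hT20', hT21', hT30', hT31', hT32', mul_neg, neg_mul, neg_neg, mul_one, one_mul]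
lemma antiwT21 : (HT2 p q * wT p q) * (HT1 p q * wT p q) = -((HT1 p q * wT p q) * (HT2 p q * wT p q)) := by
  simp only [wT, mul_assoc, hT0sq, hT1sq, hT2sq, hT3sq, hT0sq', hT1sq', hT2sq', hT3sq', hT10, hT20, hT21, hT30, hT31, hT32, hT10', hT20', hT21', hT30', hT31', hT32', mul_neg, neg_mul, neg_neg, mul_one, one_mul]
lemma antiwT23 : (HT2 p q * wT p q) * (HT3 p q * wT p q) = -((HT3 p q * wT p q) * (HT2 p q * wT p q)) := by
  simp only [wT, mul_assoc, hT0sq, hT1sq, hT2sq, hT3sq, hT0sq', hT1sq', hT2sq', hT3sq', hT10, hT20, hT21, hT30, hT31, hT32, hT10', hT20', hT21', hT30', hT31', hT32', mul_neg, neg_mul, neg_neg, mul_one, one_mul]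
lemma antiwT30 : (HT3 p q * wT p q) * (HT0 p q * wT p q) = -((HT0 p q * wT p q) * (HT3 p q * wT p q)) := by
  simp only [wT, mul_assoc, hT0sq, hT1sq, hT2sq, hT3sq, hT0sq', hT1sq', hT2sq', hT3sq', hT10, hT20, hT21, hT30, hT31, hT32, hT10', hT20', hT21', hT30', hT31', hT32', mul_neg, neg_mul, neg_neg, mul_one, one_mul]
lemma antiwT31 : (HT3 p q * wT p q) * (HT1 p q * wT p q) = -((HT1 p q * wT p q) * (HT3 p q * wT p q)) := by
  simp only [wT, mul_assoc, hT0sq, hT1sq, hT2sq, hT3sq, hT0sq', hT1sq', hT2sq', hT3sq', hT10, hT20, hT21, hT30, hT31, hT32, hT10', hT20', hT21', hT30', hT31', hT32', mul_neg, neg_mul, neg_neg, mul_one, one_mul]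
lemma antiwT32 : (HT3 p q * wT p q) * (HT2 p q * wT p q) = -((HT2 p q * wT p q) * (HT3 p q * wT p q)) := by
  simp only [wT, mul_assoc, hT0sq, hT1sq, hT2sq, hT3sq, hT0sq', hT1sq', hT2sq', hT3sq', hT10, hT20, hT21, hT30, hT31, hT32, hT10', hT20', hT21', hT30', hT31', hT32', mul_neg, neg_mul, neg_neg, mul_one, one_mul]
lemma mixwT0 (x : CliffordAlgebra (Qpq p (q+4))) (hx0 : x * HT0 p q = -(HT0 p q * x)) (hx1 : x * HT1 p q = -(HT1 p q * x)) (hx2 : x * HT2 p q = -(HT2 p q * x)) (hx3 : x * HT3 p q = -(HT3 p q * x)) :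
    x * (HT0 p q * wT p q) = -((HT0 p q * wT p q) * x) := by
  have hx0' : ∀ z, x * (HT0 p q * z) = -(HT0 p q * (x * z)) := fun z => by
    rw [← mul_assoc, hx0, neg_mul, mul_assoc]
  have hx1' : ∀ z, x * (HT1 p q * z) = -(HT1 p q * (x * z)) := fun z => by
    rw [← mul_assoc, hx1, neg_mul, mul_assoc]
  have hx2' : ∀ z, x * (HT2 p q * z) = -(HT2 p q * (x * z)) := fun z => by
    rw [← mul_assoc, hx2, neg_mul, mul_assoc]
  have hx3' : ∀ z, x * (HT3 p q * z) = -(HT3 p q * (x * z)) := fun z => by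
    rw [← mul_assoc, hx3, neg_mul, mul_assoc]
  simp only [wT, mul_assoc, hT0sq, hT1sq, hT2sq, hT3sq, hT0sq', hT1sq', hT2sq', hT3sq', hT10, hT20, hT21, hT30, hT31, hT32, hT10', hT20', hT21', hT30', hT31', hT32', hx0, hx1, hx2, hx3, hx0', hx1', hx2', hx3', mul_neg, neg_mul, neg_neg, mul_one, one_mul]
lemma mixwT1 (x : CliffordAlgebra (Qpq p (q+4))) (hx0 : x * HT0 p q = -(HT0 p q * x)) (hx1 : x * HT1 p q = -(HT1 p q * x)) (hx2 : x * HT2 p q = -(HT2 p q * x)) (hx3 : x * HT3 p q = -(HT3 p q * x)) :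
    x * (HT1 p q * wT p q) = -((HT1 p q * wT p q) * x) := by
  have hx0' : ∀ z, x * (HT0 p q * z) = -(HT0 p q * (x * z)) := fun z => by
    rw [← mul_assoc, hx0, neg_mul, mul_assoc]
  have hx1' : ∀ z, x * (HT1 p q * z) = -(HT1 p q * (x * z)) := fun z => by
    rw [← mul_assoc, hx1, neg_mul, mul_assoc]
  have hx2' : ∀ z, x * (HT2 p q * z) = -(HT2 p q * (x * z)) := fun z => by
    rw [← mul_assoc, hx2, neg_mul, mul_assoc]
  have hx3' : ∀ z, x * (HT3 p q * z) = -(HT3 p q * (x * z)) := fun z => by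
    rw [← mul_assoc, hx3, neg_mul, mul_assoc]
  simp only [wT, mul_assoc, hT0sq, hT1sq, hT2sq, hT3sq, hT0sq', hT1sq', hT2sq', hT3sq', hT10, hT20, hT21, hT30, hT31, hT32, hT10', hT20', hT21', hT30', hT31', hT32', hx0, hx1, hx2, hx3, hx0', hx1', hx2', hx3', mul_neg, neg_mul, neg_neg, mul_one, one_mul]
lemma mixwT2 (x : CliffordAlgebra (Qpq p (q+4))) (hx0 : x * HT0 p q = -(HT0 p q * x)) (hx1 : x * HT1 p q = -(HT1 p q * x)) (hx2 : x * HT2 p q = -(HT2 p q * x)) (hx3 : x * HT3 p q = -(HT3 p q * x)) :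
    x * (HT2 p q * wT p q) = -((HT2 p q * wT p q) * x) := by
  have hx0' : ∀ z, x * (HT0 p q * z) = -(HT0 p q * (x * z)) := fun z => by
    rw [← mul_assoc, hx0, neg_mul, mul_assoc]
  have hx1' : ∀ z, x * (HT1 p q * z) = -(HT1 p q * (x * z)) := fun z => by
    rw [← mul_assoc, hx1, neg_mul, mul_assoc]
  have hx2' : ∀ z, x * (HT2 p q * z) = -(HT2 p q * (x * z)) := fun z => by
    rw [← mul_assoc, hx2, neg_mul, mul_assoc]
  have hx3' : ∀ z, x * (HT3 p q * z) = -(HT3 p q * (x * z)) := fun z => by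
    rw [← mul_assoc, hx3, neg_mul, mul_assoc]
  simp only [wT, mul_assoc, hT0sq, hT1sq, hT2sq, hT3sq, hT0sq', hT1sq', hT2sq', hT3sq', hT10, hT20, hT21, hT30, hT31, hT32, hT10', hT20', hT21', hT30', hT31', hT32', hx0, hx1, hx2, hx3, hx0', hx1', hx2', hx3', mul_neg, neg_mul, neg_neg, mul_one, one_mul]
lemma mixwT3 (x : CliffordAlgebra (Qpq p (q+4))) (hx0 : x * HT0 p q = -(HT0 p q * x)) (hx1 : x * HT1 p q = -(HT1 p q * x)) (hx2 : x * HT2 p q = -(HT2 p q * x)) (hx3 : x * HT3 p q = -(HT3 p q * x)) :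
    x * (HT3 p q * wT p q) = -((HT3 p q * wT p q) * x) := by
  have hx0' : ∀ z, x * (HT0 p q * z) = -(HT0 p q * (x * z)) := fun z => by
    rw [← mul_assoc, hx0, neg_mul, mul_assoc]
  have hx1' : ∀ z, x * (HT1 p q * z) = -(HT1 p q * (x * z)) := fun z => by
    rw [← mul_assoc, hx1, neg_mul, mul_assoc]
  have hx2' : ∀ z, x * (HT2 p q * z) = -(HT2 p q * (x * z)) := fun z => by
    rw [← mul_assoc, hx2, neg_mul, mul_assoc]
  have hx3' : ∀ z, x * (HT3 p q * z) = -(HT3 p q * (x * z)) := fun z => by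
    rw [← mul_assoc, hx3, neg_mul, mul_assoc]
  simp only [wT, mul_assoc, hT0sq, hT1sq, hT2sq, hT3sq, hT0sq', hT1sq', hT2sq', hT3sq', hT10, hT20, hT21, hT30, hT31, hT32, hT10', hT20', hT21', hT30', hT31', hT32', hx0, hx1, hx2, hx3, hx0', hx1', hx2', hx3', mul_neg, neg_mul, neg_neg, mul_one, one_mul]
lemma fivewT0 : (HT0 p q * wT p q) * ((HT0 p q * wT p q) * ((HT1 p q * wT p q) * ((HT2 p q * wT p q) * (HT3 p q * wT p q)))) = HT0 p q := by
  simp only [wT, mul_assoc, hT0sq, hT1sq, hT2sq, hT3sq, hT0sq', hT1sq', hT2sq', hT3sq', hT10, hT20, hT21, hT30, hT31, hT32, hT10', hT20', hT21', hT30', hT31', hT32', mul_neg, neg_mul, neg_neg, mul_one, one_mul]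
lemma fivewT1 : (HT1 p q * wT p q) * ((HT0 p q * wT p q) * ((HT1 p q * wT p q) * ((HT2 p q * wT p q) * (HT3 p q * wT p q)))) = HT1 p q := by
  simp only [wT, mul_assoc, hT0sq, hT1sq, hT2sq, hT3sq, hT0sq', hT1sq', hT2sq', hT3sq', hT10, hT20, hT21, hT30, hT31, hT32, hT10', hT20', hT21', hT30', hT31', hT32', mul_neg, neg_mul, neg_neg, mul_one, one_mul]
lemma fivewT2 : (HT2 p q * wT p q) * ((HT0 p q * wT p q) * ((HT1 p q * wT p q) * ((HT2 p q * wT p q) * (HT3 p q * wT p q)))) = HT2 p q := by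
  simp only [wT, mul_assoc, hT0sq, hT1sq, hT2sq, hT3sq, hT0sq', hT1sq', hT2sq', hT3sq', hT10, hT20, hT21, hT30, hT31, hT32, hT10', hT20', hT21', hT30', hT31', hT32', mul_neg, neg_mul, neg_neg, mul_one, one_mul]
lemma fivewT3 : (HT3 p q * wT p q) * ((HT0 p q * wT p q) * ((HT1 p q * wT p q) * ((HT2 p q * wT p q) * (HT3 p q * wT p q)))) = HT3 p q := by
  simp only [wT, mul_assoc, hT0sq, hT1sq, hT2sq, hT3sq, hT0sq', hT1sq', hT2sq', hT3sq', hT10, hT20, hT21, hT30, hT31, hT32, hT10', hT20', hT21', hT30', hT31', hT32', mul_neg, neg_mul, neg_neg, mul_one, one_mul]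

-- S-side atoms
noncomputable def HS0 : CliffordAlgebra (Qpq (p+4) q) :=
  gen (p+4) q ⟨p+0, by omega⟩
noncomputable def HS1 : CliffordAlgebra (Qpq (p+4) q) :=
  gen (p+4) q ⟨p+1, by omega⟩
noncomputable def HS2 : CliffordAlgebra (Qpq (p+4) q) :=
  gen (p+4) q ⟨p+2, by omega⟩
noncomputable def HS3 : CliffordAlgebra (Qpq (p+4) q) :=
  gen (p+4) q ⟨p+3, by omega⟩
noncomputable def wS : CliffordAlgebra (Qpq (p+4) q) :=
  HS0 p q * (HS1 p q * (HS2 p q * HS3 p q))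
lemma hS0sq : HS0 p q * HS0 p q = 1 := by
  rw [HS0, gen_sq, sgn_eq_one (by simp), _root_.map_one]
lemma hS0sq' : ∀ z, HS0 p q * (HS0 p q * z) = z := fun z => by
  rw [← mul_assoc, hS0sq, one_mul]
lemma hS1sq : HS1 p q * HS1 p q = 1 := by
  rw [HS1, gen_sq, sgn_eq_one (by simp), _root_.map_one]
lemma hS1sq' : ∀ z, HS1 p q * (HS1 p q * z) = z := fun z => by
  rw [← mul_assoc, hS1sq, one_mul]
lemma hS2sq : HS2 p q * HS2 p q = 1 := by
  rw [HS2, gen_sq, sgn_eq_one (by simp), _root_.map_one]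
lemma hS2sq' : ∀ z, HS2 p q * (HS2 p q * z) = z := fun z => by
  rw [← mul_assoc, hS2sq, one_mul]
lemma hS3sq : HS3 p q * HS3 p q = 1 := by
  rw [HS3, gen_sq, sgn_eq_one (by simp), _root_.map_one]
lemma hS3sq' : ∀ z, HS3 p q * (HS3 p q * z) = z := fun z => by
  rw [← mul_assoc, hS3sq, one_mul]
lemma hS10 : HS1 p q * HS0 p q = -(HS0 p q * HS1 p q) := by
  rw [HS1, HS0]
  exact gen_anticomm (by intro hc; have := congrArg Fin.val hc; simp at this)
lemma hS10' : ∀ z, HS1 p q * (HS0 p q * z) = -(HS0 p q * (HS1 p q * z)) := fun z => by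
  rw [← mul_assoc, hS10, neg_mul, mul_assoc]
lemma hS20 : HS2 p q * HS0 p q = -(HS0 p q * HS2 p q) := by
  rw [HS2, HS0]
  exact gen_anticomm (by intro hc; have := congrArg Fin.val hc; simp at this)
lemma hS20' : ∀ z, HS2 p q * (HS0 p q * z) = -(HS0 p q * (HS2 p q * z)) := fun z => by
  rw [← mul_assoc, hS20, neg_mul, mul_assoc]
lemma hS21 : HS2 p q * HS1 p q = -(HS1 p q * HS2 p q) := by
  rw [HS2, HS1]
  exact gen_anticomm (by intro hc; have := congrArg Fin.val hc; simp at this)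
lemma hS21' : ∀ z, HS2 p q * (HS1 p q * z) = -(HS1 p q * (HS2 p q * z)) := fun z => by
  rw [← mul_assoc, hS21, neg_mul, mul_assoc]
lemma hS30 : HS3 p q * HS0 p q = -(HS0 p q * HS3 p q) := by
  rw [HS3, HS0]
  exact gen_anticomm (by intro hc; have := congrArg Fin.val hc; simp at this)
lemma hS30' : ∀ z, HS3 p q * (HS0 p q * z) = -(HS0 p q * (HS3 p q * z)) := fun z => by
  rw [← mul_assoc, hS30, neg_mul, mul_assoc]
lemma hS31 : HS3 p q * HS1 p q = -(HS1 p q * HS3 p q) := by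
  rw [HS3, HS1]
  exact gen_anticomm (by intro hc; have := congrArg Fin.val hc; simp at this)
lemma hS31' : ∀ z, HS3 p q * (HS1 p q * z) = -(HS1 p q * (HS3 p q * z)) := fun z => by
  rw [← mul_assoc, hS31, neg_mul, mul_assoc]
lemma hS32 : HS3 p q * HS2 p q = -(HS2 p q * HS3 p q) := by
  rw [HS3, HS2]
  exact gen_anticomm (by intro hc; have := congrArg Fin.val hc; simp at this)
lemma hS32' : ∀ z, HS3 p q * (HS2 p q * z) = -(HS2 p q * (HS3 p q * z)) := fun z => by
  rw [← mul_assoc, hS32, neg_mul, mul_assoc]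
lemma sqwS0 : (HS0 p q * wS p q) * (HS0 p q * wS p q) = -1 := by
  simp only [wS, mul_assoc, hS0sq, hS1sq, hS2sq, hS3sq, hS0sq', hS1sq', hS2sq', hS3sq', hS10, hS20, hS21, hS30, hS31, hS32, hS10', hS20', hS21', hS30', hS31', hS32', mul_neg, neg_mul, neg_neg, mul_one, one_mul]
lemma sqwS1 : (HS1 p q * wS p q) * (HS1 p q * wS p q) = -1 := by
  simp only [wS, mul_assoc, hS0sq, hS1sq, hS2sq, hS3sq, hS0sq', hS1sq', hS2sq', hS3sq', hS10, hS20, hS21, hS30, hS31, hS32, hS10', hS20', hS21', hS30', hS31', hS32', mul_neg, neg_mul, neg_neg, mul_one, one_mul]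
lemma sqwS2 : (HS2 p q * wS p q) * (HS2 p q * wS p q) = -1 := by
  simp only [wS, mul_assoc, hS0sq, hS1sq, hS2sq, hS3sq, hS0sq', hS1sq', hS2sq', hS3sq', hS10, hS20, hS21, hS30, hS31, hS32, hS10', hS20', hS21', hS30', hS31', hS32', mul_neg, neg_mul, neg_neg, mul_one, one_mul]
lemma sqwS3 : (HS3 p q * wS p q) * (HS3 p q * wS p q) = -1 := by
  simp only [wS, mul_assoc, hS0sq, hS1sq, hS2sq, hS3sq, hS0sq', hS1sq', hS2sq', hS3sq', hS10, hS20, hS21, hS30, hS31, hS32, hS10', hS20', hS21', hS30', hS31', hS32', mul_neg, neg_mul, neg_neg, mul_one, one_mul]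
lemma antiwS01 : (HS0 p q * wS p q) * (HS1 p q * wS p q) = -((HS1 p q * wS p q) * (HS0 p q * wS p q)) := by
  simp only [wS, mul_assoc, hS0sq, hS1sq, hS2sq, hS3sq, hS0sq', hS1sq', hS2sq', hS3sq', hS10, hS20, hS21, hS30, hS31, hS32, hS10', hS20', hS21', hS30', hS31', hS32', mul_neg, neg_mul, neg_neg, mul_one, one_mul]
lemma antiwS02 : (HS0 p q * wS p q) * (HS2 p q * wS p q) = -((HS2 p q * wS p q) * (HS0 p q * wS p q)) := by
  simp only [wS, mul_assoc, hS0sq, hS1sq, hS2sq, hS3sq, hS0sq', hS1sq', hS2sq', hS3sq', hS10, hS20, hS21, hS30, hS31, hS32, hS10', hS20', hS21', hS30', hS31', hS32', mul_neg, neg_mul, neg_neg, mul_one, one_mul]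
lemma antiwS03 : (HS0 p q * wS p q) * (HS3 p q * wS p q) = -((HS3 p q * wS p q) * (HS0 p q * wS p q)) := by
  simp only [wS, mul_assoc, hS0sq, hS1sq, hS2sq, hS3sq, hS0sq', hS1sq', hS2sq', hS3sq', hS10, hS20, hS21, hS30, hS31, hS32, hS10', hS20', hS21', hS30', hS31', hS32', mul_neg, neg_mul, neg_neg, mul_one, one_mul]
lemma antiwS10 : (HS1 p q * wS p q) * (HS0 p q * wS p q) = -((HS0 p q * wS p q) * (HS1 p q * wS p q)) := by
  simp only [wS, mul_assoc, hS0sq, hS1sq, hS2sq, hS3sq, hS0sq', hS1sq', hS2sq', hS3sq', hS10, hS20, hS21, hS30, hS31, hS32, hS10', hS20', hS21', hS30', hS31', hS32', mul_neg, neg_mul, neg_neg, mul_one, one_mul]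
lemma antiwS12 : (HS1 p q * wS p q) * (HS2 p q * wS p q) = -((HS2 p q * wS p q) * (HS1 p q * wS p q)) := by
  simp only [wS, mul_assoc, hS0sq, hS1sq, hS2sq, hS3sq, hS0sq', hS1sq', hS2sq', hS3sq', hS10, hS20, hS21, hS30, hS31, hS32, hS10', hS20', hS21', hS30', hS31', hS32', mul_neg, neg_mul, neg_neg, mul_one, one_mul]
lemma antiwS13 : (HS1 p q * wS p q) * (HS3 p q * wS p q) = -((HS3 p q * wS p q) * (HS1 p q * wS p q)) := by
  simp only [wS, mul_assoc, hS0sq, hS1sq, hS2sq, hS3sq, hS0sq', hS1sq', hS2sq', hS3sq', hS10, hS20, hS21, hS30, hS31, hS32, hS10', hS20', hS21', hS30', hS31', hS32', mul_neg, neg_mul, neg_neg, mul_one, one_mul]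
lemma antiwS20 : (HS2 p q * wS p q) * (HS0 p q * wS p q) = -((HS0 p q * wS p q) * (HS2 p q * wS p q)) := by
  simp only [wS, mul_assoc, hS0sq, hS1sq, hS2sq, hS3sq, hS0sq', hS1sq', hS2sq', hS3sq', hS10, hS20, hS21, hS30, hS31, hS32, hS10', hS20', hS21', hS30', hS31', hS32', mul_neg, neg_mul, neg_neg, mul_one, one_mul]
lemma antiwS21 : (HS2 p q * wS p q) * (HS1 p q * wS p q) = -((HS1 p q * wS p q) * (HS2 p q * wS p q)) := by
  simp only [wS, mul_assoc, hS0sq, hS1sq, hS2sq, hS3sq, hS0sq', hS1sq', hS2sq', hS3sq', hS10, hS20, hS21, hS30, hS31, hS32, hS10', hS20', hS21', hS30', hS31', hS32', mul_neg, neg_mul, neg_neg, mul_one, one_mul]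
lemma antiwS23 : (HS2 p q * wS p q) * (HS3 p q * wS p q) = -((HS3 p q * wS p q) * (HS2 p q * wS p q)) := by
  simp only [wS, mul_assoc, hS0sq, hS1sq, hS2sq, hS3sq, hS0sq', hS1sq', hS2sq', hS3sq', hS10, hS20, hS21, hS30, hS31, hS32, hS10', hS20', hS21', hS30', hS31', hS32', mul_neg, neg_mul, neg_neg, mul_one, one_mul]
lemma antiwS30 : (HS3 p q * wS p q) * (HS0 p q * wS p q) = -((HS0 p q * wS p q) * (HS3 p q * wS p q)) := by
  simp only [wS, mul_assoc, hS0sq, hS1sq, hS2sq, hS3sq, hS0sq', hS1sq', hS2sq', hS3sq', hS10, hS20, hS21, hS30, hS31, hS32, hS10', hS20', hS21', hS30', hS31', hS32', mul_neg, neg_mul, neg_neg, mul_one, one_mul]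
lemma antiwS31 : (HS3 p q * wS p q) * (HS1 p q * wS p q) = -((HS1 p q * wS p q) * (HS3 p q * wS p q)) := by
  simp only [wS, mul_assoc, hS0sq, hS1sq, hS2sq, hS3sq, hS0sq', hS1sq', hS2sq', hS3sq', hS10, hS20, hS21, hS30, hS31, hS32, hS10', hS20', hS21', hS30', hS31', hS32', mul_neg, neg_mul, neg_neg, mul_one, one_mul]
lemma antiwS32 : (HS3 p q * wS p q) * (HS2 p q * wS p q) = -((HS2 p q * wS p q) * (HS3 p q * wS p q)) := by
  simp only [wS, mul_assoc, hS0sq, hS1sq, hS2sq, hS3sq, hS0sq', hS1sq', hS2sq', hS3sq', hS10, hS20, hS21, hS30, hS31, hS32, hS10', hS20', hS21', hS30', hS31', hS32', mul_neg, neg_mul, neg_neg, mul_one, one_mul]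
lemma mixwS0 (x : CliffordAlgebra (Qpq (p+4) q)) (hx0 : x * HS0 p q = -(HS0 p q * x)) (hx1 : x * HS1 p q = -(HS1 p q * x)) (hx2 : x * HS2 p q = -(HS2 p q * x)) (hx3 : x * HS3 p q = -(HS3 p q * x)) :
    x * (HS0 p q * wS p q) = -((HS0 p q * wS p q) * x) := by
  have hx0' : ∀ z, x * (HS0 p q * z) = -(HS0 p q * (x * z)) := fun z => by
    rw [← mul_assoc, hx0, neg_mul, mul_assoc]
  have hx1' : ∀ z, x * (HS1 p q * z) = -(HS1 p q * (x * z)) := fun z => by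
    rw [← mul_assoc, hx1, neg_mul, mul_assoc]
  have hx2' : ∀ z, x * (HS2 p q * z) = -(HS2 p q * (x * z)) := fun z => by
    rw [← mul_assoc, hx2, neg_mul, mul_assoc]
  have hx3' : ∀ z, x * (HS3 p q * z) = -(HS3 p q * (x * z)) := fun z => by
    rw [← mul_assoc, hx3, neg_mul, mul_assoc]
  simp only [wS, mul_assoc, hS0sq, hS1sq, hS2sq, hS3sq, hS0sq', hS1sq', hS2sq', hS3sq', hS10, hS20, hS21, hS30, hS31, hS32, hS10', hS20', hS21', hS30', hS31', hS32', hx0, hx1, hx2, hx3, hx0', hx1', hx2', hx3', mul_neg, neg_mul, neg_neg, mul_one, one_mul]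
lemma mixwS1 (x : CliffordAlgebra (Qpq (p+4) q)) (hx0 : x * HS0 p q = -(HS0 p q * x)) (hx1 : x * HS1 p q = -(HS1 p q * x)) (hx2 : x * HS2 p q = -(HS2 p q * x)) (hx3 : x * HS3 p q = -(HS3 p q * x)) :
    x * (HS1 p q * wS p q) = -((HS1 p q * wS p q) * x) := by
  have hx0' : ∀ z, x * (HS0 p q * z) = -(HS0 p q * (x * z)) := fun z => by
    rw [← mul_assoc, hx0, neg_mul, mul_assoc]
  have hx1' : ∀ z, x * (HS1 p q * z) = -(HS1 p q * (x * z)) := fun z => by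
    rw [← mul_assoc, hx1, neg_mul, mul_assoc]
  have hx2' : ∀ z, x * (HS2 p q * z) = -(HS2 p q * (x * z)) := fun z => by
    rw [← mul_assoc, hx2, neg_mul, mul_assoc]
  have hx3' : ∀ z, x * (HS3 p q * z) = -(HS3 p q * (x * z)) := fun z => by
    rw [← mul_assoc, hx3, neg_mul, mul_assoc]
  simp only [wS, mul_assoc, hS0sq, hS1sq, hS2sq, hS3sq, hS0sq', hS1sq', hS2sq', hS3sq', hS10, hS20, hS21, hS30, hS31, hS32, hS10', hS20', hS21', hS30', hS31', hS32', hx0, hx1, hx2, hx3, hx0', hx1', hx2', hx3', mul_neg, neg_mul, neg_neg, mul_one, one_mul]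
lemma mixwS2 (x : CliffordAlgebra (Qpq (p+4) q)) (hx0 : x * HS0 p q = -(HS0 p q * x)) (hx1 : x * HS1 p q = -(HS1 p q * x)) (hx2 : x * HS2 p q = -(HS2 p q * x)) (hx3 : x * HS3 p q = -(HS3 p q * x)) :
    x * (HS2 p q * wS p q) = -((HS2 p q * wS p q) * x) := by
  have hx0' : ∀ z, x * (HS0 p q * z) = -(HS0 p q * (x * z)) := fun z => by
    rw [← mul_assoc, hx0, neg_mul, mul_assoc]
  have hx1' : ∀ z, x * (HS1 p q * z) = -(HS1 p q * (x * z)) := fun z => by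
    rw [← mul_assoc, hx1, neg_mul, mul_assoc]
  have hx2' : ∀ z, x * (HS2 p q * z) = -(HS2 p q * (x * z)) := fun z => by
    rw [← mul_assoc, hx2, neg_mul, mul_assoc]
  have hx3' : ∀ z, x * (HS3 p q * z) = -(HS3 p q * (x * z)) := fun z => by
    rw [← mul_assoc, hx3, neg_mul, mul_assoc]
  simp only [wS, mul_assoc, hS0sq, hS1sq, hS2sq, hS3sq, hS0sq', hS1sq', hS2sq', hS3sq', hS10, hS20, hS21, hS30, hS31, hS32, hS10', hS20', hS21', hS30', hS31', hS32', hx0, hx1, hx2, hx3, hx0', hx1', hx2', hx3', mul_neg, neg_mul, neg_neg, mul_one, one_mul]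
lemma mixwS3 (x : CliffordAlgebra (Qpq (p+4) q)) (hx0 : x * HS0 p q = -(HS0 p q * x)) (hx1 : x * HS1 p q = -(HS1 p q * x)) (hx2 : x * HS2 p q = -(HS2 p q * x)) (hx3 : x * HS3 p q = -(HS3 p q * x)) :
    x * (HS3 p q * wS p q) = -((HS3 p q * wS p q) * x) := by
  have hx0' : ∀ z, x * (HS0 p q * z) = -(HS0 p q * (x * z)) := fun z => by
    rw [← mul_assoc, hx0, neg_mul, mul_assoc]
  have hx1' : ∀ z, x * (HS1 p q * z) = -(HS1 p q * (x * z)) := fun z => by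
    rw [← mul_assoc, hx1, neg_mul, mul_assoc]
  have hx2' : ∀ z, x * (HS2 p q * z) = -(HS2 p q * (x * z)) := fun z => by
    rw [← mul_assoc, hx2, neg_mul, mul_assoc]
  have hx3' : ∀ z, x * (HS3 p q * z) = -(HS3 p q * (x * z)) := fun z => by
    rw [← mul_assoc, hx3, neg_mul, mul_assoc]
  simp only [wS, mul_assoc, hS0sq, hS1sq, hS2sq, hS3sq, hS0sq', hS1sq', hS2sq', hS3sq', hS10, hS20, hS21, hS30, hS31, hS32, hS10', hS20', hS21', hS30', hS31', hS32', hx0, hx1, hx2, hx3, hx0', hx1', hx2', hx3', mul_neg, neg_mul, neg_neg, mul_one, one_mul]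
lemma fivewS0 : (HS0 p q * wS p q) * ((HS0 p q * wS p q) * ((HS1 p q * wS p q) * ((HS2 p q * wS p q) * (HS3 p q * wS p q)))) = HS0 p q := by
  simp only [wS, mul_assoc, hS0sq, hS1sq, hS2sq, hS3sq, hS0sq', hS1sq', hS2sq', hS3sq', hS10, hS20, hS21, hS30, hS31, hS32, hS10', hS20', hS21', hS30', hS31', hS32', mul_neg, neg_mul, neg_neg, mul_one, one_mul]
lemma fivewS1 : (HS1 p q * wS p q) * ((HS0 p q * wS p q) * ((HS1 p q * wS p q) * ((HS2 p q * wS p q) * (HS3 p q * wS p q)))) = HS1 p q := by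
  simp only [wS, mul_assoc, hS0sq, hS1sq, hS2sq, hS3sq, hS0sq', hS1sq', hS2sq', hS3sq', hS10, hS20, hS21, hS30, hS31, hS32, hS10', hS20', hS21', hS30', hS31', hS32', mul_neg, neg_mul, neg_neg, mul_one, one_mul]
lemma fivewS2 : (HS2 p q * wS p q) * ((HS0 p q * wS p q) * ((HS1 p q * wS p q) * ((HS2 p q * wS p q) * (HS3 p q * wS p q)))) = HS2 p q := by
  simp only [wS, mul_assoc, hS0sq, hS1sq, hS2sq, hS3sq, hS0sq', hS1sq', hS2sq', hS3sq', hS10, hS20, hS21, hS30, hS31, hS32, hS10', hS20', hS21', hS30', hS31', hS32', mul_neg, neg_mul, neg_neg, mul_one, one_mul]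
lemma fivewS3 : (HS3 p q * wS p q) * ((HS0 p q * wS p q) * ((HS1 p q * wS p q) * ((HS2 p q * wS p q) * (HS3 p q * wS p q)))) = HS3 p q := by
  simp only [wS, mul_assoc, hS0sq, hS1sq, hS2sq, hS3sq, hS0sq', hS1sq', hS2sq', hS3sq', hS10, hS20, hS21, hS30, hS31, hS32, hS10', hS20', hS21', hS30', hS31', hS32', mul_neg, neg_mul, neg_neg, mul_one, one_mul]

end Swap
section Swap2
variable (p q : ℕ)

noncomputable def aSwap (i : Fin (p+4+q)) : CliffordAlgebra (Qpq p (q+4)) :=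
  if p ≤ (i:ℕ) ∧ (i:ℕ) < p+4
  then gen p (q+4) ⟨(i:ℕ), by have := i.isLt; omega⟩ * wT p q
  else gen p (q+4) ⟨(i:ℕ), by have := i.isLt; omega⟩

noncomputable def bSwap (j : Fin (p+(q+4))) : CliffordAlgebra (Qpq (p+4) q) :=
  if p ≤ (j:ℕ) ∧ (j:ℕ) < p+4
  then gen (p+4) q ⟨(j:ℕ), by have := j.isLt; omega⟩ * wS p q
  else gen (p+4) q ⟨(j:ℕ), by have := j.isLt; omega⟩

lemma aSwap_normal (i : Fin (p+4+q)) (h : (i:ℕ) < p ∨ p+4 ≤ (i:ℕ)) :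
    aSwap p q i = gen p (q+4) ⟨(i:ℕ), by have := i.isLt; omega⟩ := if_neg (by omega)
lemma aSwap_special (i : Fin (p+4+q)) (h : p ≤ (i:ℕ) ∧ (i:ℕ) < p+4) :
    aSwap p q i = gen p (q+4) ⟨(i:ℕ), by have := i.isLt; omega⟩ * wT p q := if_pos h
lemma bSwap_normal (j : Fin (p+(q+4))) (h : (j:ℕ) < p ∨ p+4 ≤ (j:ℕ)) :
    bSwap p q j = gen (p+4) q ⟨(j:ℕ), by have := j.isLt; omega⟩ := if_neg (by omega)
lemma bSwap_special (j : Fin (p+(q+4))) (h : p ≤ (j:ℕ) ∧ (j:ℕ) < p+4) :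
    bSwap p q j = gen (p+4) q ⟨(j:ℕ), by have := j.isLt; omega⟩ * wS p q := if_pos h

lemma aSwap_at0 (h : p+0 < p+4+q) :
    aSwap p q ⟨p+0, h⟩ = HT0 p q * wT p q := by
  rw [aSwap_special p q _ (by refine ⟨?_, ?_⟩ <;> simp)]; rfl
lemma bSwap_at0 (h : p+0 < p+(q+4)) :
    bSwap p q ⟨p+0, h⟩ = HS0 p q * wS p q := by
  rw [bSwap_special p q _ (by refine ⟨?_, ?_⟩ <;> simp)]; rfl
lemma aSwap_at1 (h : p+1 < p+4+q) :
    aSwap p q ⟨p+1, h⟩ = HT1 p q * wT p q := by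
  rw [aSwap_special p q _ (by refine ⟨?_, ?_⟩ <;> simp)]; rfl
lemma bSwap_at1 (h : p+1 < p+(q+4)) :
    bSwap p q ⟨p+1, h⟩ = HS1 p q * wS p q := by
  rw [bSwap_special p q _ (by refine ⟨?_, ?_⟩ <;> simp)]; rfl
lemma aSwap_at2 (h : p+2 < p+4+q) :
    aSwap p q ⟨p+2, h⟩ = HT2 p q * wT p q := by
  rw [aSwap_special p q _ (by refine ⟨?_, ?_⟩ <;> simp)]; rfl
lemma bSwap_at2 (h : p+2 < p+(q+4)) :
    bSwap p q ⟨p+2, h⟩ = HS2 p q * wS p q := by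
  rw [bSwap_special p q _ (by refine ⟨?_, ?_⟩ <;> simp)]; rfl
lemma aSwap_at3 (h : p+3 < p+4+q) :
    aSwap p q ⟨p+3, h⟩ = HT3 p q * wT p q := by
  rw [aSwap_special p q _ (by refine ⟨?_, ?_⟩ <;> simp)]; rfl
lemma bSwap_at3 (h : p+3 < p+(q+4)) :
    bSwap p q ⟨p+3, h⟩ = HS3 p q * wS p q := by
  rw [bSwap_special p q _ (by refine ⟨?_, ?_⟩ <;> simp)]; rfl

lemma aSwap_sq (i : Fin (p+4+q)) :
    aSwap p q i * aSwap p q i = algebraMap ℝ _ (sgn (p+4) i) := by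
  have hI := i.isLt
  by_cases hsp : p ≤ (i:ℕ) ∧ (i:ℕ) < p+4
  · rw [sgn_eq_one (by omega), _root_.map_one]
    have : (i:ℕ) = p+0 ∨ (i:ℕ) = p+1 ∨ (i:ℕ) = p+2 ∨ (i:ℕ) = p+3 := by omega
    rcases this with h|h|h|h <;>
      · rw [show i = (⟨_, by omega⟩ : Fin _) from Fin.ext h]
        first
        | rw [aSwap_at0 p q (by omega)] | rw [aSwap_at1 p q (by omega)]
        | rw [aSwap_at2 p q (by omega)] | rw [aSwap_at3 p q (by omega)]
        first
        | exact sqwT0 p q | exact sqwT1 p q | exact sqwT2 p q | exact sqwT3 p q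
  · rw [aSwap_normal p q i (by omega), gen_sq]
    exact congrArg _ ((by unfold sgn; split_ifs <;> first | rfl | omega :
      sgn p (i:ℕ) = sgn (p+4) (i:ℕ)))

lemma bSwap_sq (j : Fin (p+(q+4))) :
    bSwap p q j * bSwap p q j = algebraMap ℝ _ (sgn p j) := by
  have hI := j.isLt
  by_cases hsp : p ≤ (j:ℕ) ∧ (j:ℕ) < p+4
  · rw [sgn_eq_neg_one (by omega), _root_.map_neg, _root_.map_one]
    have : (j:ℕ) = p+0 ∨ (j:ℕ) = p+1 ∨ (j:ℕ) = p+2 ∨ (j:ℕ) = p+3 := by omega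
    rcases this with h|h|h|h <;>
      · rw [show j = (⟨_, by omega⟩ : Fin _) from Fin.ext h]
        first
        | rw [bSwap_at0 p q (by omega)] | rw [bSwap_at1 p q (by omega)]
        | rw [bSwap_at2 p q (by omega)] | rw [bSwap_at3 p q (by omega)]
        first
        | exact sqwS0 p q | exact sqwS1 p q | exact sqwS2 p q | exact sqwS3 p q
  · rw [bSwap_normal p q j (by omega), gen_sq]
    exact congrArg _ ((by unfold sgn; split_ifs <;> first | rfl | omega :
      sgn (p+4) (j:ℕ) = sgn p (j:ℕ)))

lemma aSwap_anti (i j : Fin (p+4+q)) (hij : i ≠ j) :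
    aSwap p q i * aSwap p q j = -(aSwap p q j * aSwap p q i) := by
  have hvi := i.isLt; have hvj := j.isLt
  have hne : (i:ℕ) ≠ (j:ℕ) := fun h => hij (Fin.ext h)
  by_cases hi : p ≤ (i:ℕ) ∧ (i:ℕ) < p+4 <;> by_cases hj : p ≤ (j:ℕ) ∧ (j:ℕ) < p+4
  · have hci : (i:ℕ) = p+0 ∨ (i:ℕ) = p+1 ∨ (i:ℕ) = p+2 ∨ (i:ℕ) = p+3 := by omega
    have hcj : (j:ℕ) = p+0 ∨ (j:ℕ) = p+1 ∨ (j:ℕ) = p+2 ∨ (j:ℕ) = p+3 := by omega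
    rcases hci with h1|h1|h1|h1 <;> rcases hcj with h2|h2|h2|h2 <;>
      first
      | exact absurd (h1.trans h2.symm) hne
      | · rw [show i = (⟨_, by omega⟩ : Fin _) from Fin.ext h1]
          rw [show j = (⟨_, by omega⟩ : Fin _) from Fin.ext h2]
          first
          | rw [aSwap_at0 p q (by omega)] | rw [aSwap_at1 p q (by omega)]
          | rw [aSwap_at2 p q (by omega)] | rw [aSwap_at3 p q (by omega)]
          first
          | rw [aSwap_at0 p q (by omega)] | rw [aSwap_at1 p q (by omega)]
          | rw [aSwap_at2 p q (by omega)] | rw [aSwap_at3 p q (by omega)]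
          first
          | exact antiwT01 p q | exact antiwT02 p q | exact antiwT03 p q | exact antiwT10 p q | exact antiwT12 p q | exact antiwT13 p q | exact antiwT20 p q | exact antiwT21 p q | exact antiwT23 p q | exact antiwT30 p q | exact antiwT31 p q | exact antiwT32 p q
  · rw [aSwap_normal p q j (by omega)]
    have hci : (i:ℕ) = p+0 ∨ (i:ℕ) = p+1 ∨ (i:ℕ) = p+2 ∨ (i:ℕ) = p+3 := by omega
    rcases hci with h1|h1|h1|h1 <;>
      · rw [show i = (⟨_, by omega⟩ : Fin _) from Fin.ext h1]
        first
        | rw [aSwap_at0 p q (by omega)] | rw [aSwap_at1 p q (by omega)]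
        | rw [aSwap_at2 p q (by omega)] | rw [aSwap_at3 p q (by omega)]
        first
        | (rw [mixwT0 p q _ (gen_anticomm (by intro hc; have := congrArg Fin.val hc; simp at hc ⊢; omega)) (gen_anticomm (by intro hc; have := congrArg Fin.val hc; simp at hc ⊢; omega)) (gen_anticomm (by intro hc; have := congrArg Fin.val hc; simp at hc ⊢; omega)) (gen_anticomm (by intro hc; have := congrArg Fin.val hc; simp at hc ⊢; omega)), neg_neg])
        | (rw [mixwT1 p q _ (gen_anticomm (by intro hc; have := congrArg Fin.val hc; simp at hc ⊢; omega)) (gen_anticomm (by intro hc; have := congrArg Fin.val hc; simp at hc ⊢; omega)) (gen_anticomm (by intro hc; have := congrArg Fin.val hc; simp at hc ⊢; omega)) (gen_anticomm (by intro hc; have := congrArg Fin.val hc; simp at hc ⊢; omega)), neg_neg])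
        | (rw [mixwT2 p q _ (gen_anticomm (by intro hc; have := congrArg Fin.val hc; simp at hc ⊢; omega)) (gen_anticomm (by intro hc; have := congrArg Fin.val hc; simp at hc ⊢; omega)) (gen_anticomm (by intro hc; have := congrArg Fin.val hc; simp at hc ⊢; omega)) (gen_anticomm (by intro hc; have := congrArg Fin.val hc; simp at hc ⊢; omega)), neg_neg])
        | (rw [mixwT3 p q _ (gen_anticomm (by intro hc; have := congrArg Fin.val hc; simp at hc ⊢; omega)) (gen_anticomm (by intro hc; have := congrArg Fin.val hc; simp at hc ⊢; omega)) (gen_anticomm (by intro hc; have := congrArg Fin.val hc; simp at hc ⊢; omega)) (gen_anticomm (by intro hc; have := congrArg Fin.val hc; simp at hc ⊢; omega)), neg_neg])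
  · rw [aSwap_normal p q i (by omega)]
    have hcj : (j:ℕ) = p+0 ∨ (j:ℕ) = p+1 ∨ (j:ℕ) = p+2 ∨ (j:ℕ) = p+3 := by omega
    rcases hcj with h2|h2|h2|h2 <;>
      · rw [show j = (⟨_, by omega⟩ : Fin _) from Fin.ext h2]
        first
        | rw [aSwap_at0 p q (by omega)] | rw [aSwap_at1 p q (by omega)]
        | rw [aSwap_at2 p q (by omega)] | rw [aSwap_at3 p q (by omega)]
        first
        | exact mixwT0 p q _ (gen_anticomm (by intro hc; have := congrArg Fin.val hc; simp at hc ⊢; omega)) (gen_anticomm (by intro hc; have := congrArg Fin.val hc; simp at hc ⊢; omega)) (gen_anticomm (by intro hc; have := congrArg Fin.val hc; simp at hc ⊢; omega)) (gen_anticomm (by intro hc; have := congrArg Fin.val hc; simp at hc ⊢; omega))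
        | exact mixwT1 p q _ (gen_anticomm (by intro hc; have := congrArg Fin.val hc; simp at hc ⊢; omega)) (gen_anticomm (by intro hc; have := congrArg Fin.val hc; simp at hc ⊢; omega)) (gen_anticomm (by intro hc; have := congrArg Fin.val hc; simp at hc ⊢; omega)) (gen_anticomm (by intro hc; have := congrArg Fin.val hc; simp at hc ⊢; omega))
        | exact mixwT2 p q _ (gen_anticomm (by intro hc; have := congrArg Fin.val hc; simp at hc ⊢; omega)) (gen_anticomm (by intro hc; have := congrArg Fin.val hc; simp at hc ⊢; omega)) (gen_anticomm (by intro hc; have := congrArg Fin.val hc; simp at hc ⊢; omega)) (gen_anticomm (by intro hc; have := congrArg Fin.val hc; simp at hc ⊢; omega))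
        | exact mixwT3 p q _ (gen_anticomm (by intro hc; have := congrArg Fin.val hc; simp at hc ⊢; omega)) (gen_anticomm (by intro hc; have := congrArg Fin.val hc; simp at hc ⊢; omega)) (gen_anticomm (by intro hc; have := congrArg Fin.val hc; simp at hc ⊢; omega)) (gen_anticomm (by intro hc; have := congrArg Fin.val hc; simp at hc ⊢; omega))
  · rw [aSwap_normal p q i (by omega), aSwap_normal p q j (by omega)]
    exact gen_anticomm (by intro hc; have := congrArg Fin.val hc; simp at this; exact hne this)

lemma bSwap_anti (i j : Fin (p+(q+4))) (hij : i ≠ j) :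
    bSwap p q i * bSwap p q j = -(bSwap p q j * bSwap p q i) := by
  have hvi := i.isLt; have hvj := j.isLt
  have hne : (i:ℕ) ≠ (j:ℕ) := fun h => hij (Fin.ext h)
  by_cases hi : p ≤ (i:ℕ) ∧ (i:ℕ) < p+4 <;> by_cases hj : p ≤ (j:ℕ) ∧ (j:ℕ) < p+4
  · have hci : (i:ℕ) = p+0 ∨ (i:ℕ) = p+1 ∨ (i:ℕ) = p+2 ∨ (i:ℕ) = p+3 := by omega
    have hcj : (j:ℕ) = p+0 ∨ (j:ℕ) = p+1 ∨ (j:ℕ) = p+2 ∨ (j:ℕ) = p+3 := by omega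
    rcases hci with h1|h1|h1|h1 <;> rcases hcj with h2|h2|h2|h2 <;>
      first
      | exact absurd (h1.trans h2.symm) hne
      | · rw [show i = (⟨_, by omega⟩ : Fin _) from Fin.ext h1]
          rw [show j = (⟨_, by omega⟩ : Fin _) from Fin.ext h2]
          first
          | rw [bSwap_at0 p q (by omega)] | rw [bSwap_at1 p q (by omega)]
          | rw [bSwap_at2 p q (by omega)] | rw [bSwap_at3 p q (by omega)]
          first
          | rw [bSwap_at0 p q (by omega)] | rw [bSwap_at1 p q (by omega)]
          | rw [bSwap_at2 p q (by omega)] | rw [bSwap_at3 p q (by omega)]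
          first
          | exact antiwS01 p q | exact antiwS02 p q | exact antiwS03 p q | exact antiwS10 p q | exact antiwS12 p q | exact antiwS13 p q | exact antiwS20 p q | exact antiwS21 p q | exact antiwS23 p q | exact antiwS30 p q | exact antiwS31 p q | exact antiwS32 p q
  · rw [bSwap_normal p q j (by omega)]
    have hci : (i:ℕ) = p+0 ∨ (i:ℕ) = p+1 ∨ (i:ℕ) = p+2 ∨ (i:ℕ) = p+3 := by omega
    rcases hci with h1|h1|h1|h1 <;>
      · rw [show i = (⟨_, by omega⟩ : Fin _) from Fin.ext h1]
        first
        | rw [bSwap_at0 p q (by omega)] | rw [bSwap_at1 p q (by omega)]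
        | rw [bSwap_at2 p q (by omega)] | rw [bSwap_at3 p q (by omega)]
        first
        | (rw [mixwS0 p q _ (gen_anticomm (by intro hc; have := congrArg Fin.val hc; simp at hc ⊢; omega)) (gen_anticomm (by intro hc; have := congrArg Fin.val hc; simp at hc ⊢; omega)) (gen_anticomm (by intro hc; have := congrArg Fin.val hc; simp at hc ⊢; omega)) (gen_anticomm (by intro hc; have := congrArg Fin.val hc; simp at hc ⊢; omega)), neg_neg])
        | (rw [mixwS1 p q _ (gen_anticomm (by intro hc; have := congrArg Fin.val hc; simp at hc ⊢; omega)) (gen_anticomm (by intro hc; have := congrArg Fin.val hc; simp at hc ⊢; omega)) (gen_anticomm (by intro hc; have := congrArg Fin.val hc; simp at hc ⊢; omega)) (gen_anticomm (by intro hc; have := congrArg Fin.val hc; simp at hc ⊢; omega)), neg_neg])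
        | (rw [mixwS2 p q _ (gen_anticomm (by intro hc; have := congrArg Fin.val hc; simp at hc ⊢; omega)) (gen_anticomm (by intro hc; have := congrArg Fin.val hc; simp at hc ⊢; omega)) (gen_anticomm (by intro hc; have := congrArg Fin.val hc; simp at hc ⊢; omega)) (gen_anticomm (by intro hc; have := congrArg Fin.val hc; simp at hc ⊢; omega)), neg_neg])
        | (rw [mixwS3 p q _ (gen_anticomm (by intro hc; have := congrArg Fin.val hc; simp at hc ⊢; omega)) (gen_anticomm (by intro hc; have := congrArg Fin.val hc; simp at hc ⊢; omega)) (gen_anticomm (by intro hc; have := congrArg Fin.val hc; simp at hc ⊢; omega)) (gen_anticomm (by intro hc; have := congrArg Fin.val hc; simp at hc ⊢; omega)), neg_neg])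
  · rw [bSwap_normal p q i (by omega)]
    have hcj : (j:ℕ) = p+0 ∨ (j:ℕ) = p+1 ∨ (j:ℕ) = p+2 ∨ (j:ℕ) = p+3 := by omega
    rcases hcj with h2|h2|h2|h2 <;>
      · rw [show j = (⟨_, by omega⟩ : Fin _) from Fin.ext h2]
        first
        | rw [bSwap_at0 p q (by omega)] | rw [bSwap_at1 p q (by omega)]
        | rw [bSwap_at2 p q (by omega)] | rw [bSwap_at3 p q (by omega)]
        first
        | exact mixwS0 p q _ (gen_anticomm (by intro hc; have := congrArg Fin.val hc; simp at hc ⊢; omega)) (gen_anticomm (by intro hc; have := congrArg Fin.val hc; simp at hc ⊢; omega)) (gen_anticomm (by intro hc; have := congrArg Fin.val hc; simp at hc ⊢; omega)) (gen_anticomm (by intro hc; have := congrArg Fin.val hc; simp at hc ⊢; omega))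
        | exact mixwS1 p q _ (gen_anticomm (by intro hc; have := congrArg Fin.val hc; simp at hc ⊢; omega)) (gen_anticomm (by intro hc; have := congrArg Fin.val hc; simp at hc ⊢; omega)) (gen_anticomm (by intro hc; have := congrArg Fin.val hc; simp at hc ⊢; omega)) (gen_anticomm (by intro hc; have := congrArg Fin.val hc; simp at hc ⊢; omega))
        | exact mixwS2 p q _ (gen_anticomm (by intro hc; have := congrArg Fin.val hc; simp at hc ⊢; omega)) (gen_anticomm (by intro hc; have := congrArg Fin.val hc; simp at hc ⊢; omega)) (gen_anticomm (by intro hc; have := congrArg Fin.val hc; simp at hc ⊢; omega)) (gen_anticomm (by intro hc; have := congrArg Fin.val hc; simp at hc ⊢; omega))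
        | exact mixwS3 p q _ (gen_anticomm (by intro hc; have := congrArg Fin.val hc; simp at hc ⊢; omega)) (gen_anticomm (by intro hc; have := congrArg Fin.val hc; simp at hc ⊢; omega)) (gen_anticomm (by intro hc; have := congrArg Fin.val hc; simp at hc ⊢; omega)) (gen_anticomm (by intro hc; have := congrArg Fin.val hc; simp at hc ⊢; omega))
  · rw [bSwap_normal p q i (by omega), bSwap_normal p q j (by omega)]
    exact gen_anticomm (by intro hc; have := congrArg Fin.val hc; simp at this; exact hne this)

noncomputable def αSw : CliffordAlgebra (Qpq (p+4) q) →ₐ[ℝ] CliffordAlgebra (Qpq p (q+4)) :=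
  liftGen (aSwap p q) (aSwap_sq p q) (aSwap_anti p q)
noncomputable def βSw : CliffordAlgebra (Qpq p (q+4)) →ₐ[ℝ] CliffordAlgebra (Qpq (p+4) q) :=
  liftGen (bSwap p q) (bSwap_sq p q) (bSwap_anti p q)

lemma αSw_gen (i) : αSw p q (gen (p+4) q i) = aSwap p q i := liftGen_gen _ _ _ i
lemma βSw_gen (j) : βSw p q (gen p (q+4) j) = bSwap p q j := liftGen_gen _ _ _ j

lemma compSw1 : (βSw p q).comp (αSw p q) = AlgHom.id ℝ _ := by
  apply algHom_ext
  intro i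
  rw [AlgHom.comp_apply, AlgHom.id_apply, αSw_gen]
  have hvi := i.isLt
  by_cases hi : p ≤ (i:ℕ) ∧ (i:ℕ) < p+4
  · have hci : (i:ℕ) = p+0 ∨ (i:ℕ) = p+1 ∨ (i:ℕ) = p+2 ∨ (i:ℕ) = p+3 := by omega
    rcases hci with h1|h1|h1|h1 <;>
      · rw [show i = (⟨_, by omega⟩ : Fin _) from Fin.ext h1]
        first
        | rw [aSwap_at0 p q (by omega)] | rw [aSwap_at1 p q (by omega)]
        | rw [aSwap_at2 p q (by omega)] | rw [aSwap_at3 p q (by omega)]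
        simp only [wT, HT0, HT1, HT2, HT3, _root_.map_mul, βSw_gen,
          bSwap_at0, bSwap_at1, bSwap_at2, bSwap_at3]
        first
        | exact fivewS0 p q | exact fivewS1 p q | exact fivewS2 p q | exact fivewS3 p q
  · rw [aSwap_normal p q i (by omega), βSw_gen, bSwap_normal p q _ (by simpa using (by omega : (i:ℕ) < p ∨ p+4 ≤ (i:ℕ)))]

lemma compSw2 : (αSw p q).comp (βSw p q) = AlgHom.id ℝ _ := by
  apply algHom_ext
  intro j
  rw [AlgHom.comp_apply, AlgHom.id_apply, βSw_gen]
  have hvj := j.isLt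
  by_cases hj : p ≤ (j:ℕ) ∧ (j:ℕ) < p+4
  · have hcj : (j:ℕ) = p+0 ∨ (j:ℕ) = p+1 ∨ (j:ℕ) = p+2 ∨ (j:ℕ) = p+3 := by omega
    rcases hcj with h1|h1|h1|h1 <;>
      · rw [show j = (⟨_, by omega⟩ : Fin _) from Fin.ext h1]
        first
        | rw [bSwap_at0 p q (by omega)] | rw [bSwap_at1 p q (by omega)]
        | rw [bSwap_at2 p q (by omega)] | rw [bSwap_at3 p q (by omega)]
        simp only [wS, HS0, HS1, HS2, HS3, _root_.map_mul, αSw_gen,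
          aSwap_at0, aSwap_at1, aSwap_at2, aSwap_at3]
        first
        | exact fivewT0 p q | exact fivewT1 p q | exact fivewT2 p q | exact fivewT3 p q
  · rw [bSwap_normal p q j (by omega), αSw_gen, aSwap_normal p q _ (by simpa using (by omega : (j:ℕ) < p ∨ p+4 ≤ (j:ℕ)))]

/-- `Cl(p+4,q) ≅ Cl(p,q+4)`. -/
noncomputable def swapEquiv : CliffordAlgebra (Qpq (p+4) q) ≃ₐ[ℝ] CliffordAlgebra (Qpq p (q+4)) :=
  AlgEquiv.ofAlgHom (αSw p q) (βSw p q) (compSw2 p q) (compSw1 p q)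

end Swap2
section Bases

/-- `ℝ ≅ M₁(ℝ)`. -/
noncomputable def entry11 : Matrix (Fin 1) (Fin 1) ℝ →ₐ[ℝ] ℝ where
  toFun M := M 0 0
  map_one' := by simp [Matrix.one_apply]
  map_mul' M N := by simp [Matrix.mul_apply]
  map_zero' := rfl
  map_add' M N := rfl
  commutes' r := by simp [Matrix.algebraMap_eq_diagonal]

noncomputable def matOne : ℝ ≃ₐ[ℝ] Matrix (Fin 1) (Fin 1) ℝ :=
  AlgEquiv.ofAlgHom (Algebra.ofId ℝ _) entry11
    (by
      apply AlgHom.ext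
      intro M
      ext i j
      fin_cases i; fin_cases j
      simp [Algebra.ofId_apply, Matrix.algebraMap_eq_diagonal, entry11]; rfl)
    (Subsingleton.elim _ _)

/-- `Cl(0,0) ≅ ℝ`. -/
noncomputable def clZero : CliffordAlgebra (Qpq 0 0) ≃ₐ[ℝ] ℝ :=
  AlgEquiv.ofAlgHom
    (liftGen (fun i => (0:ℝ)) (fun i => i.elim0) (fun i j _ => i.elim0))
    (Algebra.ofId ℝ _)
    (Subsingleton.elim _ _)
    (algHom_ext (fun i => i.elim0))

/-- generators for `Cl(2,0) → M₂(ℝ)`. -/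
noncomputable def aB : Fin (2+0) → Matrix (Fin 2) (Fin 2) ℝ := fun i =>
  if (i:ℕ) = 0 then !![1,0;0,-1] else !![0,1;1,0]

lemma aB_sq (i : Fin (2+0)) : aB i * aB i = algebraMap ℝ _ (sgn 2 i) := by
  have := i.isLt
  rw [sgn_eq_one (by omega), _root_.map_one, aB]
  split_ifs <;> · rw [Matrix.mul_fin_two, Matrix.one_fin_two]; norm_num

lemma aB_anti (i j : Fin (2+0)) (hij : i ≠ j) : aB i * aB j = -(aB j * aB i) := by
  have hi := i.isLt; have hj := j.isLt
  have hne : (i:ℕ) ≠ (j:ℕ) := fun h => hij (Fin.ext h)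
  rw [aB, aB]
  rcases (by omega : (i:ℕ) = 0 ∧ (j:ℕ) = 1 ∨ (i:ℕ) = 1 ∧ (j:ℕ) = 0) with ⟨h1,h2⟩|⟨h1,h2⟩ <;>
    rw [h1, h2] <;> norm_num <;>
    · rw [Matrix.mul_fin_two, Matrix.mul_fin_two]; norm_num

noncomputable def θB : CliffordAlgebra (Qpq 2 0) →ₐ[ℝ] Matrix (Fin 2) (Fin 2) ℝ :=
  liftGen aB aB_sq aB_anti

noncomputable def uB : CliffordAlgebra (Qpq 2 0) := gen 2 0 ⟨0, by omega⟩
noncomputable def cB : CliffordAlgebra (Qpq 2 0) := gen 2 0 ⟨1, by omega⟩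

lemma uB_sq : uB * uB = 1 := by rw [uB, gen_sq, sgn_eq_one (by simp), _root_.map_one]
lemma cB_sq : cB * cB = 1 := by rw [cB, gen_sq, sgn_eq_one (by simp), _root_.map_one]
lemma cB_uB : cB * uB = -(uB * cB) := by
  rw [cB, uB]
  exact gen_anticomm (by intro hc; have := congrArg Fin.val hc; simp at this)

noncomputable def ψB : Matrix (Fin 2) (Fin 2) ℝ →ₐ[ℝ] CliffordAlgebra (Qpq 2 0) :=
  matrixUnitsHom (Algebra.ofId ℝ _) (mu2 uB cB)
    (mu2_rel _ _ uB_sq cB_sq cB_uB)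
    (by rw [Fin.sum_univ_two]; exact mu2_sum _ _ uB_sq cB_sq cB_uB)
    (fun b i j => by rw [Algebra.ofId_apply]; exact Algebra.commutes b _)

lemma θB_u : θB uB = !![1,0;0,-1] := by
  rw [uB, θB, liftGen_gen, aB]; norm_num
lemma θB_c : θB cB = !![0,1;1,0] := by
  rw [cB, θB, liftGen_gen, aB]; norm_num

lemma compB1 : ψB.comp θB = AlgHom.id ℝ _ := by
  apply algHom_ext
  intro i
  have := i.isLt
  rw [AlgHom.comp_apply, AlgHom.id_apply, θB, liftGen_gen, aB]
  rcases (by omega : (i:ℕ) = 0 ∨ (i:ℕ) = 1) with h|h <;> rw [h] <;> norm_num <;>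
    rw [ψB, matrixUnitsHom_apply]
  · simp only [Fin.sum_univ_two]
    simp
    rw [← sub_eq_add_neg, mu2_diff _ _ uB_sq cB_sq cB_uB]
    rw [show i = ⟨0, by omega⟩ from Fin.ext h]
    rfl
  · simp only [Fin.sum_univ_two]
    simp
    rw [mu2_off_sum _ _ uB_sq cB_sq cB_uB]
    rw [show i = ⟨1, by omega⟩ from Fin.ext h]
    rfl

lemma θB_E (i j : Fin 2) : θB (mu2 uB cB i j) = Matrix.single i j (1:ℝ) := by
  fin_cases i <;> fin_cases j <;>
    simp only [mu2, Fin.zero_eta, Fin.mk_one, if_true, if_false, one_ne_zero, zero_ne_one,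
      reduceIte, _root_.map_smul, _root_.map_add, _root_.map_sub, _root_.map_one,
      _root_.map_mul, θB_u, θB_c] <;>
    · ext k l
      fin_cases k <;> fin_cases l <;>
        simp [Matrix.single, Matrix.mul_fin_two, Matrix.one_fin_two] <;> norm_num

lemma alg_mul_sbm (r : ℝ) (i j : Fin 2) :
    algebraMap ℝ (Matrix (Fin 2) (Fin 2) ℝ) r * Matrix.single i j (1:ℝ)
      = Matrix.single i j r := by
  ext k l
  rw [Matrix.algebraMap_eq_diagonal, Matrix.diagonal_mul]
  simp [Matrix.single]

lemma compB2 : θB.comp ψB = AlgHom.id ℝ _ := by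
  apply AlgHom.ext
  intro M
  rw [AlgHom.comp_apply, AlgHom.id_apply, ψB, matrixUnitsHom_apply, map_sum]
  simp only [map_sum, _root_.map_mul, θB_E]
  have : ∀ r : ℝ, θB ((Algebra.ofId ℝ _) r) = algebraMap ℝ _ r := fun r => θB.commutes r
  simp only [this, alg_mul_sbm]
  exact (Matrix.matrix_eq_sum_single M).symm

/-- `Cl(2,0) ≅ M₂(ℝ)`. -/
noncomputable def clTwo : CliffordAlgebra (Qpq 2 0) ≃ₐ[ℝ] Matrix (Fin 2) (Fin 2) ℝ :=
  AlgEquiv.ofAlgHom θB ψB compB2 compB1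

/-- collapse nested matrices. -/
noncomputable def matNest (a b : ℕ) :
    Matrix (Fin a) (Fin a) (Matrix (Fin b) (Fin b) ℝ) ≃ₐ[ℝ] Matrix (Fin (a*b)) (Fin (a*b)) ℝ :=
  (Matrix.compAlgEquiv (Fin a) (Fin b) ℝ ℝ).trans (Matrix.reindexAlgEquiv ℝ ℝ finProdFinEquiv)

noncomputable def matCast {a b : ℕ} (h : a = b) :
    Matrix (Fin a) (Fin a) ℝ ≃ₐ[ℝ] Matrix (Fin b) (Fin b) ℝ :=
  Matrix.reindexAlgEquiv ℝ ℝ (finCongr h)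

end Bases
theorem main : ∀ (n p q : ℕ), p + q = n → Even n →
    (((p:ℤ) - q ≡ 0 [ZMOD 8]) ∨ ((p:ℤ) - q ≡ 2 [ZMOD 8])) →
    Nonempty (CliffordAlgebra (Qpq p q) ≃ₐ[ℝ]
      Matrix (Fin (2 ^ ((p+q)/2))) (Fin (2 ^ ((p+q)/2))) ℝ) := by
  intro n
  induction n using Nat.strong_induction_on with
  | _ n IH =>
    intro p q hpq heven hmod
    by_cases hA : 1 ≤ p ∧ 1 ≤ q
    · obtain ⟨p', rfl⟩ : ∃ p', p = p'+1 := ⟨p-1, by omega⟩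
      obtain ⟨q', rfl⟩ : ∃ q', q = q'+1 := ⟨q-1, by omega⟩
      have hmod' : (((p':ℤ) - q' ≡ 0 [ZMOD 8]) ∨ ((p':ℤ) - q' ≡ 2 [ZMOD 8])) := by
        have he : ((p':ℤ) - q') = (((p'+1:ℕ):ℤ) - ((q'+1:ℕ):ℤ)) := by push_cast; ring
        rw [he]; exact hmod
      have heven' : Even (p' + q') := by
        rcases heven with ⟨k, hk⟩; exact ⟨k-1, by omega⟩
      obtain ⟨iso⟩ := IH (p'+q') (by omega) p' q' rfl heven' hmod'
      refine ⟨(stripEquiv p' q').trans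
        ((iso.mapMatrix).trans ((matNest 2 _).trans (matCast ?_)))⟩
      have h2 : (p'+1+(q'+1))/2 = (p'+q')/2 + 1 := by omega
      rw [h2, pow_succ]; ring
    · by_cases hq0 : q = 0
      · subst hq0
        have hp8 : p = 0 ∨ p = 2 ∨ 8 ≤ p := by
          rcases hmod with h|h <;> · unfold Int.ModEq at h; omega
        rcases hp8 with rfl | rfl | hp8
        · exact ⟨clZero.trans (matOne.trans (matCast (by norm_num)))⟩
        · exact ⟨clTwo.trans (matCast (by norm_num))⟩
        · obtain ⟨p', rfl⟩ : ∃ p', p = p'+1+4 := ⟨p-5, by omega⟩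
          have hmod' : (((p':ℤ) - 3 ≡ 0 [ZMOD 8]) ∨ ((p':ℤ) - 3 ≡ 2 [ZMOD 8])) := by
            rcases hmod with h|h <;> [left; right] <;>
              · unfold Int.ModEq at h ⊢; push_cast at h ⊢; omega
          have heven' : Even (p' + 3) := by
            rcases heven with ⟨k, hk⟩; exact ⟨k-1, by omega⟩
          obtain ⟨iso⟩ := IH (p'+3) (by omega) p' 3 rfl heven' hmod'
          refine ⟨(swapEquiv (p'+1) 0).trans ((stripEquiv p' 3).trans
            ((iso.mapMatrix).trans ((matNest 2 _).trans (matCast ?_))))⟩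
          have h2 : (p'+1+4+0)/2 = (p'+3)/2 + 1 := by omega
          rw [h2, pow_succ]; ring
      · have hp0 : p = 0 := by omega
        subst hp0
        have hq8 : 6 ≤ q := by
          rcases hmod with h|h <;> · unfold Int.ModEq at h; omega
        obtain ⟨q', rfl⟩ : ∃ q', q = q'+1+4 := ⟨q-5, by omega⟩
        have hmod' : (((3:ℤ) - q' ≡ 0 [ZMOD 8]) ∨ ((3:ℤ) - q' ≡ 2 [ZMOD 8])) := by
          rcases hmod with h|h <;> [left; right] <;>
            · unfold Int.ModEq at h ⊢; push_cast at h ⊢; omega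
        have heven' : Even (3 + q') := by
          rcases heven with ⟨k, hk⟩; exact ⟨k-1, by omega⟩
        obtain ⟨iso⟩ := IH (3+q') (by omega) 3 q' rfl heven' hmod'
        refine ⟨((swapEquiv 0 (q'+1)).symm).trans ((stripEquiv 3 q').trans
          ((iso.mapMatrix).trans ((matNest 2 _).trans (matCast ?_))))⟩
        have h2 : (0+(q'+1+4))/2 = (3+q')/2 + 1 := by omega
        rw [h2, pow_succ]; ring

end ClAux

/-- For `n = p + q` even with `p − q ≡ 0, 2 (mod 8)`, `Cl(p,q) ≅ M_{2^{n/2}}(ℝ)`. -/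
theorem clpq_even_02_iso_matrix_real (p q : ℕ) (hn : Even (p + q))
    (h : (p : ℤ) - q ≡ 0 [ZMOD 8] ∨ (p : ℤ) - q ≡ 2 [ZMOD 8]) :
    Nonempty (CliffordAlgebra (Qpq p q) ≃ₐ[ℝ]
      (Matrix (Fin (2 ^ ((p + q) / 2))) (Fin (2 ^ ((p + q) / 2))) ℝ)) :=
  ClAux.main (p + q) p q rfl hn h
end
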